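/- arXiv:math/0603650 — 10 statements merged into one kernel-verified Lean document; each statement's English description precedes it below -/
import Mathlib

section
/- Let β be a Pisot number with finite Rényi expansion d_β(1) = t₁⋯t_ℓ, and let α be an algebraic conjugate of β. Then -1 = Σ_{i≥0} z_i α^i, where (z_i)_{i≥0} is the left-infinite purely periodic sequence reading ^ω(t₁⋯t_{ℓ-1}(t_ℓ - 1)); i.e., the α-value of the purely periodic left-infinite word with period t₁⋯t_{ℓ-1}(t_ℓ-1) equals -1. -/
/-- The β-transformation T_β(x) = {βx}. -/
noncomputable def betaMap (β : ℝ) : ℝ → ℝ := fun x => Int.fract (β * x)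

/-- The Rényi expansion of 1: renyi β n = t_{n+1} = ⌊β·T_β^n(1)⌋. -/
noncomputable def renyi (β : ℝ) (n : ℕ) : ℤ := ⌊β * (betaMap β)^[n] 1⌋

/-- β is a Pisot number. -/
def IsPisot (β : ℝ) : Prop :=
  1 < β ∧ IsIntegral ℤ β ∧
    ∀ z : ℂ, Polynomial.aeval z (minpoly ℤ β) = 0 → z ≠ (β : ℂ) → ‖z‖ < 1

/-!
The finite expansion `d_β(1) = t₁⋯t_ℓ` says that `T_β^ℓ(1) = 0`, i.e. that `β` is a root of
`X^ℓ - t₁X^{ℓ-1} - ⋯ - t_ℓ`. This integer polynomial is a multiple of the minimal polynomial of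
`β`, so its conjugate `α` is a root too: `α^ℓ = Σ_{j<ℓ} t_{ℓ-j} α^j`. The periodic word `w` with
period `t₁⋯t_{ℓ-1}(t_ℓ - 1)` satisfies `w(α) = α^ℓ w(α) + Σ_{j<ℓ} w_j α^j`, where the finite sum
is `α^ℓ - 1`; since `|α| < 1`, this forces `w(α) = -1`.
-/

open Polynomial Finset

section PeriodicSeries

variable {K : Type*}

theorem eq_div_one_sub_of_hasSum_of_add_eq_mul [Field K] [TopologicalSpace K]
    [IsTopologicalRing K] [T2Space K] {f : ℕ → K} {S c : K} {ℓ : ℕ} (hf : HasSum f S)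
    (hc : c ≠ 1) (hshift : ∀ i, f (i + ℓ) = c * f i) :
    S = (∑ i ∈ range ℓ, f i) / (1 - c) := by
  have hshifted : HasSum (fun i => f (i + ℓ)) (S - ∑ i ∈ range ℓ, f i) :=
    (hasSum_nat_add_iff' ℓ).mpr hf
  simp only [hshift] at hshifted
  have hself : c * S = S - ∑ i ∈ range ℓ, f i := (hf.mul_left c).unique hshifted
  rw [eq_div_iff (sub_ne_zero.mpr hc.symm)]
  linear_combination -hself

theorem pow_ne_one_of_norm_lt_one [NormedDivisionRing K] {α : K} (hα : ‖α‖ < 1) {n : ℕ}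
    (hn : n ≠ 0) : α ^ n ≠ 1 := fun h => by
  have hlt := pow_lt_one₀ (norm_nonneg α) hα hn
  rw [← norm_pow, h, norm_one] at hlt
  exact hlt.false

theorem hasSum_mod_mul_geometric [NormedField K] [CompleteSpace K] (g : ℕ → K) {ℓ : ℕ}
    (hℓ : 0 < ℓ) {α : K} (hα : ‖α‖ < 1) :
    HasSum (fun i => g (i % ℓ) * α ^ i) ((∑ j ∈ range ℓ, g j * α ^ j) / (1 - α ^ ℓ)) := by
  have hbound : ∀ i, ‖g (i % ℓ) * α ^ i‖ ≤ (∑ j ∈ range ℓ, ‖g j‖) * ‖α‖ ^ i := fun i => by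
    rw [norm_mul, norm_pow]
    gcongr
    exact single_le_sum (fun j _ => norm_nonneg (g j)) (mem_range.mpr (Nat.mod_lt i hℓ))
  have hsum := ((summable_geometric_of_lt_one (norm_nonneg α) hα).mul_left _).of_norm_bounded
    hbound
  have hαℓ := pow_ne_one_of_norm_lt_one hα hℓ.ne'
  have hshift : ∀ i, g ((i + ℓ) % ℓ) * α ^ (i + ℓ) = α ^ ℓ * (g (i % ℓ) * α ^ i) := fun i => by
    rw [Nat.add_mod_right, pow_add]
    ring
  have hinit : ∑ i ∈ range ℓ, g (i % ℓ) * α ^ i = ∑ j ∈ range ℓ, g j * α ^ j :=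
    sum_congr rfl fun j hj => by rw [Nat.mod_eq_of_lt (mem_range.mp hj)]
  have hval := hsum.hasSum
  rwa [eq_div_one_sub_of_hasSum_of_add_eq_mul hsum.hasSum hαℓ hshift, hinit] at hval

end PeriodicSeries

theorem aeval_eq_zero_of_aeval_minpoly_eq_zero {R A B : Type*} [CommRing R] [IsDomain R]
    [IsIntegrallyClosed R] [CommRing A] [IsDomain A] [Algebra R A] [Module.IsTorsionFree R A]
    [CommRing B] [Algebra R B] {x : A} (hx : IsIntegral R x) {p : R[X]} (hp : aeval x p = 0)
    {y : B} (hy : aeval y (minpoly R x) = 0) : aeval y p = 0 := by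
  obtain ⟨q, rfl⟩ := minpoly.isIntegrallyClosed_dvd hx hp
  rw [map_mul, hy, zero_mul]

theorem betaMap_iterate_succ (β : ℝ) (n : ℕ) :
    (betaMap β)^[n + 1] 1 = β * (betaMap β)^[n] 1 - renyi β n := by
  rw [Function.iterate_succ_apply']
  exact (Int.self_sub_floor _).symm

theorem betaMap_iterate_mem_Ico (β : ℝ) {n : ℕ} (hn : n ≠ 0) :
    (betaMap β)^[n] 1 ∈ Set.Ico 0 1 := by
  obtain ⟨m, rfl⟩ := Nat.exists_eq_succ_of_ne_zero hn
  rw [Function.iterate_succ_apply']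
  exact ⟨Int.fract_nonneg _, Int.fract_lt_one _⟩

theorem pow_eq_sum_renyi_add_betaMap_iterate (β : ℝ) (n : ℕ) :
    β ^ n = ∑ j ∈ range n, (renyi β (n - 1 - j) : ℝ) * β ^ j + (betaMap β)^[n] 1 := by
  induction n with
  | zero => simp
  | succ n ih =>
    rw [sum_range_succ', betaMap_iterate_succ, pow_succ', ih, mul_add, mul_sum]
    simp only [Nat.add_sub_cancel, Nat.sub_zero, Nat.sub_sub, add_comm 1, pow_zero, mul_one,
      pow_succ', mul_left_comm β]
    ring

theorem betaMap_iterate_eq_zero_of_renyi_eq_zero {β : ℝ} (hβ : 1 < β) {ℓ : ℕ} (hℓ : 0 < ℓ)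
    (hfin : ∀ n, ℓ ≤ n → renyi β n = 0) : (betaMap β)^[ℓ] 1 = 0 := by
  have hgeom : ∀ k, (betaMap β)^[ℓ + k] 1 = β ^ k * (betaMap β)^[ℓ] 1 := fun k => by
    induction k with
    | zero => simp
    | succ k ih =>
      rw [← add_assoc, betaMap_iterate_succ, hfin _ (Nat.le_add_right ℓ k), ih]
      push_cast
      ring
  obtain ⟨hnonneg, -⟩ := betaMap_iterate_mem_Ico β hℓ.ne'
  by_contra hne
  have hpos := lt_of_le_of_ne hnonneg (Ne.symm hne)
  obtain ⟨k, hk⟩ := pow_unbounded_of_one_lt ((betaMap β)^[ℓ] 1)⁻¹ hβ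
  have hlt := (betaMap_iterate_mem_Ico β (n := ℓ + k) (by omega)).2
  rw [hgeom, ← lt_div_iff₀ hpos, one_div] at hlt
  exact hlt.not_gt hk

noncomputable def renyiPoly (β : ℝ) (ℓ : ℕ) : ℤ[X] :=
  X ^ ℓ - ∑ j ∈ range ℓ, C (renyi β (ℓ - 1 - j)) * X ^ j

theorem aeval_renyiPoly {A : Type*} [CommRing A] (β : ℝ) (ℓ : ℕ) (x : A) :
    aeval x (renyiPoly β ℓ) = x ^ ℓ - ∑ j ∈ range ℓ, (renyi β (ℓ - 1 - j) : A) * x ^ j := by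
  simp [renyiPoly]

theorem aeval_renyiPoly_self {β : ℝ} (hβ : 1 < β) {ℓ : ℕ} (hℓ : 0 < ℓ)
    (hfin : ∀ n, ℓ ≤ n → renyi β n = 0) : aeval β (renyiPoly β ℓ) = 0 := by
  rw [aeval_renyiPoly, sub_eq_zero]
  simpa [betaMap_iterate_eq_zero_of_renyi_eq_zero hβ hℓ hfin] using
    pow_eq_sum_renyi_add_betaMap_iterate β ℓ

theorem pow_eq_sum_renyi_of_aeval_minpoly_eq_zero {B : Type*} [CommRing B]
    {β : ℝ} (hβ : 1 < β) (hint : IsIntegral ℤ β) {α : B} (hroot : aeval α (minpoly ℤ β) = 0)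
    {ℓ : ℕ} (hℓ : 0 < ℓ) (hfin : ∀ n, ℓ ≤ n → renyi β n = 0) :
    α ^ ℓ = ∑ j ∈ range ℓ, (renyi β (ℓ - 1 - j) : B) * α ^ j := by
  rw [← sub_eq_zero, ← aeval_renyiPoly]
  exact aeval_eq_zero_of_aeval_minpoly_eq_zero hint (aeval_renyiPoly_self hβ hℓ hfin) hroot

theorem neg_one_purely_periodic_expansion_general (β : ℝ) (α : ℂ)
    (hβ : IsPisot β)
    (hroot : Polynomial.aeval α (minpoly ℤ β) = 0) (hne : α ≠ (β : ℂ))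
    (ℓ : ℕ) (hℓ : 0 < ℓ)
    (hfin : ∀ n, ℓ ≤ n → renyi β n = 0) :
    HasSum
      (fun i : ℕ =>
        ((renyi β (ℓ - 1 - i % ℓ) - if i % ℓ = 0 then 1 else 0 : ℤ) : ℂ) * α ^ i)
      (-1) := by
  obtain ⟨hβ1, hint, hconj⟩ := hβ
  have hα : ‖α‖ < 1 := hconj α hroot hne
  have hperiod : ∑ j ∈ range ℓ,
      ((renyi β (ℓ - 1 - j) - if j = 0 then 1 else 0 : ℤ) : ℂ) * α ^ j = α ^ ℓ - 1 := by
    push_cast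
    simp only [sub_mul, sum_sub_distrib, ite_mul, one_mul, zero_mul, sum_ite_eq', mem_range, hℓ,
      if_true, pow_zero]
    rw [← pow_eq_sum_renyi_of_aeval_minpoly_eq_zero hβ1 hint hroot hℓ hfin]
  have hsum := hasSum_mod_mul_geometric
    (fun j => ((renyi β (ℓ - 1 - j) - if j = 0 then 1 else 0 : ℤ) : ℂ)) hℓ hα
  have hden : 1 - α ^ ℓ ≠ 0 := sub_ne_zero.mpr (pow_ne_one_of_norm_lt_one hα hℓ.ne').symm
  rwa [hperiod, ← neg_sub, neg_div, div_self hden] at hsum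

/-- Let β be a Pisot number with finite Rényi expansion
d_β(1) = t₁⋯t_ℓ (t_ℓ ≠ 0) and α an algebraic conjugate of β.  Then -1 equals
the α-value of the purely periodic left-infinite word ^ω(t₁⋯t_{ℓ-1}(t_ℓ-1)),
i.e.  -1 = Σ_{i≥0} z_i α^i where z_i = t_{ℓ - (i mod ℓ)} for i mod ℓ ≠ 0 and
z_i = t_ℓ - 1 for i mod ℓ = 0. -/
theorem neg_one_purely_periodic_expansion (β : ℝ) (α : ℂ)
    (hβ : IsPisot β)
    (hroot : Polynomial.aeval α (minpoly ℤ β) = 0) (hne : α ≠ (β : ℂ))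
    (ℓ : ℕ) (hℓ : 0 < ℓ)
    (hlast : renyi β (ℓ - 1) ≠ 0) (hfin : ∀ n, ℓ ≤ n → renyi β n = 0) :
    HasSum
      (fun i : ℕ =>
        ((renyi β (ℓ - 1 - i % ℓ) - if i % ℓ = 0 then 1 else 0 : ℤ) : ℂ) * α ^ i)
      (-1) :=
  neg_one_purely_periodic_expansion_general β α hβ hroot hne ℓ hℓ hfin
end

section
/- Let β be a Pisot root of x³ - x² - 1 and α one of its complex conjugates. Then -1 admits the three distinct eventually periodic α-adic expansions ^ω(100)•, ^ω(100)0•01, and ^ω(100)01•00001; that is, the α-values of these three digit sequences all equal -1. -/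
/-- Let α be a complex (non-real) root of x³ - x² - 1 (the complex
conjugate of the Pisot root β). Then -1 has the three eventually periodic α-adic
expansions ^ω(100)•, ^ω(100)0•01 and ^ω(100)01•00001, i.e.
-1 = Σ_{k≥0} α^(3k+2),
-1 = α^(-2) + Σ_{k≥0} α^(3k+3),
-1 = α^(-5) + 1 + Σ_{k≥0} α^(3k+4). -/
theorem cubic_three_expansions_of_neg_one (α : ℂ)
    (hroot : α ^ 3 = α ^ 2 + 1) (him : α.im ≠ 0) :
    HasSum (fun k : ℕ => α ^ (3 * k + 2)) (-1) ∧
    HasSum (fun k : ℕ => α ^ (3 * k + 3)) (-1 - α ^ (-2 : ℤ)) ∧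
    HasSum (fun k : ℕ => α ^ (3 * k + 4)) (-1 - α ^ (-5 : ℤ) - 1) := by
  have hα0 : α ≠ 0 := by
    intro h; rw [h] at him; simp at him
  -- show ‖α‖ < 1
  set a := α.re with ha
  set b := α.im with hb
  have h1 := congrArg Complex.re hroot
  have h2 := congrArg Complex.im hroot
  simp only [pow_succ, pow_zero, one_mul, Complex.mul_re, Complex.mul_im,
    Complex.add_re, Complex.add_im, Complex.one_re, Complex.one_im] at h1 h2
  have hre : a ^ 3 - 3 * a * b ^ 2 = a ^ 2 - b ^ 2 + 1 := by linear_combination h1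
  have him' : 3 * a ^ 2 * b - b ^ 3 = 2 * a * b := by linear_combination h2
  have hb2 : b ^ 2 = 3 * a ^ 2 - 2 * a := by
    have h3 : b * (3 * a ^ 2 - b ^ 2 - 2 * a) = 0 := by linear_combination him'
    rcases mul_eq_zero.1 h3 with h' | h'
    · exact absurd h' him
    · nlinarith
  have hcubic : 8 * a ^ 3 - 8 * a ^ 2 + 2 * a + 1 = 0 := by nlinarith [hre, hb2]
  have hbpos : 0 < b ^ 2 := by rcases lt_or_gt_of_ne him with h|h <;> nlinarith
  have hlt : a ^ 2 + b ^ 2 < 1 := by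
    nlinarith [hb2, hcubic, sq_nonneg (a - 1), sq_nonneg a, sq_nonneg (2*a-1), sq_nonneg (2*a+1)]
  have hnorm : ‖α‖ < 1 := by
    rw [show (1 : ℝ) = Real.sqrt 1 by simp]
    rw [Complex.norm_def, Complex.normSq_apply]
    apply Real.sqrt_lt_sqrt (by nlinarith [sq_nonneg a, sq_nonneg b])
    nlinarith [hlt]
  have hnorm3 : ‖α ^ 3‖ < 1 := by
    rw [norm_pow]
    exact pow_lt_one₀ (norm_nonneg α) hnorm (by norm_num)
  have hgeo : HasSum (fun k : ℕ => (α ^ 3) ^ k) (1 - α ^ 3)⁻¹ :=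
    hasSum_geometric_of_norm_lt_one hnorm3
  have hne : (1 : ℂ) - α ^ 3 ≠ 0 := by
    rw [hroot]; intro h
    apply hα0
    have h4 : α ^ 2 = 0 := by linear_combination -h
    exact pow_eq_zero_iff (n := 2) (by norm_num) |>.1 h4
  have key : ∀ c : ℂ, HasSum (fun k : ℕ => c * (α ^ 3) ^ k) (c * (1 - α ^ 3)⁻¹) :=
    fun c => hgeo.mul_left c
  have hz2 : α ^ (-2 : ℤ) = (α ^ 2)⁻¹ := by
    rw [show (-2 : ℤ) = -((2:ℕ):ℤ) by norm_num, zpow_neg, zpow_natCast]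
  have hz5 : α ^ (-5 : ℤ) = (α ^ 5)⁻¹ := by
    rw [show (-5 : ℤ) = -((5:ℕ):ℤ) by norm_num, zpow_neg, zpow_natCast]
  refine ⟨?_, ?_, ?_⟩
  · have h := key (α ^ 2)
    have heq : α ^ 2 * (1 - α ^ 3)⁻¹ = -1 := by
      field_simp
      linear_combination -hroot
    rw [heq] at h
    convert h using 2 with k
    rw [pow_add, pow_mul, mul_comm]
  · have h := key (α ^ 3)
    have heq : α ^ 3 * (1 - α ^ 3)⁻¹ = -1 - α ^ (-2 : ℤ) := by
      rw [hz2]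
      field_simp
      linear_combination -hroot
    rw [heq] at h
    convert h using 2 with k
    rw [pow_add, pow_mul, mul_comm]
  · have h := key (α ^ 4)
    have heq : α ^ 4 * (1 - α ^ 3)⁻¹ = -1 - α ^ (-5 : ℤ) - 1 := by
      rw [hz5]
      field_simp
      linear_combination (α ^ 6 - α ^ 5 - α ^ 4 + α ^ 2 - 1) * hroot
    rw [heq] at h
    convert h using 2 with k
    rw [pow_add, pow_mul, mul_comm]
end

section
/- Let β be a quadratic Pisot unit, root of x² - ax - 1 with a ∈ Z_{>0}, and α = -β^{-1} its conjugate. If x ∈ Z[β] with x > 0, then the conjugate x' has a unique weakly admissible α-adic expansion, and this expansion is finite, equal digit-by-digit to the β-expansion of x. -/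
/-!
Write `ℤ[β]` as `ℤ[ω]`, `ω² = a ω + 1`, with the two embeddings `ω ↦ β` and `ω ↦ α`.

Existence: after multiplying `x` by a power of `β`, its conjugate lies in `(-1, β)`. The map
`z ↦ (z - d) / β`, where `d ≥ 0` is the least digit keeping the new conjugate above `-1`,
preserves this window and keeps `z ≥ 0`: otherwise `y = d - z` would satisfy `0 < y`,
`α < y' ≤ α + 1` and `y - y' < β`, which forces `y ∈ ℤ`. A nonzero `z` of the window has norm
at least `1`, hence `β z > 1`, while `z` is divided by at least `β` at each step; so the orbit
reaches `0`, and the digits form a finite admissible expansion that holds in `ℤ[ω]`, hence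
under both embeddings.

Uniqueness: digit series with digits in `[0, a]` have `α`-values in `[-1, β]`. If two
admissible expansions first differ at position `j`, comparing the tails there forces the smaller
digit `c` to be followed by `0 a`, so the tail of the finite expansion has `α`-value `c - α`.
That tail lies in `ℤ[β]` with nonnegative `β`-value, while `c - β < 0`.
-/

/-- A weakly admissible α-adic expansion of y over the alphabet {0,…,a}:
digits in {0,…,a}, finitely many nonzero digits of negative index, no finite
factor lexicographically greater than d*_β(1) = (a0)^ω (equivalently a digit a
is always followed on the right by 0), with α-value y. -/
def IsAlphaAdicExpansion (a : ℕ) (α : ℝ) (f : ℤ → ℤ) (y : ℝ) : Prop :=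
  (∀ i, 0 ≤ f i ∧ f i ≤ a) ∧
  (∃ k : ℤ, ∀ i, i < k → f i = 0) ∧
  (∀ i, f (i + 1) = a → f i = 0) ∧
  HasSum (fun i : ℤ => (f i : ℝ) * α ^ i) y

open Finset Function QuadraticAlgebra

structure IsPisotPair (a : ℕ) (β α : ℝ) : Prop where
  a_pos : 0 < a
  sq_eq : β ^ 2 = a * β + 1
  pos : 0 < β
  conj_eq : α = -β⁻¹

theorem irrational_of_sq_eq {a : ℕ} (ha : 0 < a) {γ : ℝ} (hγ : γ ^ 2 = a * γ + 1) :
    Irrational γ := by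
  have hsq : (2 * γ - a) ^ 2 = ((a ^ 2 + 4 : ℤ) : ℝ) := by push_cast; linear_combination 4 * hγ
  have hnot : ¬∃ y : ℤ, 2 * γ - a = y := by
    rintro ⟨y, hy⟩
    rw [hy] at hsq
    have ht : y.natAbs ^ 2 = a ^ 2 + 4 := by
      have : y ^ 2 = a ^ 2 + 4 := by exact_mod_cast hsq
      zify; rwa [sq_abs]
    -- `a² < a² + 4 < (a + 2)²` and `(a + 1)² = a² + 4` has no solution
    have h1 : a < y.natAbs := (Nat.pow_lt_pow_iff_left two_ne_zero).mp (by omega)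
    have h2 : y.natAbs < a + 2 := (Nat.pow_lt_pow_iff_left two_ne_zero).mp (by nlinarith)
    rw [show y.natAbs = a + 1 by omega] at ht
    ring_nf at ht
    omega
  have h := (irrational_nrt_of_notint_nrt 2 _ hsq hnot two_pos).add_natCast a
  simpa [show 2 * γ - a + a = 2 * γ by ring] using h.div_natCast (m := 2) two_ne_zero

namespace IsPisotPair

variable {a : ℕ} {β α : ℝ}

theorem mul_eq (h : IsPisotPair a β α) : α * β = -1 := by rw [h.conj_eq]; field_simp [h.pos.ne']

theorem add_eq (h : IsPisotPair a β α) : α + β = a := by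
  have := h.mul_eq; have := h.sq_eq; have := h.pos
  field_simp at *
  nlinarith

theorem conj_sq_eq (h : IsPisotPair a β α) : α ^ 2 = a * α + 1 := by
  rw [show α = a - β by linarith [h.add_eq]]; linear_combination h.sq_eq

theorem conj_neg (h : IsPisotPair a β α) : α < 0 := by rw [h.conj_eq]; simp [h.pos]

theorem natCast_lt (h : IsPisotPair a β α) : (a : ℝ) < β := by linarith [h.add_eq, h.conj_neg]

theorem one_lt (h : IsPisotPair a β α) : 1 < β := by
  have : (1 : ℝ) ≤ a := by exact_mod_cast h.a_pos
  linarith [h.natCast_lt]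

theorem neg_one_lt_conj (h : IsPisotPair a β α) : -1 < α := by
  nlinarith [h.mul_eq, h.one_lt, h.conj_neg]

theorem abs_conj_lt_one (h : IsPisotPair a β α) : |α| < 1 :=
  abs_lt.mpr ⟨h.neg_one_lt_conj, by linarith [h.conj_neg]⟩

end IsPisotPair

/-- The digit conditions of `IsAlphaAdicExpansion`, for words on `ℤ` and for their tails on `ℕ`. -/
structure IsAdmissible {ι : Type*} [Add ι] [One ι] (a : ℕ) (u : ι → ℤ) : Prop where
  mem_Icc : ∀ i, u i ∈ Set.Icc 0 (a : ℤ)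
  eq_zero_of_succ_eq : ∀ i, u (i + 1) = a → u i = 0

section Words

variable {a : ℕ}

theorem IsAlphaAdicExpansion.isAdmissible {α y : ℝ} {f : ℤ → ℤ}
    (hf : IsAlphaAdicExpansion a α f y) : IsAdmissible a f :=
  ⟨hf.1, hf.2.2.1⟩

theorem IsAdmissible.tail {u : ℕ → ℤ} (hu : IsAdmissible a u) :
    IsAdmissible a (fun n => u (n + 1)) :=
  ⟨fun _ => hu.mem_Icc _, fun n => hu.eq_zero_of_succ_eq (n + 1)⟩

theorem IsAdmissible.comp_add {f : ℤ → ℤ} (hf : IsAdmissible a f) (j : ℤ) :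
    IsAdmissible a (fun n : ℕ => f (j + n)) :=
  ⟨fun _ => hf.mem_Icc _, fun n hn =>
    hf.eq_zero_of_succ_eq (j + n) (by simpa [add_assoc] using hn)⟩

theorem Set.Finite.exists_forall_lt_eq_zero {M : Type*} [Zero M] {f : ℤ → M}
    (hf : (support f).Finite) :
    ∃ k, ∀ i < k, f i = 0 := by
  obtain ⟨k, hk⟩ := hf.bddBelow
  exact ⟨k, fun i hi => by_contra fun hne => (hk hne).not_gt hi⟩

theorem Set.Finite.exists_forall_ge_eq_zero {M : Type*} [Zero M] {f : ℤ → M}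
    (hf : (support f).Finite) :
    ∃ K, ∀ i, K ≤ i → f i = 0 := by
  obtain ⟨K, hK⟩ := hf.bddAbove
  exact ⟨K + 1, fun i hi => by_contra fun hne => by linarith [hK hne]⟩

theorem sum_Ico_add_one_of_forall_lt {M : Type*} [AddCommMonoid M] {g : ℤ → M} {k : ℤ}
    (hk : ∀ i < k, g i = 0) (j : ℤ) : ∑ i ∈ Ico k (j + 1), g i = ∑ i ∈ Ico k j, g i + g j := by
  rcases le_or_gt k j with hkj | hjk
  · rw [Ico_add_one_right_eq_Icc, ← Ico_insert_right hkj, sum_insert right_notMem_Ico, add_comm]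
  · simp [hk j hjk, Ico_eq_empty_of_le (show j + 1 ≤ k by omega), Ico_eq_empty_of_le hjk.le]

theorem exists_ne_forall_lt_eq {M : Type*} [Zero M] {f g : ℤ → M}
    (hf : ∃ k, ∀ i < k, f i = 0) (hg : ∃ k, ∀ i < k, g i = 0) (hne : g ≠ f) :
    ∃ j, g j ≠ f j ∧ ∀ i < j, f i = g i := by
  obtain ⟨kf, hkf⟩ := hf
  obtain ⟨kg, hkg⟩ := hg
  obtain ⟨j, hj, hjmin⟩ := Int.exists_least_of_bdd (P := fun i => g i ≠ f i)
    ⟨min kf kg, fun i hi => by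
      by_contra! hlt
      exact hi (by rw [hkg i (by omega), hkf i (by omega)])⟩
    (Function.ne_iff.mp hne)
  exact ⟨j, hj, fun i hi => by_contra fun hne' => (hjmin i (Ne.symm hne')).not_gt hi⟩

theorem IsAdmissible.isAlphaAdicExpansion {α y : ℝ} {f : ℤ → ℤ} (hf : IsAdmissible a f)
    (hfin : (support f).Finite) (hy : HasSum (fun i : ℤ => (f i : ℝ) * α ^ i) y) :
    IsAlphaAdicExpansion a α f y :=
  ⟨hf.mem_Icc, hfin.exists_forall_lt_eq_zero, hf.eq_zero_of_succ_eq, hy⟩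

def natShift (D : ℕ → ℤ) (k : ℕ) (i : ℤ) : ℤ := if 0 ≤ i + k then D (i + k).toNat else 0

section NatShift

variable {D : ℕ → ℤ} {K : ℕ}

theorem natShift_natCast_sub (k n : ℕ) : natShift D k (n - k) = D n := by simp [natShift]

theorem IsAdmissible.natShift (hD : IsAdmissible a D) (k : ℕ) : IsAdmissible a (natShift D k) := by
  refine ⟨fun i => ?_, fun i hi => ?_⟩
  · unfold _root_.natShift
    split_ifs
    exacts [hD.mem_Icc _, ⟨le_rfl, Int.natCast_nonneg a⟩]
  · unfold _root_.natShift at hi ⊢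
    by_cases hik : 0 ≤ i + k
    · rw [if_pos (by omega)] at hi
      rw [if_pos hik]
      exact hD.eq_zero_of_succ_eq _ (by rwa [show (i + k).toNat + 1 = (i + 1 + k).toNat by omega])
    · rw [if_neg hik]

theorem finite_support_natShift (hD : ∀ n, K ≤ n → D n = 0) (k : ℕ) :
    (support (natShift D k)).Finite := by
  refine (Set.finite_Ico (-(k : ℤ)) (K - k)).subset fun i hi => ?_
  simp only [mem_support, natShift] at hi
  split_ifs at hi with h1
  · exact ⟨by omega, by by_contra! hlt; exact hi (hD _ (by omega))⟩
  · exact absurd rfl hi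

theorem hasSum_natShift {γ : ℝ} (hγ : γ ≠ 0) (hD : ∀ n, K ≤ n → D n = 0) (k : ℕ) :
    HasSum (fun i => (natShift D k i : ℝ) * γ ^ i)
      ((∑ n ∈ range K, (D n : ℝ) * γ ^ n) / γ ^ k) := by
  have hinj : Injective (fun n : ℕ => (n : ℤ) - k) := fun m n hmn => by simpa using hmn
  rw [← hinj.hasSum_iff fun i hi => by
    simp only [natShift]
    rw [if_neg fun h0 => hi ⟨(i + k).toNat, by simp; omega⟩, Int.cast_zero, zero_mul]]
  have hfun : ((fun i => (natShift D k i : ℝ) * γ ^ i) ∘ fun n : ℕ => (n : ℤ) - k) =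
      fun n => (D n * γ ^ n) / γ ^ k := by
    ext n
    simp only [comp_apply, natShift_natCast_sub, zpow_sub₀ hγ, zpow_natCast]
    ring
  rw [hfun, sum_div]
  exact hasSum_sum_of_ne_finset_zero fun n hn => by simp [hD n (by simpa using hn)]

end NatShift

theorem summable_mul_pow_of_mem_Icc {γ : ℝ} (hγ : |γ| < 1) {u : ℕ → ℤ}
    (hu : ∀ n, u n ∈ Set.Icc 0 (a : ℤ)) : Summable (fun n => (u n : ℝ) * γ ^ n) := by
  refine .of_norm_bounded ((summable_geometric_of_lt_one (abs_nonneg γ) hγ).mul_left (a : ℝ))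
    fun n => ?_
  rw [norm_mul, norm_pow, Real.norm_eq_abs, Real.norm_eq_abs,
    abs_of_nonneg (by exact_mod_cast (hu n).1 : (0 : ℝ) ≤ u n)]
  gcongr
  exact_mod_cast (hu n).2

theorem tsum_mul_pow_eq_add {γ : ℝ} {u : ℕ → ℤ} (hs : Summable (fun n => (u n : ℝ) * γ ^ n)) :
    ∑' n, (u n : ℝ) * γ ^ n = u 0 + γ * ∑' n, (u (n + 1) : ℝ) * γ ^ n := by
  rw [hs.tsum_eq_zero_add, ← tsum_mul_left]
  simp only [pow_zero, mul_one, pow_succ]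
  congr 1
  exact tsum_congr fun n => by ring

theorem hasSum_comp_add_sub {γ : ℝ} (hγ : γ ≠ 0) {f g : ℤ → ℤ} {y : ℝ}
    (hf : HasSum (fun i => (f i : ℝ) * γ ^ i) y) (hg : HasSum (fun i => (g i : ℝ) * γ ^ i) y)
    {j : ℤ} (hfg : ∀ i < j, f i = g i) :
    HasSum (fun n : ℕ => ((f (j + n) : ℝ) - g (j + n)) * γ ^ n) 0 := by
  have hd := hf.sub hg
  rw [sub_self] at hd
  have hinj : Injective (fun n : ℕ => j + n) := fun m n hmn => by simpa using hmn
  rw [← hinj.hasSum_iff fun i hi => by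
    rw [hfg i (by by_contra! hji; exact hi ⟨(i - j).toNat, by simp; omega⟩), sub_self]] at hd
  rw [← hasSum_mul_left_iff (zpow_ne_zero j hγ), mul_zero]
  have hfun : (fun n : ℕ => γ ^ j * (((f (j + n) : ℝ) - g (j + n)) * γ ^ n)) =
      (fun i => (f i : ℝ) * γ ^ i - g i * γ ^ i) ∘ fun n : ℕ => j + n := by
    ext n
    simp only [comp_apply, zpow_add₀ hγ, zpow_natCast]
    ring
  rwa [hfun]

theorem mul_le_mul_abs_add_div_two {d c t : ℝ} (hd : 0 ≤ d) (hdc : d ≤ c) :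
    d * t ≤ c * ((|t| + t) / 2) := by
  rcases le_total 0 t with ht | ht
  · rw [abs_of_nonneg ht]; nlinarith
  · rw [abs_of_nonpos ht]; nlinarith

theorem mul_sub_abs_div_two_le_mul {d c t : ℝ} (hd : 0 ≤ d) (hdc : d ≤ c) :
    c * ((t - |t|) / 2) ≤ d * t := by
  rcases le_total 0 t with ht | ht
  · rw [abs_of_nonneg ht]; nlinarith
  · rw [abs_of_nonpos ht]; nlinarith

end Words

namespace IsPisotPair

variable {a : ℕ} {β α : ℝ}

theorem sum_Ico_lt (h : IsPisotPair a β α) {f : ℤ → ℤ} (hf : IsAdmissible a f) {k : ℤ}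
    (hk : ∀ i < k, f i = 0) (j : ℤ) : ∑ i ∈ Ico k j, (f i : ℝ) * β ^ i < β ^ j := by
  set T : ℤ → ℝ := fun j => ∑ i ∈ Ico k j, (f i : ℝ) * β ^ i
  have hT : ∀ j, T (j + 1) = T j + f j * β ^ j :=
    sum_Ico_add_one_of_forall_lt fun i hi => by simp [hk i hi]
  have hpow : ∀ i : ℤ, β ^ (i + 1) = β * β ^ i := fun i => by
    rw [zpow_add_one₀ h.pos.ne', mul_comm]
  suffices ∀ n : ℕ, ∀ j ≤ k + n, T j < β ^ j from
    this (j - k).toNat j (by have := Int.self_le_toNat (j - k); omega)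
  intro n
  induction n with
  | zero =>
    intro j hj
    simp [T, Ico_eq_empty_of_le (show j ≤ k by simpa using hj), zpow_pos h.pos]
  | succ n ih =>
    intro j hj
    rcases (show j ≤ k + n ∨ j = k + n + 1 by omega) with hj | rfl
    · exact ih j hj
    have hP := zpow_pos h.pos (k + n - 1)
    have hpow' : β ^ (k + n) = β * β ^ (k + n - 1) := by rw [← hpow, sub_add_cancel]
    rw [hT, hpow, hpow']
    rcases (hf.mem_Icc (k + n)).2.lt_or_eq with hlt | heq
    · -- a digit below `a` leaves room `β ^ (k + n)` for the lower part
      have hfa : (f (k + n) : ℝ) ≤ a - 1 := by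
        have : f (k + n) ≤ a - 1 := by omega
        exact_mod_cast this
      have := ih (k + n) le_rfl
      rw [hpow'] at this
      have hβP := mul_pos h.pos hP
      nlinarith [mul_le_mul_of_nonneg_right hfa hβP.le, mul_lt_mul_of_pos_right h.natCast_lt hβP]
    · -- the digit `a` is followed by `0`, and `a β + 1 = β²`
      have h0 := hf.eq_zero_of_succ_eq (k + n - 1) (by rw [sub_add_cancel]; exact heq)
      have hT' := hT (k + n - 1)
      rw [sub_add_cancel, h0, Int.cast_zero, zero_mul, add_zero] at hT'
      have := ih (k + n - 1) (by omega)
      rw [hT', heq]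
      push_cast
      nlinarith [h.sq_eq]

theorem tsum_lt (h : IsPisotPair a β α) {f : ℤ → ℤ} (hf : IsAdmissible a f)
    (hfin : (support f).Finite) (j : ℤ) :
    ∑' i : {i : ℤ // i < j}, (f i : ℝ) * β ^ (i : ℤ) < β ^ j := by
  obtain ⟨k, hk⟩ := hfin.exists_forall_lt_eq_zero
  convert h.sum_Ico_lt hf hk j using 1
  rw [show (∑' i : {i : ℤ // i < j}, (f i : ℝ) * β ^ (i : ℤ))
      = ∑' i : Set.Iio j, (f i : ℝ) * β ^ (i : ℤ) from rfl,
    _root_.tsum_subtype (Set.Iio j) fun i : ℤ => (f i : ℝ) * β ^ i]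
  refine (tsum_eq_sum fun i hi => ?_).trans (sum_congr rfl fun i hi => ?_)
  · by_cases hij : i < j
    · simp [hk i (by simp_all)]
    · exact Set.indicator_of_notMem (s := Set.Iio j) hij _
  · exact Set.indicator_of_mem (s := Set.Iio j) (mem_Ico.mp hi).2 _

/-- Since `max t 0 = (|t| + t) / 2`, the largest value of a digit series is a sum of two
geometric series. -/
theorem hasSum_max_pow (h : IsPisotPair a β α) :
    HasSum (fun n : ℕ => (a : ℝ) * ((|α| ^ n + α ^ n) / 2)) β := by
  have habs : |α| = -α := abs_of_neg h.conj_neg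
  have hg := ((hasSum_geometric_of_abs_lt_one (by rw [abs_abs]; exact h.abs_conj_lt_one)).add
    (hasSum_geometric_of_abs_lt_one h.abs_conj_lt_one)).div_const 2 |>.mul_left (a : ℝ)
  have h1 : 1 + α ≠ 0 := by linarith [h.neg_one_lt_conj]
  have h2 : 1 - α ≠ 0 := by linarith [h.conj_neg]
  have hval : (a : ℝ) * (((1 - |α|)⁻¹ + (1 - α)⁻¹) / 2) = β := by
    rw [habs, sub_neg_eq_add]
    field_simp
    linear_combination 2 * β * h.conj_sq_eq + 2 * a * h.mul_eq
  rwa [hval] at hg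

theorem hasSum_min_pow (h : IsPisotPair a β α) :
    HasSum (fun n : ℕ => (a : ℝ) * ((α ^ n - |α| ^ n) / 2)) (-1) := by
  have habs : |α| = -α := abs_of_neg h.conj_neg
  have hg := ((hasSum_geometric_of_abs_lt_one h.abs_conj_lt_one).sub
    (hasSum_geometric_of_abs_lt_one (by rw [abs_abs]; exact h.abs_conj_lt_one))).div_const 2
    |>.mul_left (a : ℝ)
  have h1 : 1 + α ≠ 0 := by linarith [h.neg_one_lt_conj]
  have h2 : 1 - α ≠ 0 := by linarith [h.conj_neg]
  have hval : (a : ℝ) * (((1 - α)⁻¹ - (1 - |α|)⁻¹) / 2) = -1 := by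
    rw [habs, sub_neg_eq_add]
    field_simp
    linear_combination -2 * h.conj_sq_eq
  rwa [hval] at hg

theorem tsum_le (h : IsPisotPair a β α) {u : ℕ → ℤ} (hu : ∀ n, u n ∈ Set.Icc 0 (a : ℤ)) :
    ∑' n, (u n : ℝ) * α ^ n ≤ β := by
  refine hasSum_le (fun n => ?_) (summable_mul_pow_of_mem_Icc h.abs_conj_lt_one hu).hasSum
    h.hasSum_max_pow
  rw [← abs_pow]
  exact mul_le_mul_abs_add_div_two (by exact_mod_cast (hu n).1) (by exact_mod_cast (hu n).2)

theorem neg_one_le_tsum (h : IsPisotPair a β α) {u : ℕ → ℤ} (hu : ∀ n, u n ∈ Set.Icc 0 (a : ℤ)) :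
    -1 ≤ ∑' n, (u n : ℝ) * α ^ n := by
  refine hasSum_le (fun n => ?_) h.hasSum_min_pow
    (summable_mul_pow_of_mem_Icc h.abs_conj_lt_one hu).hasSum
  rw [← abs_pow]
  exact mul_sub_abs_div_two_le_mul (by exact_mod_cast (hu n).1) (by exact_mod_cast (hu n).2)

theorem tsum_eq_add_mul_tsum_succ (h : IsPisotPair a β α) {u : ℕ → ℤ}
    (hu : ∀ n, u n ∈ Set.Icc 0 (a : ℤ)) :
    ∑' n, (u n : ℝ) * α ^ n = u 0 + α * ∑' n, (u (n + 1) : ℝ) * α ^ n :=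
  tsum_mul_pow_eq_add (summable_mul_pow_of_mem_Icc h.abs_conj_lt_one hu)

theorem head_eq_of_tsum_eq (h : IsPisotPair a β α) {u : ℕ → ℤ}
    (hu : ∀ n, u n ∈ Set.Icc 0 (a : ℤ)) (hβ : ∑' n, (u n : ℝ) * α ^ n = β) : u 0 = a := by
  have hsplit := h.tsum_eq_add_mul_tsum_succ hu
  have htail := h.neg_one_le_tsum fun n => hu (n + 1)
  have hle : (a : ℝ) ≤ u 0 := by nlinarith [h.add_eq, h.conj_neg]
  exact le_antisymm (hu 0).2 (by exact_mod_cast hle)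

/-- The values of the tails, in `[-1, β]`, differ by at most `β + 1 < 2 β`. -/
theorem head_eq_add_one_of_tsum_eq (h : IsPisotPair a β α) {u v : ℕ → ℤ}
    (hu : ∀ n, u n ∈ Set.Icc 0 (a : ℤ)) (hv : ∀ n, v n ∈ Set.Icc 0 (a : ℤ)) (hlt : u 0 < v 0)
    (heq : ∑' n, (u n : ℝ) * α ^ n = ∑' n, (v n : ℝ) * α ^ n) :
    v 0 = u 0 + 1 ∧
      ∑' n, (v (n + 1) : ℝ) * α ^ n = ∑' n, (u (n + 1) : ℝ) * α ^ n + β := by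
  rw [h.tsum_eq_add_mul_tsum_succ hu, h.tsum_eq_add_mul_tsum_succ hv] at heq
  have hu₁ := h.neg_one_le_tsum fun n => hu (n + 1)
  have hv₁ := h.tsum_le fun n => hv (n + 1)
  have hdiff : β * (v 0 - u 0) =
      ∑' n, (v (n + 1) : ℝ) * α ^ n - ∑' n, (u (n + 1) : ℝ) * α ^ n := by
    linear_combination (-β) * heq + (∑' n, (u (n + 1) : ℝ) * α ^ n -
      ∑' n, (v (n + 1) : ℝ) * α ^ n) * h.mul_eq
  have hv0 : v 0 = u 0 + 1 := by
    have : ((v 0 - u 0 : ℤ) : ℝ) < 2 := by push_cast; nlinarith [h.one_lt, h.pos]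
    have : v 0 - u 0 < 2 := by exact_mod_cast this
    omega
  refine ⟨hv0, ?_⟩
  rw [hv0] at hdiff
  push_cast at hdiff
  linarith

/-- The smaller leading digit is followed by `0 a`, which pins down the value. -/
theorem tsum_eq_sub_of_lt (h : IsPisotPair a β α) {u v : ℕ → ℤ} (hu : IsAdmissible a u)
    (hv : IsAdmissible a v) (hlt : u 0 < v 0)
    (heq : ∑' n, (u n : ℝ) * α ^ n = ∑' n, (v n : ℝ) * α ^ n) :
    ∑' n, (u n : ℝ) * α ^ n = u 0 - α := by
  obtain ⟨-, hV₁⟩ := h.head_eq_add_one_of_tsum_eq hu.mem_Icc hv.mem_Icc hlt heq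
  have hU₁ := h.tsum_eq_add_mul_tsum_succ hu.tail.mem_Icc
  have hV₁' := h.tsum_eq_add_mul_tsum_succ hv.tail.mem_Icc
  set U₂ := ∑' n, (u (n + 1 + 1) : ℝ) * α ^ n
  set V₂ := ∑' n, (v (n + 1 + 1) : ℝ) * α ^ n
  have hU₂le : U₂ ≤ β := h.tsum_le hu.tail.tail.mem_Icc
  have hV₂ge : -1 ≤ V₂ := h.neg_one_le_tsum hv.tail.tail.mem_Icc
  simp only [zero_add] at hU₁ hV₁'
  -- `v₁ ≠ a` as `v₀ ≠ 0`, so `v₁ - u₁ ≤ a - 1` and the second tails must differ by `β + 1`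
  have hv1 : (v 1 : ℝ) ≤ a - 1 := by
    have hv1a : v 1 ≠ a := fun hv1a => by
      have := hv.eq_zero_of_succ_eq 0 hv1a
      have := (hu.mem_Icc 0).1
      omega
    have := (hv.mem_Icc 1).2
    have : v 1 ≤ (a : ℤ) - 1 := by omega
    exact_mod_cast this
  have hu1_nonneg : (0 : ℝ) ≤ u 1 := by exact_mod_cast (hu.mem_Icc 1).1
  have hU₂ : U₂ = β := by
    have : β + 1 ≤ U₂ - V₂ := by nlinarith [h.mul_eq, h.add_eq, h.pos]
    linarith
  have hu1 : u 1 = 0 := hu.eq_zero_of_succ_eq 1 (h.head_eq_of_tsum_eq hu.tail.tail.mem_Icc hU₂)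
  rw [h.tsum_eq_add_mul_tsum_succ hu.mem_Icc, hU₁, hu1, hU₂]
  push_cast
  linear_combination α * h.mul_eq

end IsPisotPair

/-- `ℤ[ω]` with `ω² = a ω + 1`: the ring `ℤ[β] = ℤ[β⁻¹]`, before choosing the embedding
`ω ↦ β` or `ω ↦ α` into `ℝ`. -/
abbrev ZOmega (a : ℕ) : Type := QuadraticAlgebra ℤ 1 (a : ℤ)

section ZOmega

variable {a : ℕ}

noncomputable def evalRoot {γ : ℝ} (hγ : γ ^ 2 = a * γ + 1) : ZOmega a →+* ℝ :=
  (lift ⟨γ, by simp only [one_smul, zsmul_eq_mul, Int.cast_natCast]; linear_combination hγ⟩ :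
    ZOmega a →ₐ[ℤ] ℝ).toRingHom

theorem omega_mul_omega_sub_natCast : (ω : ZOmega a) * (ω - (a : ZOmega a)) = 1 := by
  ext <;> simp

section evalRoot

variable {γ : ℝ} (hγ : γ ^ 2 = a * γ + 1)

theorem evalRoot_apply (z : ZOmega a) : evalRoot hγ z = z.re + z.im * γ := by
  simp [evalRoot]

theorem evalRoot_omega : evalRoot hγ ω = γ := by simp [evalRoot_apply]

theorem evalRoot_injective (hirr : Irrational γ) : Injective (evalRoot hγ) := by
  refine (injective_iff_map_eq_zero _).mpr fun z hz => ?_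
  rw [evalRoot_apply] at hz
  have him : z.im = 0 := by
    by_contra hne
    refine hirr ⟨-z.re / z.im, ?_⟩
    push_cast
    field_simp
    linarith
  ext
  · simpa [him] using hz
  · exact him

end evalRoot

namespace IsPisotPair

variable {β α : ℝ}

noncomputable def emb (h : IsPisotPair a β α) : ZOmega a →+* ℝ := evalRoot h.sq_eq

noncomputable def conj (h : IsPisotPair a β α) : ZOmega a →+* ℝ := evalRoot h.conj_sq_eq

theorem emb_apply (h : IsPisotPair a β α) (z : ZOmega a) : h.emb z = z.re + z.im * β :=
  evalRoot_apply _ z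

theorem conj_apply (h : IsPisotPair a β α) (z : ZOmega a) : h.conj z = z.re + z.im * α :=
  evalRoot_apply _ z

@[simp]
theorem emb_omega (h : IsPisotPair a β α) : h.emb ω = β := evalRoot_omega _

@[simp]
theorem conj_omega (h : IsPisotPair a β α) : h.conj ω = α := evalRoot_omega _

theorem emb_injective (h : IsPisotPair a β α) : Injective h.emb :=
  evalRoot_injective _ (irrational_of_sq_eq h.a_pos h.sq_eq)

theorem conj_injective (h : IsPisotPair a β α) : Injective h.conj :=
  evalRoot_injective _ (irrational_of_sq_eq h.a_pos h.conj_sq_eq)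

theorem emb_mul_conj (h : IsPisotPair a β α) (z : ZOmega a) : h.emb z * h.conj z = z.norm := by
  rw [emb_apply, conj_apply, norm_def]
  push_cast
  linear_combination (z.re * z.im) * h.add_eq + (z.im * z.im) * h.mul_eq

theorem emb_sub_conj (h : IsPisotPair a β α) (z : ZOmega a) :
    h.emb z - h.conj z = z.im * (β - α) := by
  rw [emb_apply, conj_apply]; ring

/-- The least `d ≥ 0` with `h.conj z + α < d`: subtracting it keeps the conjugate
`β (d - h.conj z)` of `(z - d) / β` above `-1`. -/
noncomputable def digit (h : IsPisotPair a β α) (z : ZOmega a) : ℤ := max 0 (⌊h.conj z + α⌋ + 1)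

/-- `(z - digit z) / ω`, as `ω⁻¹ = ω - a`. -/
noncomputable def step (h : IsPisotPair a β α) (z : ZOmega a) : ZOmega a :=
  (z - (h.digit z : ZOmega a)) * (ω - (a : ZOmega a))

def Reduced (h : IsPisotPair a β α) (z : ZOmega a) : Prop :=
  0 ≤ h.emb z ∧ -1 < h.conj z ∧ h.conj z < β

variable (h : IsPisotPair a β α) {z : ZOmega a}

theorem digit_nonneg : 0 ≤ h.digit z := le_max_left _ _

theorem conj_add_lt_digit : h.conj z + α < h.digit z := by
  have := Int.lt_floor_add_one (h.conj z + α)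
  have : ((⌊h.conj z + α⌋ + 1 : ℤ) : ℝ) ≤ h.digit z := by exact_mod_cast le_max_right _ _
  push_cast at this
  linarith

theorem digit_le_of_pos (hd : 0 < h.digit z) : (h.digit z : ℝ) ≤ h.conj z + α + 1 := by
  have : h.digit z = ⌊h.conj z + α⌋ + 1 := by unfold digit at hd ⊢; omega
  rw [this]
  push_cast
  linarith [Int.floor_le (h.conj z + α)]

theorem digit_le (hz : h.conj z < β) : h.digit z ≤ a := by
  have : ⌊h.conj z + α⌋ < a := Int.floor_lt.mpr (by push_cast; linarith [h.add_eq])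
  exact max_le (Int.natCast_nonneg a) (by omega)

theorem digit_zero : h.digit 0 = 0 := by
  have : ⌊α⌋ = -1 := Int.floor_eq_iff.mpr ⟨by push_cast; linarith [h.neg_one_lt_conj],
    by push_cast; linarith [h.conj_neg]⟩
  simp [digit, this]

theorem step_zero : h.step 0 = 0 := by simp [step, h.digit_zero]

theorem eq_digit_add_omega_mul_step (z : ZOmega a) :
    z = (h.digit z : ZOmega a) + ω * h.step z := by
  rw [step, mul_comm, mul_assoc, mul_comm _ ω, omega_mul_omega_sub_natCast]
  ring

theorem conj_step (z : ZOmega a) : h.conj (h.step z) = β * (h.digit z - h.conj z) := by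
  have := congrArg h.conj (h.eq_digit_add_omega_mul_step z)
  rw [map_add, map_mul, map_intCast, h.conj_omega] at this
  linear_combination β * this + h.conj (h.step z) * h.mul_eq

theorem emb_step (z : ZOmega a) : h.emb z = h.digit z + β * h.emb (h.step z) := by
  have := congrArg h.emb (h.eq_digit_add_omega_mul_step z)
  rwa [map_add, map_mul, map_intCast, h.emb_omega] at this

theorem conj_step_le_sub_one (hd : 0 < h.digit z) : h.conj (h.step z) ≤ β - 1 := by
  rw [h.conj_step]
  nlinarith [h.digit_le_of_pos hd, h.mul_eq, h.pos]

theorem digit_le_emb (hz : h.Reduced z) : (h.digit z : ℝ) ≤ h.emb z := by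
  by_contra! hlt
  have hd : 0 < h.digit z := by exact_mod_cast hz.1.trans_lt hlt
  have hub := h.digit_le_of_pos hd
  have hlb := h.conj_add_lt_digit (z := z)
  set y : ZOmega a := (h.digit z : ZOmega a) - z
  have hyβ : h.emb y = h.digit z - h.emb z := by simp [y]
  have hyα : h.conj y = h.digit z - h.conj z := by simp [y]
  -- `y - y' = y.im (β - α)` lies in `(-α - 1, β)`, which is inside `(α - β, β - α)`
  have him : y.im = 0 := by
    have hdiff := h.emb_sub_conj y
    rw [hyβ, hyα] at hdiff
    rcases lt_trichotomy y.im 0 with hneg | hzero | hpos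
    · have : (y.im : ℝ) ≤ -1 := by exact_mod_cast Int.le_sub_one_of_lt hneg
      nlinarith [h.conj_neg, h.one_lt]
    · exact hzero
    · have : (1 : ℝ) ≤ y.im := by exact_mod_cast hpos
      have hβα : 0 ≤ β - α := by linarith [h.conj_neg, h.pos]
      nlinarith [mul_le_mul_of_nonneg_right this hβα, h.conj_neg, hz.1, hz.2.2]
  -- hence `y = y'` is an integer in `(0, α + 1)`
  rw [emb_apply, him, Int.cast_zero, zero_mul, add_zero] at hyβ
  rw [conj_apply, him, Int.cast_zero, zero_mul, add_zero] at hyα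
  have h0 : 0 < y.re := by exact_mod_cast (by linarith : (0 : ℝ) < y.re)
  have h1 : y.re < 1 := by exact_mod_cast (by linarith [h.conj_neg] : (y.re : ℝ) < 1)
  omega

/-- `(a - 1) - ω` is the element with conjugate `β - 1` (and negative value `a - 1 - β`). -/
theorem sub_one_lt_conj_of_digit_eq (hz : h.Reduced z) (hd : h.digit z = a) :
    β - 1 < h.conj z := by
  have hle := h.digit_le_of_pos (z := z) (by rw [hd]; exact_mod_cast h.a_pos)
  rw [hd] at hle
  push_cast at hle
  refine (lt_of_le_of_ne (by linarith [h.add_eq]) fun heq => ?_)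
  have hz' : z = (((a : ℤ) - 1 : ℤ) : ZOmega a) - ω := h.conj_injective (by
    rw [← heq, map_sub, map_intCast, h.conj_omega]; push_cast; linarith [h.add_eq])
  have := hz.1
  rw [hz', map_sub, map_intCast, h.emb_omega] at this
  push_cast at this
  linarith [h.natCast_lt]

theorem eq_sum_add_pow_mul_iterate (z : ZOmega a) (t : ℕ) :
    z = ∑ k ∈ range t, (h.digit (h.step^[k] z) : ZOmega a) * ω ^ k + ω ^ t * h.step^[t] z := by
  induction t with
  | zero => simp
  | succ t ih =>
    rw [sum_range_succ, Function.iterate_succ_apply']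
    linear_combination ih + ω ^ t * h.eq_digit_add_omega_mul_step (h.step^[t] z)

theorem pow_mul_emb_iterate_le (z : ZOmega a) (k : ℕ) :
    β ^ k * h.emb (h.step^[k] z) ≤ h.emb z := by
  induction k with
  | zero => simp
  | succ k ih =>
    have hd : (0 : ℝ) ≤ h.digit (h.step^[k] z) := by exact_mod_cast h.digit_nonneg
    have := h.emb_step (h.step^[k] z)
    rw [Function.iterate_succ_apply', pow_succ, mul_assoc]
    nlinarith [pow_pos h.pos k]

variable {h}

theorem Reduced.step (hz : h.Reduced z) : h.Reduced (h.step z) := by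
  have hlb := h.conj_add_lt_digit (z := z)
  refine ⟨?_, ?_, ?_⟩
  · have hstep := h.emb_step z
    have hd := h.digit_le_emb hz
    nlinarith [h.pos]
  · rw [h.conj_step]
    nlinarith [h.mul_eq, h.pos]
  · rw [h.conj_step]
    rcases (h.digit_nonneg (z := z)).eq_or_lt with hd | hd
    · rw [← hd, Int.cast_zero]; nlinarith [h.pos, hz.2.1]
    · nlinarith [h.digit_le_of_pos hd, h.mul_eq, h.pos, h.conj_neg]

theorem Reduced.digit_step_ne (hz : h.Reduced z) (hd : 0 < h.digit z) :
    h.digit (h.step z) ≠ a := fun heq =>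
  (h.sub_one_lt_conj_of_digit_eq hz.step heq).not_ge (h.conj_step_le_sub_one hd)

theorem Reduced.one_lt_mul_emb (hz : h.Reduced z) (hz0 : z ≠ 0) : 1 < β * h.emb z := by
  have hN : z.norm ≠ 0 := by
    intro hN
    have := h.emb_mul_conj z
    rw [hN, Int.cast_zero, mul_eq_zero, map_eq_zero_iff _ h.emb_injective,
      map_eq_zero_iff _ h.conj_injective, or_self] at this
    exact hz0 this
  have h1 : (1 : ℝ) ≤ |h.emb z * h.conj z| := by
    rw [h.emb_mul_conj]; exact_mod_cast Int.one_le_abs hN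
  have h2 : |h.conj z| < β := abs_lt.mpr ⟨by linarith [hz.2.1, h.one_lt], hz.2.2⟩
  rw [abs_mul, abs_of_nonneg hz.1] at h1
  nlinarith [abs_nonneg (h.conj z), hz.1]

theorem Reduced.iterate (hz : h.Reduced z) (k : ℕ) : h.Reduced (h.step^[k] z) := by
  induction k with
  | zero => exact hz
  | succ k ih => rw [Function.iterate_succ_apply']; exact ih.step

theorem Reduced.exists_iterate_eq_zero (hz : h.Reduced z) : ∃ K, h.step^[K] z = 0 := by
  obtain ⟨K, hK⟩ := pow_unbounded_of_one_lt (β * h.emb z) h.one_lt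
  refine ⟨K, by_contra fun hne => ?_⟩
  have h1 := (hz.iterate K).one_lt_mul_emb hne
  have h2 := h.pow_mul_emb_iterate_le z K
  nlinarith [pow_pos h.pos K, h.pos]

theorem Reduced.exists_digits (hz : h.Reduced z) :
    ∃ (D : ℕ → ℤ) (K : ℕ), IsAdmissible a D ∧ (∀ k, K ≤ k → D k = 0) ∧
      z = ∑ k ∈ range K, (D k : ZOmega a) * ω ^ k := by
  obtain ⟨K, hK⟩ := hz.exists_iterate_eq_zero
  have hzero : ∀ k, K ≤ k → h.step^[k] z = 0 := fun k hk => by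
    rw [← Nat.sub_add_cancel hk, Function.iterate_add_apply, hK,
      Function.iterate_fixed h.step_zero]
  refine ⟨fun k => h.digit (h.step^[k] z), K,
    ⟨fun k => ⟨h.digit_nonneg, h.digit_le (hz.iterate k).2.2⟩, fun k hk => ?_⟩,
    fun k hk => by simp only [hzero k hk, h.digit_zero], ?_⟩
  · by_contra hne
    refine (hz.iterate k).digit_step_ne (lt_of_le_of_ne h.digit_nonneg (Ne.symm hne)) ?_
    rwa [← Function.iterate_succ_apply' h.step]
  · simpa [hK] using h.eq_sum_add_pow_mul_iterate z K

end IsPisotPair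

namespace IsPisotPair

variable {β α : ℝ}

theorem exists_reduced_pow_mul (h : IsPisotPair a β α) {x : ZOmega a} (hx : 0 < h.emb x) :
    ∃ k : ℕ, h.Reduced (ω ^ k * x) := by
  obtain ⟨k, hk⟩ := exists_pow_lt_of_lt_one (show 0 < 1 / (|h.conj x| + 1) by positivity)
    h.abs_conj_lt_one
  have hc : |h.conj (ω ^ k * x)| < 1 := by
    rw [map_mul, map_pow, h.conj_omega, abs_mul, abs_pow]
    calc |α| ^ k * |h.conj x| ≤ 1 / (|h.conj x| + 1) * |h.conj x| := by gcongr
      _ < 1 := by rw [div_mul_eq_mul_div, one_mul, div_lt_one (by positivity)]; linarith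
  refine ⟨k, ?_, (abs_lt.mp hc).1, (abs_lt.mp hc).2.trans h.one_lt⟩
  rw [map_mul, map_pow, h.emb_omega]
  exact mul_nonneg (pow_nonneg h.pos.le k) hx.le

theorem exists_finite_expansion (h : IsPisotPair a β α) {x : ZOmega a} (hx : 0 < h.emb x) :
    ∃ f : ℤ → ℤ, IsAdmissible a f ∧ (support f).Finite ∧
      ∀ {γ : ℝ} (hγ : γ ^ 2 = a * γ + 1), HasSum (fun i => (f i : ℝ) * γ ^ i) (evalRoot hγ x) := by
  obtain ⟨k, hk⟩ := h.exists_reduced_pow_mul hx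
  obtain ⟨D, K, hD, hDK, hkD⟩ := hk.exists_digits
  refine ⟨natShift D k, hD.natShift k, finite_support_natShift hDK k, fun {γ} hγ => ?_⟩
  have hγ0 : γ ≠ 0 := by rintro rfl; norm_num at hγ
  have hval := congrArg (evalRoot hγ) hkD
  simp only [map_mul, map_pow, map_sum, map_intCast, evalRoot_omega] at hval
  rw [eq_div_of_mul_eq (pow_ne_zero k hγ0) ((mul_comm _ _).trans hval)]
  exact hasSum_natShift hγ0 hDK k

/-- A finite word with nonnegative digits has an `α`-value in `ℤ[α]` whose `β`-conjugate is
nonnegative; `c - α` has the negative conjugate `c - β`. -/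
theorem tsum_ne_intCast_sub (h : IsPisotPair a β α) {v : ℕ → ℤ} (hv : ∀ n, 0 ≤ v n) {K : ℕ}
    (hK : ∀ n, K ≤ n → v n = 0) {c : ℤ} (hc : (c : ℝ) < β) :
    ∑' n, (v n : ℝ) * α ^ n ≠ c - α := by
  intro hsum
  set P : ZOmega a := ∑ n ∈ range K, (v n : ZOmega a) * ω ^ n
  have heval : ∀ {γ : ℝ} (hγ : γ ^ 2 = a * γ + 1),
      evalRoot hγ P = ∑ n ∈ range K, (v n : ℝ) * γ ^ n := fun hγ => by
    simp [P, map_sum, evalRoot_omega]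
  have hfin : ∑' n, (v n : ℝ) * α ^ n = ∑ n ∈ range K, (v n : ℝ) * α ^ n :=
    tsum_eq_sum fun n hn => by simp [hK n (by simpa using hn)]
  have hP : P = (c : ZOmega a) - ω := h.conj_injective <| by
    rw [conj, heval, ← hfin, hsum]
    simp [evalRoot_omega]
  have hnonneg : 0 ≤ h.emb P := by
    rw [emb, heval]
    exact sum_nonneg fun n _ => mul_nonneg (by exact_mod_cast hv n) (pow_nonneg h.pos.le n)
  rw [hP, map_sub, map_intCast, h.emb_omega] at hnonneg
  linarith

theorem eq_of_isAlphaAdicExpansion (h : IsPisotPair a β α) {f g : ℤ → ℤ} {y : ℝ}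
    (hf : IsAlphaAdicExpansion a α f y) (hfin : (support f).Finite)
    (hg : IsAlphaAdicExpansion a α g y) : g = f := by
  by_contra hne
  obtain ⟨j, hj, hfg⟩ := exists_ne_forall_lt_eq hf.2.1 hg.2.1 hne
  have hu := hg.isAdmissible.comp_add j
  have hv := hf.isAdmissible.comp_add j
  have heq : ∑' n : ℕ, (f (j + n) : ℝ) * α ^ n = ∑' n : ℕ, (g (j + n) : ℝ) * α ^ n := by
    refine sub_eq_zero.mp ?_
    rw [← (summable_mul_pow_of_mem_Icc h.abs_conj_lt_one hv.mem_Icc).tsum_sub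
      (summable_mul_pow_of_mem_Icc h.abs_conj_lt_one hu.mem_Icc)]
    simpa [sub_mul] using (hasSum_comp_add_sub h.conj_neg.ne hf.2.2.2 hg.2.2.2 hfg).tsum_eq
  obtain ⟨c, hca, hc⟩ : ∃ c : ℤ, c < a ∧ ∑' n : ℕ, (f (j + n) : ℝ) * α ^ n = c - α := by
    rcases lt_or_gt_of_ne hj with hlt | hlt
    · refine ⟨g j, hlt.trans_le (hf.1 j).2, ?_⟩
      simpa using heq.trans (h.tsum_eq_sub_of_lt hu hv (by simpa using hlt) heq.symm)
    · refine ⟨f j, hlt.trans_le (hg.1 j).2, ?_⟩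
      simpa using h.tsum_eq_sub_of_lt hv hu (by simpa using hlt) heq
  obtain ⟨K, hK⟩ := hfin.exists_forall_ge_eq_zero
  refine h.tsum_ne_intCast_sub (fun n => (hv.mem_Icc n).1) (K := (K - j).toNat)
    (fun n hn => hK _ (by omega)) ?_ hc
  have : (c : ℝ) ≤ a - 1 := by
    have : c ≤ (a : ℤ) - 1 := by omega
    exact_mod_cast this
  linarith [h.natCast_lt]

end IsPisotPair

end ZOmega

/-- Let β be the positive root of x² - ax - 1 (a ∈ ℤ_{>0}) and
α = -β⁻¹ its conjugate.  If x = m + nβ ∈ ℤ[β] is positive, then its conjugate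
x' = m + nα has a unique weakly admissible α-adic expansion; this expansion is
finite and coincides digit-by-digit with the (greedy) β-expansion of x, i.e. it
also represents x in base β and satisfies the greedy tail condition. -/
theorem unique_expansion_of_positive (a : ℕ) (ha : 0 < a) (β α : ℝ)
    (hβroot : β ^ 2 = a * β + 1) (hβpos : 0 < β) (hα : α = -β⁻¹)
    (m n : ℤ) (hxpos : 0 < (m : ℝ) + n * β) :
    ∃ f : ℤ → ℤ,
      IsAlphaAdicExpansion a α f ((m : ℝ) + n * α) ∧
      (Function.support f).Finite ∧
      HasSum (fun i : ℤ => (f i : ℝ) * β ^ i) ((m : ℝ) + n * β) ∧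
      (∀ j : ℤ, ∑' i : {i : ℤ // i < j}, (f i : ℝ) * β ^ (i : ℤ) < β ^ j) ∧
      ∀ g : ℤ → ℤ, IsAlphaAdicExpansion a α g ((m : ℝ) + n * α) → g = f := by
  have h : IsPisotPair a β α := ⟨ha, hβroot, hβpos, hα⟩
  have hx : ∀ {γ : ℝ} (hγ : γ ^ 2 = a * γ + 1), evalRoot hγ (⟨m, n⟩ : ZOmega a) = m + n * γ :=
    fun hγ => evalRoot_apply hγ _
  obtain ⟨f, hf, hfin, hsum⟩ :=
    h.exists_finite_expansion (x := ⟨m, n⟩) (by rwa [IsPisotPair.emb, hx])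
  have hfα : IsAlphaAdicExpansion a α f (m + n * α) :=
    hf.isAlphaAdicExpansion hfin (hx h.conj_sq_eq ▸ hsum h.conj_sq_eq)
  exact ⟨f, hfα, hfin, hx h.sq_eq ▸ hsum h.sq_eq, h.tsum_lt hf hfin,
    fun g hg => h.eq_of_isAlphaAdicExpansion hfα hfin hg⟩
end

section
/- Let β be a quadratic Pisot unit, root of x² - ax - 1, a ∈ Z_{>0}, α = -β^{-1}, and let digits z_i ∈ {0,…,a} for i ≥ 1 with z_0 a nonzero integer in {1,…,a}, such that the digit sequence is weakly admissible, i.e. every factor z_{i+1}z_i ≤_lex a0 with respect to d*_β(1) = (a0)^ω. Then Σ_{i≥0} z_i α^i ≠ 0, that is, zero has no nontrivial weakly admissible α-adic expansion with nonzero least significant digit. -/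
/-- Let β be the positive root of x² - ax - 1 (a ∈ ℤ_{>0}) and
α = -β⁻¹.  If (z_i)_{i≥0} is a weakly admissible digit sequence over {0,…,a}
(every digit a is followed on the right by 0) whose least significant digit z₀
is nonzero, then Σ_{i≥0} z_i α^i ≠ 0: zero has no nontrivial weakly admissible
α-adic expansion with nonzero least significant digit. -/
theorem no_nontrivial_expansion_of_zero (a : ℕ) (ha : 0 < a) (β α : ℝ)
    (hβroot : β ^ 2 = a * β + 1) (hβpos : 0 < β) (hα : α = -β⁻¹)
    (z : ℕ → ℤ) (hdig : ∀ i, 0 ≤ z i ∧ z i ≤ a) (h0 : z 0 ≠ 0)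
    (hadm : ∀ i, z (i + 1) = a → z i = 0) :
    ¬ HasSum (fun i : ℕ => (z i : ℝ) * α ^ i) 0 := by
  intro h
  set f : ℕ → ℝ := fun i => (z i : ℝ) * α ^ i with hf_def
  have ha1 : (1:ℝ) ≤ a := by exact_mod_cast ha
  have hβ1 : 1 < β := by nlinarith
  set c : ℝ := β⁻¹ with hc_def
  have hc : 0 < c := by positivity
  have hc1 : c < 1 := by
    rw [hc_def, inv_lt_one_iff₀]; right; exact hβ1
  have hkey : 1 - c ^ 2 = a * c := by
    rw [hc_def]
    field_simp
    nlinarith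
  have hαc : α = -c := by rw [hα, hc_def]
  -- summability of even/odd parts
  have hf : Summable f := h.summable
  have hinje : Function.Injective (fun k : ℕ => 2 * k) := fun m n hm => by dsimp only at hm; omega
  have hinjo : Function.Injective (fun k : ℕ => 2 * k + 1) := fun m n hm => by dsimp only at hm; omega
  have he : HasSum (fun k => f (2 * k)) (∑' k, f (2 * k)) :=
    (hf.comp_injective hinje).hasSum
  have ho : HasSum (fun k => f (2 * k + 1)) (∑' k, f (2 * k + 1)) :=
    (hf.comp_injective hinjo).hasSum
  set E : ℝ := ∑' k, f (2 * k)
  set O : ℝ := ∑' k, f (2 * k + 1)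
  have htot : E + O = 0 := (he.even_add_odd ho).unique h
  -- rewrite even part
  have heven : (fun k : ℕ => f (2 * k)) = fun k => (z (2 * k) : ℝ) * c ^ (2 * k) := by
    funext k
    simp only [hf_def, hαc]
    rw [Even.neg_pow ⟨k, by ring⟩]
  rw [heven] at he
  -- rewrite odd part
  have hodd : (fun k : ℕ => f (2 * k + 1)) =
      fun k => -((z (2 * k + 1) : ℝ) * c ^ (2 * k + 1)) := by
    funext k
    simp only [hf_def, hαc]
    rw [Odd.neg_pow ⟨k, by ring⟩]
    ring
  rw [hodd] at ho
  have ho' : HasSum (fun k => (z (2 * k + 1) : ℝ) * c ^ (2 * k + 1)) (-O) := by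
    have := ho.neg
    simpa using this
  -- lower bound for E
  have hz0 : (1:ℝ) ≤ z 0 := by
    have := (hdig 0).1
    have : 1 ≤ z 0 := lt_of_le_of_ne this (Ne.symm h0)
    exact_mod_cast this
  have hE : (1:ℝ) ≤ E := by
    have hle : (z (2 * 0) : ℝ) * c ^ (2 * 0) ≤ E := by
      refine le_hasSum he 0 fun j _ => ?_
      have := (hdig (2 * j)).1
      positivity
    simpa using le_trans hz0 (by simpa using hle)
  -- geometric bound series
  have hc2 : c ^ 2 < 1 := by nlinarith
  have hgeo : HasSum (fun k : ℕ => (c ^ 2) ^ k) (1 - c ^ 2)⁻¹ :=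
    hasSum_geometric_of_lt_one (by positivity) hc2
  have hA : HasSum (fun k : ℕ => (a : ℝ) * c ^ (2 * k + 1)) 1 := by
    have h1 := hgeo.mul_left ((a : ℝ) * c)
    have heq : (fun k : ℕ => (a : ℝ) * c * (c ^ 2) ^ k) =
        fun k : ℕ => (a : ℝ) * c ^ (2 * k + 1) := by
      funext k
      rw [← pow_mul]
      ring
    rw [heq] at h1
    have hval : (a : ℝ) * c * (1 - c ^ 2)⁻¹ = 1 := by
      rw [hkey]
      field_simp
    rwa [hval] at h1
  have hind : HasSum (fun k : ℕ => if k = 0 then c else 0) c := hasSum_ite_eq 0 c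
  have hg : HasSum (fun k : ℕ => (a : ℝ) * c ^ (2 * k + 1) - (if k = 0 then c else 0))
      (1 - c) := hA.sub hind
  -- pointwise comparison
  have hz1 : (z 1 : ℝ) ≤ (a : ℝ) - 1 := by
    have h1 : z 1 ≤ a := (hdig 1).2
    have h2 : z 1 ≠ a := fun hc' => h0 (hadm 0 hc')
    have : z 1 ≤ (a : ℤ) - 1 := by omega
    exact_mod_cast this
  have hOle : -O ≤ 1 - c := by
    refine hasSum_le (fun k => ?_) ho' hg
    rcases Nat.eq_zero_or_pos k with rfl | hk
    · simp only [if_pos rfl]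
      have : (z 1 : ℝ) * c ^ 1 ≤ ((a : ℝ) - 1) * c ^ 1 :=
        mul_le_mul_of_nonneg_right hz1 (by positivity)
      calc (z (2 * 0 + 1) : ℝ) * c ^ (2 * 0 + 1) ≤ ((a : ℝ) - 1) * c ^ 1 := by simpa using this
        _ = (a : ℝ) * c ^ (2 * 0 + 1) - c := by ring_nf
    · have hkne : k ≠ 0 := by omega
      simp only [if_neg hkne, sub_zero]
      have : (z (2 * k + 1) : ℝ) ≤ a := by exact_mod_cast (hdig (2 * k + 1)).2
      exact mul_le_mul_of_nonneg_right this (by positivity)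
  -- contradiction
  have : E = -O := by linarith
  linarith
end

section
/- Let β be a quadratic Pisot unit, root of x² - ax - 1, and α = -β^{-1}. If x ∈ Z[β] with x < 0, then x' (the Galois conjugate in Q(α)) has exactly two weakly admissible α-adic expansions; both are eventually periodic to the left with period word a0 (i.e., of the form ^ω(a0)u•v for finite digit words u, v over {0,…,a}). -/
/-!
Write `x = m + nβ` and `y = x' = m + nα`. For an expansion `f` of `y` with digits vanishing below
`k`, the remainder `r_N = α^{-N} (y - ∑_{k ≤ i < N} f_i α^i)` is the value of the tail of `f` from
`N`, hence lies in `[-1, β]` (the extreme values are those of `(0a)^ω` and `(a0)^ω`), and together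
with `s_N = β^{-N} (x - ∑_{k ≤ i < N} f_i β^i)` it is the image of one element of `ℤ[β]` under the
two embeddings. As `x < 0` and a finite admissible word has `β`-value below `β^N`, eventually
`-1 - β⁻¹ < s_N < 0`, and the only such lattice points are `(r_N, s_N) = (-1, -1)` and `(β, α)`;
two consecutive remainders `β` are impossible. So some `r_N = s_N = -1`: from `N` on `f` is
`(0a)^ω`, and its digits below `N` form an admissible `β`-expansion of `x + β^N`, which they
determine. Such a cut can be moved from `N` to `N + 2`, so two expansions whose cuts have the same
parity coincide, and there are at most two. A greedy algorithm gives one expansion, and a local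
rewrite of its digits next to its first cut, based on `α² = aα + 1`, gives a second one.
-/

open Finset

structure IsPisotConjugate (a : ℕ) (β α : ℝ) : Prop where
  a_pos : 0 < a
  beta_sq : β ^ 2 = a * β + 1
  beta_pos : 0 < β
  alpha_eq : α = -β⁻¹

namespace IsPisotConjugate

variable {a : ℕ} {β α : ℝ}

theorem beta_ne_zero (h : IsPisotConjugate a β α) : β ≠ 0 := h.beta_pos.ne'

theorem one_lt_beta (h : IsPisotConjugate a β α) : 1 < β := by
  have ha : (1 : ℝ) ≤ a := by exact_mod_cast h.a_pos
  nlinarith [h.beta_sq, h.beta_pos]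

theorem alpha_mul_beta (h : IsPisotConjugate a β α) : α * β = -1 := by
  rw [h.alpha_eq, neg_mul, inv_mul_cancel₀ h.beta_ne_zero]

theorem alpha_add_beta (h : IsPisotConjugate a β α) : α + β = a := by
  have hinv : β * β⁻¹ = 1 := mul_inv_cancel₀ h.beta_ne_zero
  rw [h.alpha_eq]
  linear_combination β⁻¹ * h.beta_sq - (β - a) * hinv

theorem alpha_sq (h : IsPisotConjugate a β α) : α ^ 2 = a * α + 1 := by
  linear_combination α * h.alpha_add_beta - h.alpha_mul_beta

theorem alpha_neg (h : IsPisotConjugate a β α) : α < 0 := by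
  rw [h.alpha_eq, neg_lt_zero, inv_pos]
  exact h.beta_pos

theorem neg_one_lt_alpha (h : IsPisotConjugate a β α) : -1 < α := by
  rw [h.alpha_eq, neg_lt_neg_iff]
  exact inv_lt_one_of_one_lt₀ h.one_lt_beta

theorem alpha_ne_zero (h : IsPisotConjugate a β α) : α ≠ 0 := h.alpha_neg.ne

theorem inv_alpha (h : IsPisotConjugate a β α) : α⁻¹ = -β := by
  rw [h.alpha_eq, inv_neg, inv_inv]

theorem a_lt_beta (h : IsPisotConjugate a β α) : (a : ℝ) < β := by
  linarith [h.alpha_add_beta, h.alpha_neg]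

theorem abs_alpha_lt_one (h : IsPisotConjugate a β α) : |α| < 1 :=
  abs_lt.2 ⟨h.neg_one_lt_alpha, h.alpha_neg.trans one_pos⟩

end IsPisotConjugate

section Root

variable {a : ℕ} {γ : ℝ}

theorem ne_zero_of_sq_eq (hγ : γ ^ 2 = a * γ + 1) : γ ≠ 0 := by
  rintro rfl
  norm_num at hγ

theorem inv_eq_sub_of_sq_eq (hγ : γ ^ 2 = a * γ + 1) : γ⁻¹ = γ - a := by
  have := ne_zero_of_sq_eq hγ
  field_simp
  linear_combination -hγ

theorem zpow_add_two_of_sq_eq (hγ : γ ^ 2 = a * γ + 1) (N : ℤ) :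
    γ ^ (N + 2) = γ ^ N + a * γ ^ (N + 1) := by
  have hγ0 := ne_zero_of_sq_eq hγ
  rw [zpow_add₀ hγ0, zpow_add_one₀ hγ0, zpow_two]
  linear_combination γ ^ N * hγ

end Root

def altWord (a : ℕ) (N i : ℤ) : ℤ := if (i - N) % 2 = 0 then 0 else a

def EndsWithAlt (a : ℕ) (f : ℤ → ℤ) (N : ℤ) : Prop := ∀ i, N ≤ i → f i = altWord a N i

theorem altWord_add_nat (a : ℕ) (N : ℤ) (j : ℕ) :
    altWord a N (N + j) = if Even j then 0 else (a : ℤ) := by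
  simp [altWord, even_iff_two_dvd]
  norm_cast

theorem EndsWithAlt.add_two {a : ℕ} {f : ℤ → ℤ} {N : ℤ} (hN : EndsWithAlt a f N) :
    EndsWithAlt a f (N + 2) := by
  intro i hi
  rw [hN i (by omega)]
  simp only [altWord, show (i - (N + 2)) % 2 = (i - N) % 2 by omega]

theorem EndsWithAlt.sub_two {a : ℕ} {f : ℤ → ℤ} {N : ℤ} (hN : EndsWithAlt a f N)
    (h₁ : f (N - 1) = a) (h₂ : f (N - 2) = 0) : EndsWithAlt a f (N - 2) := by
  intro i hi
  rcases (by omega : i = N - 2 ∨ i = N - 1 ∨ N ≤ i) with rfl | rfl | hi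
  · simp [altWord, h₂]
  · simp [altWord, h₁]
  · rw [hN i hi]
    simp only [altWord, show (i - (N - 2)) % 2 = (i - N) % 2 by omega]

section AltWord

variable {a : ℕ} {β α : ℝ}

theorem hasSum_altWord (h : IsPisotConjugate a β α) (N : ℤ) :
    HasSum (fun j : ℕ => (altWord a N (N + j) : ℝ) * α ^ j) (-1) := by
  have hα := h.abs_alpha_lt_one
  have hgeom := ((hasSum_geometric_of_abs_lt_one hα).sub
    (hasSum_geometric_of_abs_lt_one (abs_neg α ▸ hα))).mul_left ((a : ℝ) / 2)
  have hterm : (fun j : ℕ => (altWord a N (N + j) : ℝ) * α ^ j) =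
      fun j : ℕ => (a : ℝ) / 2 * (α ^ j - (-α) ^ j) := by
    funext j
    rcases Nat.even_or_odd j with hj | hj
    · simp [altWord_add_nat, hj, hj.neg_pow]
    · simp [altWord_add_nat, Nat.not_even_iff_odd.2 hj, hj.neg_pow]
      ring
  have hsum : (a : ℝ) / 2 * ((1 - α)⁻¹ - (1 - -α)⁻¹) = -1 := by
    have h1 : 1 - α ≠ 0 := by linarith [h.alpha_neg]
    have h2 : 1 - -α ≠ 0 := by linarith [h.neg_one_lt_alpha]
    field_simp
    linear_combination -2 * h.alpha_sq
  rw [hterm, ← hsum]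
  exact hgeom

theorem altWord_mul_pow_lt (h : IsPisotConjugate a β α) {d : ℤ} (hd : 0 ≤ d ∧ d ≤ a) (N : ℤ)
    (j : ℕ) (hne : d ≠ altWord a N (N + j)) :
    (altWord a N (N + j) : ℝ) * α ^ j < d * α ^ j := by
  rw [altWord_add_nat] at hne ⊢
  rcases Nat.even_or_odd j with hj | hj
  · have hd0 : (0 : ℝ) < d := by
      have : 0 < d := lt_of_le_of_ne hd.1 (by simpa [hj] using hne.symm)
      exact_mod_cast this
    simpa [hj] using mul_pos hd0 (hj.pow_pos h.alpha_ne_zero)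
  · have hda : (d : ℝ) < a := by
      have : d < a := lt_of_le_of_ne hd.2 (by simpa [Nat.not_even_iff_odd.2 hj] using hne)
      exact_mod_cast this
    simpa [Nat.not_even_iff_odd.2 hj] using mul_lt_mul_of_neg_right hda (hj.pow_neg h.alpha_neg)

theorem altWord_mul_pow_le (h : IsPisotConjugate a β α) {d : ℤ} (hd : 0 ≤ d ∧ d ≤ a) (N : ℤ)
    (j : ℕ) : (altWord a N (N + j) : ℝ) * α ^ j ≤ d * α ^ j := by
  by_cases hne : d = altWord a N (N + j)
  · rw [hne]
  · exact (altWord_mul_pow_lt h hd N j hne).le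

theorem neg_one_le_of_hasSum (h : IsPisotConjugate a β α) {f : ℤ → ℤ}
    (hf : ∀ i, 0 ≤ f i ∧ f i ≤ a) {N : ℤ} {r : ℝ}
    (hr : HasSum (fun j : ℕ => (f (N + j) : ℝ) * α ^ j) r) : -1 ≤ r :=
  hasSum_le (fun j => altWord_mul_pow_le h (hf _) N j) (hasSum_altWord h N) hr

theorem le_beta_of_hasSum (h : IsPisotConjugate a β α) {f : ℤ → ℤ}
    (hf : ∀ i, 0 ≤ f i ∧ f i ≤ a) {N : ℤ} {r : ℝ}
    (hr : HasSum (fun j : ℕ => (f (N + j) : ℝ) * α ^ j) r) : r ≤ β := by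
  have hα := h.abs_alpha_lt_one
  -- the complementary digits `a - f i` obey the lower bound
  have hc := ((hasSum_geometric_of_abs_lt_one hα).mul_left (a : ℝ)).sub hr
  have hle := neg_one_le_of_hasSum h (f := fun i => a - f i)
    (fun i => ⟨by linarith [(hf i).2], by linarith [(hf i).1]⟩) (N := N)
    (by simpa [sub_mul] using hc)
  have h1 : 1 - α ≠ 0 := by linarith [h.alpha_neg]
  have hβ : (a : ℝ) * (1 - α)⁻¹ + 1 = β := by
    field_simp
    linear_combination -h.alpha_add_beta + h.alpha_mul_beta
  linarith

theorem endsWithAlt_of_hasSum_neg_one (h : IsPisotConjugate a β α) {f : ℤ → ℤ}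
    (hf : ∀ i, 0 ≤ f i ∧ f i ≤ a) {N : ℤ}
    (hr : HasSum (fun j : ℕ => (f (N + j) : ℝ) * α ^ j) (-1)) : EndsWithAlt a f N := by
  intro i hi
  obtain ⟨j, rfl⟩ : ∃ j : ℕ, i = N + j := ⟨(i - N).toNat, by omega⟩
  by_contra hne
  exact (hasSum_lt (fun l : ℕ => altWord_mul_pow_le h (hf (N + l)) N l)
    (altWord_mul_pow_lt h (hf _) N j hne) (hasSum_altWord h N) hr).false

end AltWord

theorem hasSum_int_iff_hasSum_nat_add {F : ℤ → ℝ} {k : ℤ} (hF : ∀ i < k, F i = 0) {y : ℝ} :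
    HasSum F y ↔ HasSum (fun j : ℕ => F (k + j)) y := by
  refine (Function.Injective.hasSum_iff (fun i j hij => by simpa using hij)
    fun i hi => hF i ?_).symm
  by_contra hik
  exact hi ⟨(i - k).toNat, by simp only; omega⟩

theorem hasSum_int_iff_hasSum_tail {F : ℤ → ℝ} {k N : ℤ} (hF : ∀ i < k, F i = 0) (hkN : k ≤ N)
    {y : ℝ} : HasSum F y ↔ HasSum (fun j : ℕ => F (N + j)) (y - ∑ i ∈ Ico k N, F i) := by
  induction N, hkN using Int.leInduction with
  | base => simpa using hasSum_int_iff_hasSum_nat_add hF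
  | succ N hkN ih =>
    rw [ih, ← hasSum_nat_add_iff' 1, ← sum_Ico_add_eq_sum_Ico_add_one hkN]
    simp only [Nat.cast_add, Nat.cast_one, range_one, sum_singleton, Nat.cast_zero, add_zero]
    ring_nf

theorem sum_Ico_eq_sum_Ico_of_eq_zero {F : ℤ → ℝ} {K k N : ℤ} (hKk : K ≤ k)
    (hF : ∀ i < k, F i = 0) : ∑ i ∈ Ico K N, F i = ∑ i ∈ Ico k N, F i := by
  refine (sum_subset (Ico_subset_Ico_left hKk) fun i hi hik => hF i ?_).symm
  simp only [mem_Ico, not_and, not_lt] at hi hik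
  by_contra h
  exact absurd (hik (by omega)) (by omega)

theorem sum_Ico_add_sum_Ico {F : ℤ → ℝ} {k L N : ℤ} (hkL : k ≤ L) (hLN : L ≤ N) :
    ∑ i ∈ Ico k L, F i + ∑ i ∈ Ico L N, F i = ∑ i ∈ Ico k N, F i := by
  rw [← sum_union (Ico_disjoint_Ico_consecutive k L N), Ico_union_Ico_eq_Ico hkL hLN]

theorem sum_Ico_add_two {F : ℤ → ℝ} {k N : ℤ} (hkN : k ≤ N) :
    ∑ i ∈ Ico k (N + 2), F i = ∑ i ∈ Ico k N, F i + F N + F (N + 1) := by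
  rw [show N + 2 = N + 1 + 1 by ring, ← sum_Ico_add_eq_sum_Ico_add_one (by omega),
    ← sum_Ico_add_eq_sum_Ico_add_one hkN]

section Remainder

variable {a : ℕ} {β α : ℝ}

theorem hasSum_of_endsWithAlt (h : IsPisotConjugate a β α) {g : ℤ → ℤ} {k M : ℤ}
    (hk : ∀ i < k, g i = 0) (hkM : k ≤ M) (hM : EndsWithAlt a g M) :
    HasSum (fun i => (g i : ℝ) * α ^ i) (∑ i ∈ Ico k M, (g i : ℝ) * α ^ i - α ^ M) := by
  rw [hasSum_int_iff_hasSum_tail (fun i hi => by simp [hk i hi]) hkM, sub_sub_cancel_left,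
    ← mul_neg_one]
  refine ((hasSum_altWord h M).mul_left (α ^ M)).congr_fun fun j => ?_
  rw [hM _ (by omega), zpow_add₀ h.alpha_ne_zero, zpow_natCast]
  ring

noncomputable def remainder (γ x : ℝ) (d : ℤ → ℤ) (k N : ℤ) : ℝ :=
  γ ^ (-N) * (x - ∑ i ∈ Ico k N, (d i : ℝ) * γ ^ i)

theorem remainder_add_one {γ x : ℝ} (hγ : γ ≠ 0) (d : ℤ → ℤ) {k N : ℤ} (hkN : k ≤ N) :
    remainder γ x d k (N + 1) = γ⁻¹ * (remainder γ x d k N - d N) := by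
  have hN : γ ^ (-N) * γ ^ N = 1 := by rw [← zpow_add₀ hγ, neg_add_cancel, zpow_zero]
  rw [remainder, remainder, ← sum_Ico_add_eq_sum_Ico_add_one hkN, neg_add, zpow_add₀ hγ,
    zpow_neg_one]
  linear_combination (-(γ⁻¹ * d N)) * hN

theorem hasSum_remainder (h : IsPisotConjugate a β α) {f : ℤ → ℤ} {y : ℝ} {k N : ℤ}
    (hf : HasSum (fun i => (f i : ℝ) * α ^ i) y) (hk : ∀ i < k, f i = 0) (hkN : k ≤ N) :
    HasSum (fun j : ℕ => (f (N + j) : ℝ) * α ^ j) (remainder α y f k N) := by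
  have hN : α ^ (-N) * α ^ N = 1 := by
    rw [← zpow_add₀ h.alpha_ne_zero, neg_add_cancel, zpow_zero]
  refine (((hasSum_int_iff_hasSum_tail (fun i hi => by simp [hk i hi]) hkN).1 hf).mul_left
    (α ^ (-N))).congr_fun fun j => ?_
  rw [zpow_add₀ h.alpha_ne_zero, zpow_natCast]
  linear_combination (-(f (N + j) * α ^ j : ℝ)) * hN

end Remainder

/-- `r` and `s` are the images of one element `P + Qθ` of `ℤ[θ]` under `θ ↦ α` and `θ ↦ β`. -/
def IsIntConj (α β r s : ℝ) : Prop := ∃ P Q : ℤ, r = P + Q * α ∧ s = P + Q * β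

namespace IsIntConj

variable {a : ℕ} {α β r s : ℝ}

theorem sub_intCast (hc : IsIntConj α β r s) (d : ℤ) : IsIntConj α β (r - d) (s - d) := by
  obtain ⟨P, Q, rfl, rfl⟩ := hc
  exact ⟨P - d, Q, by push_cast; ring, by push_cast; ring⟩

theorem mul (hα : α ^ 2 = a * α + 1) (hβ : β ^ 2 = a * β + 1) (hc : IsIntConj α β r s) :
    IsIntConj α β (α * r) (β * s) := by
  obtain ⟨P, Q, rfl, rfl⟩ := hc
  exact ⟨Q, P + a * Q, by push_cast; linear_combination Q * hα,
    by push_cast; linear_combination Q * hβ⟩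

theorem inv_mul (hα : α ^ 2 = a * α + 1) (hβ : β ^ 2 = a * β + 1) (hc : IsIntConj α β r s) :
    IsIntConj α β (α⁻¹ * r) (β⁻¹ * s) := by
  obtain ⟨P, Q, rfl, rfl⟩ := hc
  refine ⟨Q - a * P, P, ?_, ?_⟩
  · rw [inv_eq_sub_of_sq_eq hα]; push_cast; linear_combination Q * hα
  · rw [inv_eq_sub_of_sq_eq hβ]; push_cast; linear_combination Q * hβ

theorem zpow_mul (hα : α ^ 2 = a * α + 1) (hβ : β ^ 2 = a * β + 1) (hc : IsIntConj α β r s)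
    (j : ℤ) : IsIntConj α β (α ^ j * r) (β ^ j * s) := by
  have hα0 := ne_zero_of_sq_eq hα
  have hβ0 := ne_zero_of_sq_eq hβ
  induction j using Int.induction_on with
  | zero => simpa using hc
  | succ j ih =>
    simpa [zpow_add_one₀ hα0, zpow_add_one₀ hβ0, mul_comm, mul_assoc, mul_left_comm]
      using ih.mul hα hβ
  | pred j ih =>
    simpa [zpow_sub_one₀ hα0, zpow_sub_one₀ hβ0, mul_comm, mul_assoc, mul_left_comm]
      using ih.inv_mul hα hβ

end IsIntConj

theorem isIntConj_remainder {a : ℕ} {α β : ℝ} (hα : α ^ 2 = a * α + 1) (hβ : β ^ 2 = a * β + 1)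
    (m n : ℤ) (d : ℤ → ℤ) {k N : ℤ} (hkN : k ≤ N) :
    IsIntConj α β (remainder α (m + n * α) d k N) (remainder β (m + n * β) d k N) := by
  have hα0 := ne_zero_of_sq_eq hα
  have hβ0 := ne_zero_of_sq_eq hβ
  induction N, hkN using Int.leInduction with
  | base => simpa [remainder] using IsIntConj.zpow_mul hα hβ ⟨m, n, rfl, rfl⟩ (-k)
  | succ N hkN ih =>
    rw [remainder_add_one hα0 d hkN, remainder_add_one hβ0 d hkN]
    exact (ih.sub_intCast (d N)).inv_mul hα hβ

section BetaWords

variable {a : ℕ} {β α : ℝ}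

theorem sum_Ico_mul_zpow_nonneg (h : IsPisotConjugate a β α) {w : ℤ → ℤ} (hw : ∀ i, 0 ≤ w i)
    (K t : ℤ) : 0 ≤ ∑ i ∈ Ico K t, (w i : ℝ) * β ^ i :=
  sum_nonneg fun i _ => mul_nonneg (by exact_mod_cast hw i) (zpow_pos h.beta_pos i).le

theorem sum_Ico_mul_zpow_lt (h : IsPisotConjugate a β α) {w : ℤ → ℤ}
    (hw : ∀ i, 0 ≤ w i ∧ w i ≤ a) (hadm : ∀ i, w (i + 1) = a → w i = 0) (K t : ℤ) :
    ∑ i ∈ Ico K t, (w i : ℝ) * β ^ i < β ^ t := by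
  rcases lt_or_ge t K with htK | hKt
  · rw [Ico_eq_empty_of_le htK.le, sum_empty]
    exact zpow_pos h.beta_pos t
  have hstep : ∀ u : ℤ, (a : ℝ) * β ^ u < β ^ (u + 1) := fun u => by
    rw [zpow_add_one₀ h.beta_ne_zero]
    exact mul_lt_mul_of_pos_right h.a_lt_beta (zpow_pos h.beta_pos u) |>.trans_eq (mul_comm _ _)
  have hdig : ∀ u, (w u : ℝ) ≤ a := fun u => by exact_mod_cast (hw u).2
  -- a digit `a` is preceded by `0`, so the induction has to look at two consecutive prefixes
  have key : ∀ u, K ≤ u → ∑ i ∈ Ico K u, (w i : ℝ) * β ^ i < β ^ u ∧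
      ∑ i ∈ Ico K (u + 1), (w i : ℝ) * β ^ i < β ^ (u + 1) := by
    intro u hKu
    induction u, hKu using Int.leInduction with
    | base =>
      rw [← sum_Ico_add_eq_sum_Ico_add_one le_rfl, Ico_self, sum_empty, zero_add]
      exact ⟨zpow_pos h.beta_pos K, (mul_le_mul_of_nonneg_right (hdig K)
        (zpow_pos h.beta_pos K).le).trans_lt (hstep K)⟩
    | succ u hKu ih =>
      refine ⟨ih.2, ?_⟩
      rw [← sum_Ico_add_eq_sum_Ico_add_one (by omega), add_assoc, one_add_one_eq_two,
        zpow_add_two_of_sq_eq h.beta_sq]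
      by_cases hwa : w (u + 1) = a
      · rw [← sum_Ico_add_eq_sum_Ico_add_one hKu, hadm u hwa, hwa]
        push_cast
        linarith [ih.1]
      · have : (w (u + 1) : ℝ) ≤ a - 1 := by
          have := (hw (u + 1)).2
          have : w (u + 1) ≤ (a : ℤ) - 1 := by omega
          exact_mod_cast this
        nlinarith [ih.2, zpow_pos h.beta_pos (u + 1), zpow_pos h.beta_pos u]
  exact (key t hKt).1

theorem le_of_sum_Ico_add_le (h : IsPisotConjugate a β α) {f g : ℤ → ℤ} (hf : ∀ i, 0 ≤ f i)
    (hg : ∀ i, 0 ≤ g i ∧ g i ≤ a) (hgadm : ∀ i, g (i + 1) = a → g i = 0) {K N : ℤ}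
    (hle : ∑ i ∈ Ico K N, (f i : ℝ) * β ^ i + f N * β ^ N ≤
      ∑ i ∈ Ico K N, (g i : ℝ) * β ^ i + g N * β ^ N) : f N ≤ g N := by
  by_contra! hlt
  have h1 : (g N : ℝ) + 1 ≤ f N := by exact_mod_cast (by omega : g N + 1 ≤ f N)
  nlinarith [sum_Ico_mul_zpow_lt h hg hgadm K N, sum_Ico_mul_zpow_nonneg h hf K N,
    zpow_pos h.beta_pos N]

theorem eq_of_sum_Ico_eq (h : IsPisotConjugate a β α) {f g : ℤ → ℤ}
    (hf : ∀ i, 0 ≤ f i ∧ f i ≤ a) (hfadm : ∀ i, f (i + 1) = a → f i = 0)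
    (hg : ∀ i, 0 ≤ g i ∧ g i ≤ a) (hgadm : ∀ i, g (i + 1) = a → g i = 0) {K N : ℤ}
    (hKN : K ≤ N) (hs : ∑ i ∈ Ico K N, (f i : ℝ) * β ^ i = ∑ i ∈ Ico K N, (g i : ℝ) * β ^ i) :
    ∀ i, K ≤ i → i < N → f i = g i := by
  induction N, hKN using Int.leInduction with
  | base => intro i _ _; omega
  | succ N hKN ih =>
    rw [← sum_Ico_add_eq_sum_Ico_add_one hKN, ← sum_Ico_add_eq_sum_Ico_add_one hKN] at hs
    have hN : f N = g N := le_antisymm (le_of_sum_Ico_add_le h (fun i => (hf i).1) hg hgadm hs.le)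
      (le_of_sum_Ico_add_le h (fun i => (hg i).1) hf hfadm hs.ge)
    rw [hN, add_left_inj] at hs
    intro i hKi hiN
    rcases (by omega : i < N ∨ i = N) with hi | rfl
    · exact ih hs i hKi hi
    · exact hN

end BetaWords

section Cut

variable {a : ℕ} {β α : ℝ}

/-- The tail `(0a)^ω` from `N` has `α`-value `-α^N`, so for an expansion of `x'` the finite part
has `α`-value `x' + α^N`; a cut asks for the conjugate identity. -/
def IsCut (a : ℕ) (β x : ℝ) (f : ℤ → ℤ) (N : ℤ) : Prop :=
  EndsWithAlt a f N ∧ ∃ k ≤ N, (∀ i < k, f i = 0) ∧ ∑ i ∈ Ico k N, (f i : ℝ) * β ^ i = x + β ^ N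

theorem IsCut.add_two (h : IsPisotConjugate a β α) {x : ℝ} {f : ℤ → ℤ} {N : ℤ}
    (hc : IsCut a β x f N) : IsCut a β x f (N + 2) := by
  obtain ⟨hN, k, hkN, hk, hs⟩ := hc
  refine ⟨hN.add_two, k, by omega, hk, ?_⟩
  rw [sum_Ico_add_two hkN, hs, hN N le_rfl, hN (N + 1) (by omega),
    zpow_add_two_of_sq_eq h.beta_sq]
  simp [altWord]
  ring

theorem IsCut.eq (h : IsPisotConjugate a β α) {x : ℝ} {f g : ℤ → ℤ} {N : ℤ}
    (hf : ∀ i, 0 ≤ f i ∧ f i ≤ a) (hfadm : ∀ i, f (i + 1) = a → f i = 0)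
    (hg : ∀ i, 0 ≤ g i ∧ g i ≤ a) (hgadm : ∀ i, g (i + 1) = a → g i = 0)
    (hcf : IsCut a β x f N) (hcg : IsCut a β x g N) : f = g := by
  obtain ⟨hfN, kf, hkf, hfk, hfs⟩ := hcf
  obtain ⟨hgN, kg, hkg, hgk, hgs⟩ := hcg
  have hs : ∑ i ∈ Ico (min kf kg) N, (f i : ℝ) * β ^ i =
      ∑ i ∈ Ico (min kf kg) N, (g i : ℝ) * β ^ i := by
    rw [sum_Ico_eq_sum_Ico_of_eq_zero (min_le_left kf kg) fun i hi => by simp [hfk i hi], hfs,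
      sum_Ico_eq_sum_Ico_of_eq_zero (min_le_right kf kg) fun i hi => by simp [hgk i hi], hgs]
  funext i
  rcases (by omega : i < min kf kg ∨ (min kf kg ≤ i ∧ i < N) ∨ N ≤ i) with hi | ⟨hKi, hiN⟩ | hi
  · rw [hfk i (by omega), hgk i (by omega)]
  · exact eq_of_sum_Ico_eq h hf hfadm hg hgadm (by omega) hs i hKi hiN
  · rw [hfN i hi, hgN i hi]

theorem IsCut.eq_of_emod_two_eq (h : IsPisotConjugate a β α) {x : ℝ} {f g : ℤ → ℤ} {M N : ℤ}
    (hf : ∀ i, 0 ≤ f i ∧ f i ≤ a) (hfadm : ∀ i, f (i + 1) = a → f i = 0)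
    (hg : ∀ i, 0 ≤ g i ∧ g i ≤ a) (hgadm : ∀ i, g (i + 1) = a → g i = 0)
    (hcf : IsCut a β x f M) (hcg : IsCut a β x g N) (hMN : M % 2 = N % 2) : f = g := by
  have hcut : ∀ {f M}, IsCut a β x f M → ∀ j : ℕ, IsCut a β x f (M + 2 * j) := by
    intro f M hc j
    induction j with
    | zero => simpa using hc
    | succ j ih => simpa [mul_add, add_assoc] using ih.add_two h
  have hfM := hcut hcf ((max M N - M) / 2).toNat
  have hgN := hcut hcg ((max M N - N) / 2).toNat
  rw [show M + 2 * (((max M N - M) / 2).toNat : ℤ) = max M N by omega] at hfM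
  rw [show N + 2 * (((max M N - N) / 2).toNat : ℤ) = max M N by omega] at hgN
  exact hfM.eq h hf hfadm hg hgadm hgN

theorem IsIntConj.eq_neg_one_or_eq (h : IsPisotConjugate a β α) {r s : ℝ}
    (hc : IsIntConj α β r s) (hr : -1 ≤ r) (hr' : r ≤ β) (hs : -1 - β⁻¹ < s) (hs' : s < 0) :
    (r = -1 ∧ s = -1) ∨ (r = β ∧ s = α) := by
  obtain ⟨P, Q, rfl, rfl⟩ := hc
  have hD : (P + Q * β) - (P + Q * α) = Q * (β + β⁻¹) := by rw [h.alpha_eq]; ring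
  have hD1 : 1 < β + β⁻¹ := by linarith [h.one_lt_beta, inv_pos.2 h.beta_pos]
  have hQ : Q = 0 ∨ Q = -1 := by
    have hQ1 : Q < 1 := by
      by_contra! hQ
      have : (1 : ℝ) ≤ Q := by exact_mod_cast hQ
      nlinarith
    have hQ2 : -2 < Q := by
      by_contra! hQ
      have : (Q : ℝ) ≤ -2 := by exact_mod_cast hQ
      nlinarith
    omega
  have hβα : β - β⁻¹ = a := by rw [← h.alpha_add_beta, h.alpha_eq]; ring
  rcases hQ with rfl | rfl
  · have hP : P = -1 := by
      have h1 : (-1 : ℝ) ≤ P := by simpa using hr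
      have h2 : (P : ℝ) < 0 := by simpa using hs'
      have : -1 ≤ P := by exact_mod_cast h1
      have : P < 0 := by exact_mod_cast h2
      omega
    left
    simp [hP]
  · have hP : P = a := by
      have h1 : (P : ℝ) ≤ a := by push_cast at hr'; linarith [h.alpha_add_beta]
      have h2 : (a : ℝ) - 1 < P := by push_cast at hs; linarith
      have : P ≤ a := by exact_mod_cast h1
      have : (a : ℤ) - 1 < P := by exact_mod_cast h2
      omega
    right
    subst hP
    push_cast
    constructor <;> linarith [h.alpha_add_beta]

theorem remainder_beta_neg (h : IsPisotConjugate a β α) {x : ℝ} (hx : x < 0) {f : ℤ → ℤ}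
    (hf : ∀ i, 0 ≤ f i) (k N : ℤ) : remainder β x f k N < 0 :=
  mul_neg_of_pos_of_neg (zpow_pos h.beta_pos _) (by linarith [sum_Ico_mul_zpow_nonneg h hf k N])

theorem zpow_neg_mul_sub_one_lt_remainder (h : IsPisotConjugate a β α) (x : ℝ) {f : ℤ → ℤ}
    (hf : ∀ i, 0 ≤ f i ∧ f i ≤ a) (hadm : ∀ i, f (i + 1) = a → f i = 0) (k N : ℤ) :
    β ^ (-N) * x - 1 < remainder β x f k N := by
  have hN : β ^ (-N) * β ^ N = 1 := by
    rw [← zpow_add₀ h.beta_ne_zero, neg_add_cancel, zpow_zero]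
  have := mul_lt_mul_of_pos_left (sum_Ico_mul_zpow_lt h hf hadm k N) (zpow_pos h.beta_pos (-N))
  rw [remainder, mul_sub]
  linarith

theorem exists_forall_neg_inv_lt_zpow_neg_mul (h : IsPisotConjugate a β α) (x : ℝ) :
    ∃ N₀ : ℤ, ∀ N, N₀ ≤ N → -β⁻¹ < β ^ (-N) * x := by
  obtain ⟨t, ht⟩ := pow_unbounded_of_one_lt (-x) h.one_lt_beta
  refine ⟨t + 1, fun N hN => ?_⟩
  have h1 : -x < β ^ (N - 1) := ht.trans_le <| by
    rw [← zpow_natCast]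
    exact zpow_le_zpow_right₀ h.one_lt_beta.le (by omega)
  have h2 : β ^ (-N) * β ^ (N - 1) = β⁻¹ := by
    rw [← zpow_add₀ h.beta_ne_zero, show -N + (N - 1) = -1 by ring, zpow_neg_one]
  nlinarith [zpow_pos h.beta_pos (-N)]

theorem IsAlphaAdicExpansion.exists_remainder_eq_neg_one (h : IsPisotConjugate a β α)
    {m n : ℤ} (hx : (m : ℝ) + n * β < 0) {f : ℤ → ℤ}
    (hf : IsAlphaAdicExpansion a α f (m + n * α)) :
    ∃ k N, k ≤ N ∧ (∀ i < k, f i = 0) ∧ remainder α (m + n * α) f k N = -1 ∧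
      remainder β (m + n * β) f k N = -1 := by
  obtain ⟨hd, ⟨k, hk⟩, hadm, hsum⟩ := hf
  obtain ⟨N₀, hN₀⟩ := exists_forall_neg_inv_lt_zpow_neg_mul h (m + n * β)
  set N := max k N₀
  have hstate : ∀ M, N ≤ M →
      (remainder α (m + n * α) f k M = -1 ∧ remainder β (m + n * β) f k M = -1) ∨
      (remainder α (m + n * α) f k M = β ∧ remainder β (m + n * β) f k M = α) := fun M hM =>
    (isIntConj_remainder h.alpha_sq h.beta_sq m n f (by omega)).eq_neg_one_or_eq h
      (neg_one_le_of_hasSum h hd (hasSum_remainder h hsum hk (by omega)))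
      (le_beta_of_hasSum h hd (hasSum_remainder h hsum hk (by omega)))
      (by linarith [hN₀ M (by omega), zpow_neg_mul_sub_one_lt_remainder h (m + n * β) hd hadm k M])
      (remainder_beta_neg h hx (fun i => (hd i).1) k M)
  rcases hstate N le_rfl with hN | hN
  · exact ⟨k, N, le_max_left _ _, hk, hN⟩
  rcases hstate (N + 1) (by omega) with hN1 | hN1
  · exact ⟨k, N + 1, by omega, hk, hN1⟩
  -- two consecutive remainders `β` would force the digit `β + 1 > a`
  have hrec := remainder_add_one h.alpha_ne_zero f (x := m + n * α) (le_max_left k N₀)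
  rw [hN.1, hN1.1] at hrec
  have hfN : (f N : ℝ) = β + 1 := by
    field_simp [h.alpha_ne_zero] at hrec
    linarith [h.alpha_mul_beta]
  have : (f N : ℝ) ≤ a := by exact_mod_cast (hd N).2
  linarith [h.a_lt_beta]

theorem IsAlphaAdicExpansion.exists_isCut (h : IsPisotConjugate a β α) {m n : ℤ}
    (hx : (m : ℝ) + n * β < 0) {f : ℤ → ℤ} (hf : IsAlphaAdicExpansion a α f (m + n * α)) :
    ∃ N, IsCut a β (m + n * β) f N := by
  obtain ⟨k, N, hkN, hk, hr, hs⟩ := hf.exists_remainder_eq_neg_one h hx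
  refine ⟨N, endsWithAlt_of_hasSum_neg_one h hf.1 (hr ▸ hasSum_remainder h hf.2.2.2 hk hkN),
    k, hkN, hk, ?_⟩
  have hN : β ^ N * β ^ (-N) = 1 := by
    rw [← zpow_add₀ h.beta_ne_zero, add_neg_cancel, zpow_zero]
  rw [remainder] at hs
  linear_combination (-β ^ N) * hs + ((m : ℝ) + n * β - ∑ i ∈ Ico k N, (f i : ℝ) * β ^ i) * hN

end Cut

section Greedy

variable {a : ℕ} {β α : ℝ}

/-- The least digit `d ≥ 0` with `-1 ≤ α⁻¹ * (r - d)`. -/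
noncomputable def greedyDigit (α r : ℝ) : ℤ := max 0 ⌈r + α⌉

noncomputable def greedyRem (α r₀ : ℝ) : ℕ → ℝ
  | 0 => r₀
  | j + 1 => α⁻¹ * (greedyRem α r₀ j - greedyDigit α (greedyRem α r₀ j))

theorem greedyDigit_mem (h : IsPisotConjugate a β α) {r : ℝ} (hr : r ≤ β) :
    0 ≤ greedyDigit α r ∧ greedyDigit α r ≤ a :=
  ⟨le_max_left _ _,
    max_le (by positivity) (Int.ceil_le.2 (by push_cast; linarith [h.alpha_add_beta]))⟩

theorem greedyRem_succ_mem (h : IsPisotConjugate a β α) {r : ℝ} (hr : -1 ≤ r ∧ r ≤ β) :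
    -1 ≤ α⁻¹ * (r - greedyDigit α r) ∧ α⁻¹ * (r - greedyDigit α r) ≤ β := by
  have hlo : r + α ≤ greedyDigit α r :=
    (Int.le_ceil _).trans (by exact_mod_cast le_max_right 0 ⌈r + α⌉)
  have hhi : (greedyDigit α r : ℝ) ≤ r + 1 := by
    rcases max_choice 0 ⌈r + α⌉ with hd | hd <;> rw [greedyDigit, hd]
    · push_cast; linarith
    · linarith [Int.ceil_lt_add_one (r + α), h.alpha_neg]
  rw [h.inv_alpha]
  constructor <;> nlinarith [h.alpha_mul_beta, h.beta_pos]

theorem greedyDigit_eq_zero (h : IsPisotConjugate a β α) {r : ℝ}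
    (hnext : greedyDigit α (α⁻¹ * (r - greedyDigit α r)) = a) : greedyDigit α r = 0 := by
  by_contra hd
  have hd : (greedyDigit α r : ℝ) < r + α + 1 := by
    rw [show greedyDigit α r = ⌈r + α⌉ by unfold greedyDigit at hd ⊢; omega]
    exact Int.ceil_lt_add_one _
  -- so the next remainder is below `β - 1`, where the greedy digit is at most `a - 1`
  have hnext_lt : α⁻¹ * (r - greedyDigit α r) + α < (((a : ℤ) - 1 : ℤ) : ℝ) := by
    rw [h.inv_alpha]
    push_cast
    nlinarith [h.alpha_mul_beta, h.alpha_add_beta, h.beta_pos]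
  have := h.a_pos
  have : greedyDigit α (α⁻¹ * (r - greedyDigit α r)) ≤ (a : ℤ) - 1 :=
    max_le (by omega) (Int.ceil_le.2 hnext_lt.le)
  omega

theorem greedyRem_mem (h : IsPisotConjugate a β α) {r₀ : ℝ} (hr₀ : -1 ≤ r₀ ∧ r₀ ≤ β) (j : ℕ) :
    -1 ≤ greedyRem α r₀ j ∧ greedyRem α r₀ j ≤ β := by
  induction j with
  | zero => exact hr₀
  | succ j ih => exact greedyRem_succ_mem h ih

theorem sum_range_greedyDigit_add (h : IsPisotConjugate a β α) (r₀ : ℝ) (t : ℕ) :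
    ∑ j ∈ range t, (greedyDigit α (greedyRem α r₀ j) : ℝ) * α ^ j + α ^ t * greedyRem α r₀ t =
      r₀ := by
  induction t with
  | zero => simp [greedyRem]
  | succ t ih =>
    rw [sum_range_succ, greedyRem, pow_succ, mul_assoc, mul_inv_cancel_left₀ h.alpha_ne_zero]
    linear_combination ih

theorem hasSum_greedyDigit (h : IsPisotConjugate a β α) {r₀ : ℝ} (hr₀ : -1 ≤ r₀ ∧ r₀ ≤ β) :
    HasSum (fun j : ℕ => (greedyDigit α (greedyRem α r₀ j) : ℝ) * α ^ j) r₀ := by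
  have hα := h.abs_alpha_lt_one
  have hsummable : Summable fun j : ℕ => (greedyDigit α (greedyRem α r₀ j) : ℝ) * α ^ j := by
    refine ((summable_geometric_of_lt_one (abs_nonneg α) hα).mul_left (a : ℝ)).of_norm_bounded
      fun j => ?_
    have hd := greedyDigit_mem h (greedyRem_mem h hr₀ j).2
    rw [norm_mul, norm_pow, Real.norm_eq_abs, Real.norm_eq_abs,
      abs_of_nonneg (by exact_mod_cast hd.1 : (0 : ℝ) ≤ _)]
    gcongr
    exact_mod_cast hd.2
  have htail : Filter.Tendsto (fun t : ℕ => α ^ t * greedyRem α r₀ t) Filter.atTop (nhds 0) := by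
    refine squeeze_zero_norm (fun t => ?_)
      (by simpa using (tendsto_pow_atTop_nhds_zero_of_lt_one (abs_nonneg α) hα).mul_const β)
    have hr := greedyRem_mem h hr₀ t
    rw [norm_mul, norm_pow, Real.norm_eq_abs]
    exact mul_le_mul_of_nonneg_left (abs_le.2 ⟨by linarith [h.one_lt_beta], hr.2⟩)
      (pow_nonneg (abs_nonneg α) t)
  rw [hsummable.hasSum_iff_tendsto_nat]
  have hlim := (tendsto_const_nhds (x := r₀)).sub htail
  rw [sub_zero] at hlim
  exact hlim.congr fun t => by linarith [sum_range_greedyDigit_add h r₀ t]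

theorem exists_isAlphaAdicExpansion (h : IsPisotConjugate a β α) (y : ℝ) :
    ∃ f, IsAlphaAdicExpansion a α f y := by
  have hα := h.abs_alpha_lt_one
  obtain ⟨t, ht⟩ := exists_pow_lt_of_lt_one (show 0 < (|y| + 1)⁻¹ by positivity) hα
  have hr₀ : -1 ≤ α ^ t * y ∧ α ^ t * y ≤ β := by
    have : |α ^ t * y| < 1 := by
      rw [abs_mul, abs_pow]
      calc |α| ^ t * |y| ≤ (|y| + 1)⁻¹ * |y| := by gcongr
        _ < 1 := by rw [inv_mul_lt_iff₀ (by positivity)]; linarith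
    constructor <;> linarith [abs_lt.1 this, h.one_lt_beta]
  set d : ℕ → ℤ := fun j => greedyDigit α (greedyRem α (α ^ t * y) j)
  refine ⟨fun i => if i < -t then 0 else d (i + t).toNat, fun i => ?_, ⟨-t, fun i hi => if_pos hi⟩,
    fun i hi => ?_, ?_⟩
  · dsimp only
    split_ifs
    · exact ⟨le_rfl, by positivity⟩
    · exact greedyDigit_mem h (greedyRem_mem h hr₀ _).2
  · have := h.a_pos
    by_cases hit : i < -t
    · exact if_pos hit
    · simp only [hit, if_false, show ¬ (i + 1 < -t) by omega,
        show (i + 1 + t).toNat = (i + t).toNat + 1 by omega] at hi ⊢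
      exact greedyDigit_eq_zero h hi
  · rw [hasSum_int_iff_hasSum_nat_add (k := -t) fun i hi => by simp [hi]]
    have hy : α ^ (-t : ℤ) * (α ^ t * y) = y := by
      rw [zpow_neg, zpow_natCast, inv_mul_cancel_left₀ (pow_ne_zero t h.alpha_ne_zero)]
    rw [← hy]
    refine ((hasSum_greedyDigit h hr₀).mul_left _).congr_fun fun j => ?_
    simp only [show ¬ (-(t : ℤ) + j < -t) by omega, if_false,
      show (-(t : ℤ) + j + t).toNat = j by omega, zpow_add₀ h.alpha_ne_zero, zpow_natCast, d]
    ring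

end Greedy

section Surgery

variable {a : ℕ} {β α : ℝ} {f : ℤ → ℤ} {y : ℝ}

theorem IsAlphaAdicExpansion.exists_endsWithAlt_ne (ha : 0 < a)
    (hf : IsAlphaAdicExpansion a α f y) {N : ℤ} (hN : EndsWithAlt a f N) :
    ∃ N', EndsWithAlt a f N' ∧ f (N' - 1) ≠ a := by
  obtain ⟨-, ⟨k, hk⟩, hadm, -⟩ := hf
  have hbdd : ∃ b, ∀ M, EndsWithAlt a f M → b ≤ M := ⟨k - 1, fun M hM => by
    by_contra! hMk
    have := hM (M + 1) (by omega)
    simp [altWord, hk (M + 1) (by omega)] at this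
    omega⟩
  obtain ⟨N', hN', hmin⟩ := Int.exists_least_of_bdd hbdd ⟨N, hN⟩
  refine ⟨N', hN', fun hfa => ?_⟩
  have h₂ : f (N' - 2) = 0 := hadm (N' - 2) (by rwa [show N' - 2 + 1 = N' - 1 by ring])
  have := hmin _ (hN'.sub_two hfa h₂)
  omega

theorem IsAlphaAdicExpansion.hasSum_of_eqOn (h : IsPisotConjugate a β α)
    (hf : IsAlphaAdicExpansion a α f y) {g : ℤ → ℤ} {L M N : ℤ} (hN : EndsWithAlt a f N)
    (hM : EndsWithAlt a g M) (hLN : L ≤ N) (hLM : L ≤ M) (hgf : ∀ i < L, g i = f i)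
    (hwin : ∑ i ∈ Ico L M, (g i : ℝ) * α ^ i - α ^ M =
      ∑ i ∈ Ico L N, (f i : ℝ) * α ^ i - α ^ N) :
    HasSum (fun i => (g i : ℝ) * α ^ i) y := by
  obtain ⟨k, hk⟩ := hf.2.1
  have hfk : ∀ i < min k L, f i = 0 := fun i hi => hk i (by omega)
  have hgk : ∀ i < min k L, g i = 0 := fun i hi => (hgf i (by omega)).trans (hfk i hi)
  have hlow : ∑ i ∈ Ico (min k L) L, (g i : ℝ) * α ^ i =
      ∑ i ∈ Ico (min k L) L, (f i : ℝ) * α ^ i :=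
    sum_congr rfl fun i hi => by rw [hgf i (by simp at hi; omega)]
  convert hasSum_of_endsWithAlt h hgk (by omega) hM using 1
  rw [← (hasSum_of_endsWithAlt h hfk (by omega) hN).unique hf.2.2.2,
    ← sum_Ico_add_sum_Ico (min_le_right k L) hLM,
    ← sum_Ico_add_sum_Ico (min_le_right k L) hLN, hlow]
  linarith

/-- The digits `e 0 a 0 a …` at `L + 1, L + 2, …` become `(e + 1) (a - 1) 0 a 0 …`. -/
theorem IsAlphaAdicExpansion.exists_ne_of_succ_lt (h : IsPisotConjugate a β α)
    (hf : IsAlphaAdicExpansion a α f y) {L : ℤ} (hL : EndsWithAlt a f (L + 2))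
    (hfL : f (L + 1) + 1 < a ∨ (f (L + 1) + 1 = a ∧ f L = 0)) :
    ∃ g, IsAlphaAdicExpansion a α g y ∧ g ≠ f := by
  obtain ⟨k, hk⟩ := hf.2.1
  set g : ℤ → ℤ := fun i => if i ≤ L then f i else if i = L + 1 then f (L + 1) + 1
    else if i = L + 2 then a - 1 else altWord a (L + 3) i
  have hgf : ∀ i ≤ L, g i = f i := fun i hi => if_pos hi
  have hgL : EndsWithAlt a g (L + 3) := fun i hi => by
    simp only [g, if_neg (show ¬ i ≤ L by omega), if_neg (show i ≠ L + 1 by omega),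
      if_neg (show i ≠ L + 2 by omega)]
  refine ⟨g, ⟨fun i => ?_, ⟨min k L, fun i hi => (hgf i (by omega)).trans (hk i (by omega))⟩,
    fun i hi => ?_, ?_⟩, fun hgf' => ?_⟩
  · have := hf.1 i
    have := hf.1 (L + 1)
    simp only [g, altWord]
    split_ifs <;> omega
  · rcases (by omega : i + 1 ≤ L ∨ i = L ∨ L < i) with hiL | rfl | hiL
    · rw [hgf _ hiL] at hi
      rw [hgf i (by omega), hf.2.2.1 i hi]
    · simp only [g, le_refl, if_true, show ¬ (i + 1 ≤ i) by omega, if_false] at hi ⊢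
      omega
    · have := h.a_pos
      simp only [g, altWord] at hi ⊢
      split_ifs at hi ⊢ <;> omega
  · refine hf.hasSum_of_eqOn h hL hgL (L := L + 1) (by omega) (by omega)
      (fun i hi => hgf i (by omega)) ?_
    have hg₁ : g (L + 1) = f (L + 1) + 1 := by simp [g]
    have hg₂ : g (L + 1 + 1) = a - 1 := by
      simp only [g]
      rw [if_neg (by omega), if_neg (by omega), if_pos (by ring)]
    rw [show L + 3 = L + 1 + 2 by ring, sum_Ico_add_two le_rfl, show L + 2 = L + 1 + 1 by ring,
      ← sum_Ico_add_eq_sum_Ico_add_one le_rfl, zpow_add_two_of_sq_eq h.alpha_sq, hg₁, hg₂,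
      Ico_self, sum_empty, sum_empty]
    push_cast
    ring
  · have := congrFun hgf' (L + 1)
    simp only [g, show ¬ (L + 1 ≤ L) by omega, if_false, if_true] at this
    omega

/-- The digits `c (a - 1) 0 a 0 …` at `L, L + 1, …` become `(c - 1) 0 a 0 a …`. -/
theorem IsAlphaAdicExpansion.exists_ne_of_pos (h : IsPisotConjugate a β α)
    (hf : IsAlphaAdicExpansion a α f y) {L : ℤ} (hL : EndsWithAlt a f (L + 2))
    (hfL₁ : f (L + 1) = a - 1) (hfL : 0 < f L) :
    ∃ g, IsAlphaAdicExpansion a α g y ∧ g ≠ f := by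
  obtain ⟨k, hk⟩ := hf.2.1
  set g : ℤ → ℤ := fun i => if i < L then f i else if i = L then f L - 1 else altWord a (L + 1) i
  have hgf : ∀ i < L, g i = f i := fun i hi => if_pos hi
  have hgL : EndsWithAlt a g (L + 1) := fun i hi => by
    simp only [g, if_neg (show ¬ i < L by omega), if_neg (show i ≠ L by omega)]
  refine ⟨g, ⟨fun i => ?_, ⟨min k L, fun i hi => (hgf i (by omega)).trans (hk i (by omega))⟩,
    fun i hi => ?_, ?_⟩, fun hgf' => ?_⟩
  · have := hf.1 i
    have := hf.1 L
    simp only [g, altWord]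
    split_ifs <;> omega
  · by_cases hiL : i + 1 < L
    · rw [hgf _ hiL] at hi
      rw [hgf i (by omega), hf.2.2.1 i hi]
    · have := h.a_pos
      have := hf.1 L
      simp only [g, altWord] at hi ⊢
      split_ifs at hi ⊢ <;> omega
  · refine hf.hasSum_of_eqOn h hL hgL (by omega) (by omega) hgf ?_
    have hg : g L = f L - 1 := by simp [g]
    rw [← sum_Ico_add_eq_sum_Ico_add_one le_rfl, sum_Ico_add_two le_rfl, hfL₁, hg,
      zpow_add_two_of_sq_eq h.alpha_sq, Ico_self, sum_empty, sum_empty]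
    push_cast
    ring
  · have := congrFun hgf' L
    simp only [g, lt_irrefl, if_false, if_true] at this
    omega

theorem IsAlphaAdicExpansion.exists_ne (h : IsPisotConjugate a β α)
    (hf : IsAlphaAdicExpansion a α f y) {N : ℤ} (hN : EndsWithAlt a f N) :
    ∃ g, IsAlphaAdicExpansion a α g y ∧ g ≠ f := by
  obtain ⟨N', hN', hfN'⟩ := hf.exists_endsWithAlt_ne h.a_pos hN
  obtain ⟨L, rfl⟩ : ∃ L, N' = L + 2 := ⟨N' - 2, by ring⟩
  rw [show L + 2 - 1 = L + 1 by ring] at hfN'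
  have := hf.1 (L + 1)
  have := hf.1 L
  by_cases hA : f (L + 1) + 1 < a ∨ f L = 0
  · exact hf.exists_ne_of_succ_lt h hN' (by omega)
  · exact hf.exists_ne_of_pos h hN' (by omega) (by omega)

end Surgery

/-- Let β be the positive root of x² - ax - 1 (a ∈ ℤ_{>0}) and
α = -β⁻¹.  If x = m + nβ ∈ ℤ[β] is negative, then its conjugate x' = m + nα has
exactly two weakly admissible α-adic expansions, and both are eventually
periodic to the left with period word a0 (of the form ^ω(a0)u•v). -/
theorem two_expansions_of_negative (a : ℕ) (ha : 0 < a) (β α : ℝ)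
    (hβroot : β ^ 2 = a * β + 1) (hβpos : 0 < β) (hα : α = -β⁻¹)
    (m n : ℤ) (hxneg : (m : ℝ) + n * β < 0) :
    {f : ℤ → ℤ | IsAlphaAdicExpansion a α f ((m : ℝ) + n * α)}.ncard = 2 ∧
    ∀ f : ℤ → ℤ, IsAlphaAdicExpansion a α f ((m : ℝ) + n * α) →
      ∃ N : ℤ, ∀ i, N ≤ i → f i = if (i - N) % 2 = 0 then 0 else a := by
  have h : IsPisotConjugate a β α := ⟨ha, hβroot, hβpos, hα⟩
  have heq : ∀ {f g M N}, IsAlphaAdicExpansion a α f (m + n * α) →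
      IsAlphaAdicExpansion a α g (m + n * α) → IsCut a β (m + n * β) f M →
      IsCut a β (m + n * β) g N → M % 2 = N % 2 → f = g :=
    fun hf hg hcf hcg => hcf.eq_of_emod_two_eq h hf.1 hf.2.2.1 hg.1 hg.2.2.1 hcg
  refine ⟨?_, fun f hf => ?_⟩
  · obtain ⟨f₁, hf₁⟩ := exists_isAlphaAdicExpansion h (m + n * α)
    obtain ⟨N₁, hN₁⟩ := hf₁.exists_isCut h hxneg
    obtain ⟨f₂, hf₂, hne⟩ := hf₁.exists_ne h hN₁.1
    obtain ⟨N₂, hN₂⟩ := hf₂.exists_isCut h hxneg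
    have hN₁₂ : N₁ % 2 ≠ N₂ % 2 := fun h₁₂ => hne (heq hf₁ hf₂ hN₁ hN₂ h₁₂).symm
    rw [← Set.ncard_pair (Ne.symm hne)]
    congr 1
    ext f
    refine ⟨fun hf => ?_, by rintro (rfl | rfl) <;> assumption⟩
    obtain ⟨N, hN⟩ := hf.exists_isCut h hxneg
    rcases (by omega : N % 2 = N₁ % 2 ∨ N % 2 = N₂ % 2) with h₁ | h₂
    · exact Or.inl (heq hf hf₁ hN hN₁ h₁)
    · exact Or.inr (heq hf hf₂ hN hN₂ h₂)
  · obtain ⟨N, hN⟩ := hf.exists_isCut h hxneg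
    exact ⟨N, fun i hi => by rw [hN.1 i hi, altWord]; push_cast; rfl⟩
end

section
/- Let β be a quadratic Pisot unit, root of x² - ax - 1, and α = -β^{-1}. If a number z has an eventually periodic weakly admissible α-adic expansion, then every weakly admissible α-adic expansion of z is eventually periodic. -/
/-- A left-infinite digit sequence is eventually periodic (to the left). -/
def EventuallyPeriodic (f : ℤ → ℤ) : Prop :=
  ∃ (N : ℤ) (p : ℕ), 0 < p ∧ ∀ i, N ≤ i → f (i + p) = f i

/-- `β > 1` is a root of `x² - a x - 1` and `α = -β⁻¹` is the other one. -/
structure IsPisotPair_s12 (a : ℕ) (β α : ℝ) : Prop where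
  one_lt_beta : 1 < β
  beta_sub_inv : β - β⁻¹ = a
  alpha_eq : α = -β⁻¹

def DigitsIn (a : ℕ) (f : ℤ → ℤ) : Prop :=
  ∀ i, 0 ≤ f i ∧ f i ≤ a

/-- `tailValue α f n = α⁻ⁿ ∑_{i ≥ n} f i αⁱ`. -/
noncomputable def tailValue (α : ℝ) (f : ℤ → ℤ) (n : ℤ) : ℝ :=
  ∑' i : ℕ, (f (n + i) : ℝ) * α ^ i

section TailValue

variable {a : ℕ} {α : ℝ} {f g : ℤ → ℤ}

theorem abs_digit_sub_half_le {d : ℤ} (hd : 0 ≤ d ∧ d ≤ a) :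
    |(d : ℝ) - a / 2| ≤ a / 2 := by
  have h0 : (0 : ℝ) ≤ d := by exact_mod_cast hd.1
  have h1 : (d : ℝ) ≤ a := by exact_mod_cast hd.2
  rw [abs_le]
  constructor <;> linarith

theorem summable_tailValue (hα : |α| < 1) (hf : DigitsIn a f) (n : ℤ) :
    Summable fun i : ℕ => (f (n + i) : ℝ) * α ^ i := by
  refine ((summable_geometric_of_lt_one (abs_nonneg α) hα).mul_left (a : ℝ)).of_norm_bounded
    fun i => ?_
  rw [norm_mul, norm_pow, Real.norm_eq_abs, Real.norm_eq_abs]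
  gcongr
  rw [abs_of_nonneg (by exact_mod_cast (hf _).1)]
  exact_mod_cast (hf _).2

theorem tailValue_eq_add_mul (hα : |α| < 1) (hf : DigitsIn a f) (n : ℤ) :
    tailValue α f n = f n + α * tailValue α f (n + 1) := by
  rw [tailValue, (summable_tailValue hα hf n).tsum_eq_zero_add, tailValue, ← tsum_mul_left]
  congr 1
  · simp
  · congr 1 with i
    rw [pow_succ, Nat.cast_succ, ← add_assoc, add_right_comm]
    ring

/-- Each digit deviates from the constant digit `a / 2` by at most `a / 2`. -/
theorem abs_tailValue_sub_le (hα : |α| < 1) (hf : DigitsIn a f) (n : ℤ) :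
    |tailValue α f n - a / 2 * (1 - α)⁻¹| ≤ a / 2 * (1 - |α|)⁻¹ := by
  have hsum := ((summable_tailValue hα hf n).hasSum).sub
    ((hasSum_geometric_of_abs_lt_one hα).mul_left (a / 2 : ℝ))
  refine hsum.norm_le_of_bounded
    ((hasSum_geometric_of_lt_one (abs_nonneg α) hα).mul_left (a / 2 : ℝ)) fun i => ?_
  rw [Real.norm_eq_abs, ← sub_mul, abs_mul, abs_pow]
  gcongr
  exact abs_digit_sub_half_le (hf _)

theorem exists_least_ne (hf : ∃ k, ∀ i < k, f i = 0) (hg : ∃ k, ∀ i < k, g i = 0)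
    (hne : f ≠ g) : ∃ j, f j ≠ g j ∧ ∀ i < j, f i = g i := by
  obtain ⟨kf, hkf⟩ := hf
  obtain ⟨kg, hkg⟩ := hg
  obtain ⟨j, hj, hmin⟩ := Int.exists_least_of_bdd (P := fun i => f i ≠ g i)
    ⟨min kf kg, fun i hi => not_lt.1 fun hlt => hi <| by
      rw [hkf i (hlt.trans_le (min_le_left _ _)), hkg i (hlt.trans_le (min_le_right _ _))]⟩
    (Function.ne_iff.1 hne)
  exact ⟨j, hj, fun i hi => not_not.1 fun h => (hmin i h).not_gt hi⟩

theorem eventuallyPeriodic_of_tailValue (hα : |α| < 1) (hf : DigitsIn a f) {N : ℤ}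
    {p : ℕ} (hp : 0 < p) (hper : ∀ i, N ≤ i → tailValue α f (i + p) = tailValue α f i) :
    EventuallyPeriodic f := by
  refine ⟨N, p, hp, fun i hi => ?_⟩
  have hdigit : ∀ k, (f k : ℝ) = tailValue α f k - α * tailValue α f (k + 1) := fun k => by
    rw [tailValue_eq_add_mul hα hf k]; ring
  have hshift : tailValue α f (i + p + 1) = tailValue α f (i + 1) := by
    rw [add_right_comm, hper (i + 1) (by omega)]
  have : (f (i + p) : ℝ) = f i := by rw [hdigit, hper i hi, hshift, ← hdigit]
  exact_mod_cast this

theorem tailValue_eq_of_hasSum (hα : |α| < 1) (hα0 : α ≠ 0) (hf : DigitsIn a f)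
    (hg : DigitsIn a g) {z : ℝ} (hfz : HasSum (fun i : ℤ => (f i : ℝ) * α ^ i) z)
    (hgz : HasSum (fun i : ℤ => (g i : ℝ) * α ^ i) z) {j : ℤ} (hfg : ∀ i < j, f i = g i) :
    tailValue α f j = tailValue α g j := by
  have hdiff : HasSum (fun i : ℤ => ((f i : ℝ) - g i) * α ^ i) 0 := by
    simpa [sub_mul] using hfz.sub hgz
  have hshift : HasSum (fun k : ℕ => ((f (j + k) : ℝ) - g (j + k)) * α ^ (j + k : ℤ)) 0 := by
    refine ((add_right_injective j).comp Nat.cast_injective).hasSum_iff (fun i hi => ?_) |>.2 hdiff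
    have hij : i < j := not_le.1 fun h => hi ⟨(i - j).toNat, by
      simp only [Function.comp_apply, Int.toNat_of_nonneg (sub_nonneg.2 h)]; ring⟩
    simp [hfg i hij]
  have hscaled : HasSum (fun k : ℕ => α ^ j * (((f (j + k) : ℝ) - g (j + k)) * α ^ k))
      (α ^ j * 0) := by
    rw [mul_zero]
    convert hshift using 2 with k
    rw [zpow_add₀ hα0, zpow_natCast]
    ring
  have htail := ((hasSum_mul_left_iff (zpow_ne_zero j hα0)).1 hscaled).tsum_eq
  simp_rw [sub_mul] at htail
  rw [(summable_tailValue hα hf j).tsum_sub (summable_tailValue hα hg j)] at htail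
  exact sub_eq_zero.1 htail

end TailValue

namespace IsPisotPair_s12

variable {a : ℕ} {β α : ℝ} {f g : ℤ → ℤ}

theorem of_sq_eq (ha : 0 < a) (hroot : β ^ 2 = a * β + 1) (hpos : 0 < β) (hα : α = -β⁻¹) :
    IsPisotPair_s12 a β α where
  one_lt_beta := by
    have ha' : (1 : ℝ) ≤ a := by exact_mod_cast ha
    nlinarith
  beta_sub_inv := by
    field_simp
    linarith
  alpha_eq := hα

theorem beta_pos (P : IsPisotPair_s12 a β α) : 0 < β := zero_lt_one.trans P.one_lt_beta

theorem abs_alpha_lt_one (P : IsPisotPair_s12 a β α) : |α| < 1 := by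
  rw [P.alpha_eq, abs_neg, abs_of_pos (inv_pos.2 P.beta_pos)]
  exact inv_lt_one_of_one_lt₀ P.one_lt_beta

theorem alpha_ne_zero (P : IsPisotPair_s12 a β α) : α ≠ 0 := by
  simpa [P.alpha_eq] using P.beta_pos.ne'

theorem alpha_mul_beta (P : IsPisotPair_s12 a β α) : α * β = -1 := by
  rw [P.alpha_eq, neg_mul, inv_mul_cancel₀ P.beta_pos.ne']

theorem tailValue_mem_Icc (P : IsPisotPair_s12 a β α) (hf : DigitsIn a f) (n : ℤ) :
    tailValue α f n ∈ Set.Icc (-1) β := by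
  have h := abs_tailValue_sub_le P.abs_alpha_lt_one hf n
  have hβ := P.one_lt_beta
  have hcentre : (a / 2 * (1 - α)⁻¹ : ℝ) = (β - 1) / 2 := by
    rw [P.alpha_eq, ← P.beta_sub_inv, sub_neg_eq_add]
    have : β + 1 ≠ 0 := by linarith
    field_simp
    ring
  have hradius : (a / 2 * (1 - |α|)⁻¹ : ℝ) = (β + 1) / 2 := by
    rw [P.alpha_eq, abs_neg, abs_of_pos (inv_pos.2 P.beta_pos), ← P.beta_sub_inv]
    have : β - 1 ≠ 0 := by linarith
    field_simp
    ring
  rw [hcentre, hradius, abs_le] at h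
  constructor <;> linarith [h.1, h.2]

theorem alpha_mul_tailValue_mem_Icc (P : IsPisotPair_s12 a β α) (hf : DigitsIn a f)
    (n : ℤ) : α * tailValue α f n ∈ Set.Icc (-1) β⁻¹ := by
  obtain ⟨hlo, hhi⟩ := P.tailValue_mem_Icc hf n
  have hβ : β⁻¹ * β = 1 := inv_mul_cancel₀ P.beta_pos.ne'
  have hβinv : 0 < β⁻¹ := inv_pos.2 P.beta_pos
  set T := tailValue α f n
  rw [P.alpha_eq]
  constructor <;> nlinarith

theorem tailValue_eq_neg_one_iff (P : IsPisotPair_s12 a β α) (hf : DigitsIn a f) (n : ℤ) :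
    tailValue α f n = -1 ↔ f n = 0 ∧ tailValue α f (n + 1) = β := by
  rw [tailValue_eq_add_mul P.abs_alpha_lt_one hf]
  have hαT := P.alpha_mul_tailValue_mem_Icc hf (n + 1)
  have hf0 : (0 : ℝ) ≤ f n := by exact_mod_cast (hf n).1
  constructor
  · intro h
    have hfn : (f n : ℝ) = 0 := by linarith [hαT.1]
    refine ⟨by exact_mod_cast hfn, mul_left_cancel₀ P.alpha_ne_zero ?_⟩
    linarith [P.alpha_mul_beta]
  · rintro ⟨h0, h1⟩
    simp [h0, h1, P.alpha_mul_beta]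

theorem tailValue_eq_beta_iff (P : IsPisotPair_s12 a β α) (hf : DigitsIn a f) (n : ℤ) :
    tailValue α f n = β ↔ f n = a ∧ tailValue α f (n + 1) = -1 := by
  rw [tailValue_eq_add_mul P.abs_alpha_lt_one hf]
  have hβ := P.beta_sub_inv
  have hαT := P.alpha_mul_tailValue_mem_Icc hf (n + 1)
  have hfa : (f n : ℝ) ≤ a := by exact_mod_cast (hf n).2
  have hα : α * -1 = β⁻¹ := by rw [P.alpha_eq]; ring
  constructor
  · intro h
    have hfn : (f n : ℝ) = a := by linarith [hαT.2]
    refine ⟨by exact_mod_cast hfn, mul_left_cancel₀ P.alpha_ne_zero ?_⟩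
    linarith
  · rintro ⟨h0, h1⟩
    rw [h0, h1, hα, Int.cast_natCast]
    linarith

theorem eventuallyPeriodic_of_tailValue_eq_neg_one (P : IsPisotPair_s12 a β α)
    (hf : DigitsIn a f) {n : ℤ} (hn : tailValue α f n = -1) : EventuallyPeriodic f := by
  have hext : ∀ i, n ≤ i → tailValue α f i = -1 ∨ tailValue α f i = β := by
    refine Int.leInduction (Or.inl hn) fun i _ hi => ?_
    rcases hi with hi | hi
    · exact Or.inr ((P.tailValue_eq_neg_one_iff hf i).1 hi).2
    · exact Or.inl ((P.tailValue_eq_beta_iff hf i).1 hi).2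
  refine eventuallyPeriodic_of_tailValue (N := n) P.abs_alpha_lt_one hf two_pos fun i hi => ?_
  rw [Nat.cast_two, ← one_add_one_eq_two, ← add_assoc]
  rcases hext i hi with h | h
  · rw [((P.tailValue_eq_beta_iff hf _).1 ((P.tailValue_eq_neg_one_iff hf i).1 h).2).2, h]
  · rw [((P.tailValue_eq_neg_one_iff hf _).1 ((P.tailValue_eq_beta_iff hf i).1 h).2).2, h]

theorem tailValue_eq_neg_one_of_digit_lt (P : IsPisotPair_s12 a β α) (hf : DigitsIn a f)
    (hg : DigitsIn a g) {j : ℤ} (hfadm : f (j + 1) = a → f j = 0)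
    (heq : tailValue α f j = tailValue α g j) (hlt : g j < f j) :
    tailValue α g (j + 1) = -1 ∧ tailValue α f (j + 2) = -1 := by
  have hβ := P.beta_sub_inv
  rw [tailValue_eq_add_mul P.abs_alpha_lt_one hf, tailValue_eq_add_mul P.abs_alpha_lt_one hg] at heq
  -- the first digits differ by at least one, which costs at least `β` in the next tails
  have hgap : tailValue α g (j + 1) + β ≤ tailValue α f (j + 1) := by
    have hdigit : (g j : ℝ) + 1 ≤ f j := by exact_mod_cast hlt
    nlinarith [P.alpha_mul_beta, P.beta_pos]
  have hfnext : (f (j + 1) : ℝ) ≤ a - 1 := by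
    have : f (j + 1) ≠ a := fun h => by have := hfadm h; have := (hg j).1; omega
    have : f (j + 1) ≤ (a : ℤ) - 1 := by have := (hf (j + 1)).2; omega
    exact_mod_cast this
  rw [tailValue_eq_add_mul P.abs_alpha_lt_one hf (j + 1)] at hgap
  have hg1 := (P.tailValue_mem_Icc hg (j + 1)).1
  have hf2 := P.alpha_mul_tailValue_mem_Icc hf (j + 1 + 1)
  refine ⟨by linarith [hf2.2], mul_left_cancel₀ P.alpha_ne_zero ?_⟩
  rw [show j + 2 = j + 1 + 1 by ring]
  have : α * -1 = β⁻¹ := by rw [P.alpha_eq]; ring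
  linarith [hf2.2]

theorem eventuallyPeriodic_of_ne (P : IsPisotPair_s12 a β α) {z : ℝ}
    (hf : IsAlphaAdicExpansion a α f z) (hg : IsAlphaAdicExpansion a α g z) (hne : f ≠ g) :
    EventuallyPeriodic g := by
  obtain ⟨hfd, hfk, hfadm, hfz⟩ := hf
  obtain ⟨hgd, hgk, hgadm, hgz⟩ := hg
  obtain ⟨j, hj, hlt⟩ := exists_least_ne hfk hgk hne
  have heq := tailValue_eq_of_hasSum P.abs_alpha_lt_one P.alpha_ne_zero hfd hgd hfz hgz hlt
  rcases lt_or_gt_of_ne hj with hfg | hgf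
  · exact P.eventuallyPeriodic_of_tailValue_eq_neg_one hgd
      (P.tailValue_eq_neg_one_of_digit_lt hgd hfd (hgadm j) heq.symm hfg).2
  · exact P.eventuallyPeriodic_of_tailValue_eq_neg_one hgd
      (P.tailValue_eq_neg_one_of_digit_lt hfd hgd (hfadm j) heq hgf).1

end IsPisotPair_s12

/-- Let β be the positive root of x² - ax - 1 (a ∈ ℤ_{>0}) and
α = -β⁻¹.  If a number z has an eventually periodic weakly admissible α-adic
expansion, then every weakly admissible α-adic expansion of z is eventually
periodic. -/
theorem all_expansions_eventually_periodic (a : ℕ) (ha : 0 < a) (β α : ℝ)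
    (hβroot : β ^ 2 = a * β + 1) (hβpos : 0 < β) (hα : α = -β⁻¹) (z : ℝ)
    (hex : ∃ f : ℤ → ℤ, IsAlphaAdicExpansion a α f z ∧ EventuallyPeriodic f) :
    ∀ g : ℤ → ℤ, IsAlphaAdicExpansion a α g z → EventuallyPeriodic g := by
  intro g hg
  obtain ⟨f, hf, hfper⟩ := hex
  by_cases hfg : f = g
  · exact hfg ▸ hfper
  · exact (IsPisotPair_s12.of_sq_eq ha hβroot hβpos hα).eventuallyPeriodic_of_ne hf hg hfg
end

section
/- Let a ∈ Z_{>0}, α the conjugate of the root β of x² - ax - 1, and q ∈ Q ∩ (-1, 1). Consider the iteration: s⁽⁰⁾ = (⋯, 0, 0, q) and s⁽ⁱ⁺¹⁾ obtained from s⁽ⁱ⁾ by applying ψ(x₃,x₂,x₁) = (x₃ - (⌈x₁⌉-x₁), x₂ + a(⌈x₁⌉-x₁), ⌈x₁⌉) at positions (i+2, i+1, i). Then after every step i, the finalized digits s⁽ⁱ⁺¹⁾₀, …, s⁽ⁱ⁺¹⁾ᵢ lie in {0,1,…,a}, the coefficient s⁽ⁱ⁺¹⁾_{i+1} lies in the open-closed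 interval (-1, a), and s⁽ⁱ⁺¹⁾_{i+2} lies in (-1, 0]. -/
/-- Invariant of the ceiling-based α-adic algorithm.  Let a ∈ ℤ_{>0},
β the positive root of x² - ax - 1, α = -β⁻¹, and q ∈ ℚ ∩ (-1,1).  The algorithm
starts from s⁽⁰⁾ = (⋯,0,0,q) and step i applies
ψ(x₃,x₂,x₁) = (x₃-(⌈x₁⌉-x₁), x₂+a(⌈x₁⌉-x₁), ⌈x₁⌉) at positions (i+2,i+1,i).
Then after every step i: the finalized digits s⁽ⁱ⁺¹⁾₀,…,s⁽ⁱ⁺¹⁾ᵢ are integers in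
{0,1,…,a}, the coefficient s⁽ⁱ⁺¹⁾_{i+1} lies in (-1,a), and s⁽ⁱ⁺¹⁾_{i+2} lies in (-1,0]. -/
theorem algorithm_invariant (a : ℕ) (ha : 0 < a) (β α : ℝ)
    (hβroot : β ^ 2 = a * β + 1) (hβpos : 0 < β) (hα : α = -β⁻¹)
    (q : ℚ) (hq1 : -1 < q) (hq2 : q < 1)
    (s : ℕ → ℕ → ℚ)
    (h0 : s 0 = fun j => if j = 0 then q else 0)
    (hstep : ∀ i, s (i + 1) =
      Function.update (Function.update (Function.update (s i)
        i (⌈s i i⌉ : ℚ))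
        (i + 1) (s i (i + 1) + a * ((⌈s i i⌉ : ℚ) - s i i)))
        (i + 2) (s i (i + 2) - ((⌈s i i⌉ : ℚ) - s i i))) :
    ∀ i : ℕ,
      (∀ j, j ≤ i → ∃ d : ℤ, (d : ℚ) = s (i + 1) j ∧ 0 ≤ d ∧ d ≤ a) ∧
      (-1 < s (i + 1) (i + 1) ∧ s (i + 1) (i + 1) < a) ∧
      (-1 < s (i + 1) (i + 2) ∧ s (i + 1) (i + 2) ≤ 0) := by
  have ha' : (0:ℚ) < a := by exact_mod_cast ha
  have ha1 : (1:ℚ) ≤ a := by exact_mod_cast ha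
  have hz : ∀ i j, i + 1 < j → s i j = 0 := by
    intro i
    induction i with
    | zero =>
      intro j hj
      rw [h0]
      simp only
      rw [if_neg (by omega)]
    | succ i ih =>
      intro j hj
      rw [hstep]
      rw [Function.update_apply, if_neg (by omega : ¬ j = i + 2),
          Function.update_apply, if_neg (by omega : ¬ j = i + 1),
          Function.update_apply, if_neg (by omega : ¬ j = i)]
      exact ih j (by omega)
  have heval : ∀ i j, s (i + 1) j =
      if j = i + 2 then s i (i + 2) - ((⌈s i i⌉ : ℚ) - s i i)
      else if j = i + 1 then s i (i + 1) + a * ((⌈s i i⌉ : ℚ) - s i i)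
      else if j = i then (⌈s i i⌉ : ℚ) else s i j := by
    intro i j
    rw [hstep]
    simp [Function.update_apply]
  have hf1 : ∀ x : ℚ, 0 ≤ (⌈x⌉ : ℚ) - x := fun x => by
    have := Int.le_ceil x; linarith
  have hf2 : ∀ x : ℚ, (⌈x⌉ : ℚ) - x < 1 := fun x => by
    have := Int.ceil_lt_add_one x; linarith
  have hceil_lb : ∀ x : ℚ, -1 < x → 0 ≤ ⌈x⌉ := fun x hx => by
    have h : (-1 : ℤ) < ⌈x⌉ := Int.lt_ceil.mpr (by push_cast; linarith)
    omega
  have hceil_ub : ∀ x : ℚ, x ≤ (a : ℚ) → ⌈x⌉ ≤ (a : ℤ) := fun x hx =>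
    Int.ceil_le.mpr (by push_cast; linarith)
  intro i
  induction i with
  | zero =>
    have hq0 : s 0 0 = q := by simp [h0]
    have h01 : s 0 1 = 0 := by simp [h0]
    have h02 : s 0 2 = 0 := by simp [h0]
    refine ⟨?_, ?_, ?_⟩
    · intro j hj
      interval_cases j
      refine ⟨⌈s 0 0⌉, ?_, hceil_lb _ (by rw [hq0]; exact hq1), ?_⟩
      · rw [heval 0 0, if_neg (by omega), if_neg (by omega), if_pos rfl]
      · exact hceil_ub _ (by rw [hq0]; linarith)
    · rw [heval 0 1, if_neg (by omega), if_pos rfl, h01]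
      have h1 := hf1 (s 0 0)
      have h2 := hf2 (s 0 0)
      constructor
      · nlinarith
      · nlinarith
    · rw [heval 0 2, if_pos rfl, h02]
      have h1 := hf1 (s 0 0)
      have h2 := hf2 (s 0 0)
      constructor <;> linarith
  | succ i ih =>
    obtain ⟨ihd, ⟨ih1l, ih1r⟩, ih2l, ih2r⟩ := ih
    have h1 := hf1 (s (i + 1) (i + 1))
    have h2 := hf2 (s (i + 1) (i + 1))
    refine ⟨?_, ?_, ?_⟩
    · intro j hj
      rcases Nat.lt_or_ge j (i + 1) with h | h
      · obtain ⟨d, hd, hd0, hda⟩ := ihd j (by omega)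
        refine ⟨d, ?_, hd0, hda⟩
        rw [heval (i + 1) j, if_neg (by omega), if_neg (by omega), if_neg (by omega)]
        exact hd
      · have hj' : j = i + 1 := by omega
        subst hj'
        refine ⟨⌈s (i + 1) (i + 1)⌉, ?_, hceil_lb _ ih1l, hceil_ub _ (le_of_lt ih1r)⟩
        rw [heval (i + 1) (i + 1), if_neg (by omega), if_neg (by omega), if_pos rfl]
    · rw [heval (i + 1) (i + 2), if_neg (by omega), if_pos rfl]
      constructor
      · nlinarith
      · nlinarith
    · rw [heval (i + 1) (i + 1 + 2), if_pos rfl, hz (i + 1) (i + 1 + 2) (by omega)]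
      constructor <;> linarith
end

section
/- Let a ∈ Z_{>0}, β the positive root of x² - ax - 1, α = -β^{-1}, and q ∈ Q ∩ (-1,1). The digit sequence (s_i)_{i≥0} produced by the ceiling-based algorithm (repeatedly applying ψ(x₃,x₂,x₁) = (x₃-(⌈x₁⌉-x₁), x₂+a(⌈x₁⌉-x₁), ⌈x₁⌉)) is eventually periodic, takes values in {0,…,a}, and satisfies Σ_{i≥0} s_i α^i = q. -/
/-!
After `i` steps only the coefficients at positions `i` and `i + 1` are still pending; everything
below is a finished digit and everything above is zero. On this pending pair `(x, y)` the
algorithm acts by `(x, y) ↦ (y + a (⌈x⌉ - x), -(⌈x⌉ - x))`, emitting the digit `⌈x⌉`. This map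
keeps the pair in the box `(-1, a] × (-1, 0]` and keeps denominators dividing that of `q`, so the
orbit of `(q, 0)` lives in a finite set and is eventually periodic, and so are the digits. Because
`α² = aα + 1`, each step preserves `∑ sᵢ αⁱ`; the pending part is bounded times `αⁱ → 0`.
-/

open Set Filter Topology Function

theorem Function.exists_iterate_add_eq_of_mapsTo_finite {α : Type*} {f : α → α} {S : Set α}
    (hS : S.Finite) (hf : MapsTo f S S) {x : α} (hx : x ∈ S) :
    ∃ N p : ℕ, 0 < p ∧ ∀ n, N ≤ n → f^[n + p] x = f^[n] x := by
  obtain ⟨m, n, hmn, heq⟩ :=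
    hS.exists_lt_map_eq_of_forall_mem (f := fun k => f^[k] x) fun k => hf.iterate k hx
  have hper : IsPeriodicPt f (n - m) (f^[m] x) := by
    rw [IsPeriodicPt, IsFixedPt, ← iterate_add_apply, Nat.sub_add_cancel hmn.le]
    exact heq.symm
  refine ⟨m, n - m, Nat.sub_pos_of_lt hmn, fun k hk => ?_⟩
  obtain ⟨j, rfl⟩ := Nat.exists_eq_add_of_le hk
  calc f^[m + j + (n - m)] x = f^[n - m] (f^[j] (f^[m] x)) := by
        rw [← iterate_add_apply, ← iterate_add_apply]; congr 1; omega
    _ = f^[j] (f^[m] x) := (hper.apply_iterate j).eq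
    _ = f^[m + j] x := by rw [← iterate_add_apply, add_comm]

theorem Set.finite_Icc_inter_zmultiples {K : Type*} [Field K] [LinearOrder K]
    [IsStrictOrderedRing K] [FloorRing K] {c : K} (hc : 0 < c) (l u : K) :
    (Icc l u ∩ AddSubgroup.zmultiples c).Finite := by
  refine ((finite_Icc ⌈l / c⌉ ⌊u / c⌋).image (· • c)).subset ?_
  rintro _ ⟨⟨hl, hu⟩, k, rfl⟩
  simp only [zsmul_eq_mul] at hl hu
  exact ⟨k, ⟨Int.ceil_le.2 ((div_le_iff₀ hc).2 hl), Int.le_floor.2 ((le_div_iff₀ hc).2 hu)⟩, rfl⟩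

theorem Int.cast_mem_zmultiples_inv_natCast {D : ℕ} (hD : D ≠ 0) (n : ℤ) :
    (n : ℚ) ∈ AddSubgroup.zmultiples (D : ℚ)⁻¹ :=
  AddSubgroup.mem_zmultiples_iff.2 ⟨n * D, by rw [zsmul_eq_mul]; push_cast; field_simp⟩

theorem Rat.mem_zmultiples_inv_den (q : ℚ) : q ∈ AddSubgroup.zmultiples (q.den : ℚ)⁻¹ :=
  AddSubgroup.mem_zmultiples_iff.2 ⟨q.num, by rw [zsmul_eq_mul, ← div_eq_mul_inv, Rat.num_div_den]⟩

theorem neg_inv_sq_eq_of_sq_eq {a β : ℝ} (hβ : β ^ 2 = a * β + 1) (hβ₀ : β ≠ 0) :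
    (-β⁻¹) ^ 2 = a * -β⁻¹ + 1 := by
  field_simp
  linear_combination -hβ

theorem one_lt_of_sq_eq_mul_add_one {a β : ℝ} (ha : 1 ≤ a) (hβ₀ : 0 < β)
    (hβ : β ^ 2 = a * β + 1) : 1 < β := by
  nlinarith

namespace CeilExpansion

/-- `ψ` applied at positions `(i + 2, i + 1, i)`. -/
def psiAt (a : ℕ) (t : ℕ → ℚ) (i : ℕ) : ℕ → ℚ :=
  update (update (update t i (⌈t i⌉ : ℚ)) (i + 1) (t (i + 1) + a * ((⌈t i⌉ : ℚ) - t i)))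
    (i + 2) (t (i + 2) - ((⌈t i⌉ : ℚ) - t i))

def step (a : ℕ) (p : ℚ × ℚ) : ℚ × ℚ :=
  (p.2 + a * (⌈p.1⌉ - p.1), -(⌈p.1⌉ - p.1))

def box (a : ℕ) : Set (ℚ × ℚ) :=
  Ioc (-1 : ℚ) a ×ˢ Ioc (-1 : ℚ) 0

/-- Pairs of rationals with denominators dividing `D`. -/
def lattice (D : ℕ) : Set (ℚ × ℚ) :=
  (AddSubgroup.zmultiples (D : ℚ)⁻¹ : Set ℚ) ×ˢ (AddSubgroup.zmultiples (D : ℚ)⁻¹ : Set ℚ)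

theorem step_mapsTo_box (a : ℕ) : MapsTo (step a) (box a) (box a) := by
  rintro ⟨x, y⟩ ⟨-, hy₁, hy₂⟩
  have h₀ : 0 ≤ (⌈x⌉ - x : ℚ) := sub_nonneg.2 (Int.le_ceil x)
  have h₁ : (⌈x⌉ - x : ℚ) < 1 := by linarith [Int.ceil_lt_add_one x]
  have ha : (0 : ℚ) ≤ a := a.cast_nonneg
  refine ⟨⟨?_, ?_⟩, ?_, ?_⟩ <;> dsimp only [step] <;> nlinarith

theorem step_mapsTo_lattice (a : ℕ) {D : ℕ} (hD : D ≠ 0) :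
    MapsTo (step a) (lattice D) (lattice D) := by
  rintro ⟨x, y⟩ ⟨hx, hy⟩
  have hfrac : (⌈x⌉ - x : ℚ) ∈ AddSubgroup.zmultiples (D : ℚ)⁻¹ :=
    sub_mem (Int.cast_mem_zmultiples_inv_natCast hD _) hx
  refine ⟨add_mem hy ?_, neg_mem hfrac⟩
  rw [← nsmul_eq_mul]
  exact nsmul_mem hfrac a

theorem finite_box_inter_lattice (a : ℕ) {D : ℕ} (hD : D ≠ 0) :
    (box a ∩ lattice D).Finite := by
  have hc : (0 : ℚ) < (D : ℚ)⁻¹ := by positivity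
  refine ((finite_Icc_inter_zmultiples hc (-1) a).prod
    (finite_Icc_inter_zmultiples hc (-1) 0)).subset ?_
  rintro ⟨x, y⟩ ⟨⟨hx, hy⟩, hx', hy'⟩
  exact ⟨⟨Ioc_subset_Icc_self hx, hx'⟩, Ioc_subset_Icc_self hy, hy'⟩

theorem ceil_mem_Icc_of_mem_box {a : ℕ} {p : ℚ × ℚ} (hp : p ∈ box a) :
    ⌈p.1⌉ ∈ Icc 0 (a : ℤ) :=
  ⟨Int.ceil_nonneg_of_neg_one_lt hp.1.1, Int.ceil_le.2 (by exact_mod_cast hp.1.2)⟩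

section Run

variable {a : ℕ} {t : ℕ → ℚ} {i j : ℕ}

@[simp] theorem psiAt_self : psiAt a t i i = ⌈t i⌉ := by
  simp [psiAt]

@[simp] theorem psiAt_succ : psiAt a t i (i + 1) = t (i + 1) + a * (⌈t i⌉ - t i) := by
  simp [psiAt]

@[simp] theorem psiAt_add_two : psiAt a t i (i + 2) = t (i + 2) - (⌈t i⌉ - t i) := by
  simp [psiAt]

theorem psiAt_of_add_two_lt (h : i + 2 < j) : psiAt a t i j = t j := by
  simp only [psiAt]
  rw [update_of_ne (by omega), update_of_ne (by omega), update_of_ne (by omega)]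

def pending (s : ℕ → ℕ → ℚ) (i : ℕ) : ℚ × ℚ :=
  (s i i, s i (i + 1))

variable {q : ℚ} {s : ℕ → ℕ → ℚ}

theorem run_eq_zero (h0 : s 0 = fun j => if j = 0 then q else 0)
    (hstep : ∀ i, s (i + 1) = psiAt a (s i) i) : ∀ i j, i + 2 ≤ j → s i j = 0 := by
  intro i
  induction i with
  | zero => intro j hj; simp [h0, show j ≠ 0 by omega]
  | succ i ih => intro j hj; rw [hstep, psiAt_of_add_two_lt (by omega), ih j (by omega)]

theorem run_succ_self (hstep : ∀ i, s (i + 1) = psiAt a (s i) i) (i : ℕ) :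
    s (i + 1) i = ⌈s i i⌉ := by
  rw [hstep, psiAt_self]

theorem pending_succ (h0 : s 0 = fun j => if j = 0 then q else 0)
    (hstep : ∀ i, s (i + 1) = psiAt a (s i) i) (i : ℕ) :
    pending s (i + 1) = step a (pending s i) := by
  simp only [pending, step, hstep, psiAt_succ, psiAt_add_two,
    run_eq_zero h0 hstep i (i + 2) le_rfl, zero_sub]

theorem pending_eq_iterate (h0 : s 0 = fun j => if j = 0 then q else 0)
    (hstep : ∀ i, s (i + 1) = psiAt a (s i) i) (i : ℕ) :
    pending s i = (step a)^[i] (q, 0) := by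
  induction i with
  | zero => simp [pending, h0]
  | succ i ih => rw [pending_succ h0 hstep, ih, iterate_succ_apply']

end Run

/-- The `α`-value of a pending pair, measured relative to `αⁱ`. -/
def value (α : ℝ) (p : ℚ × ℚ) : ℝ :=
  p.1 + p.2 * α

section Value

variable {a : ℕ} {α : ℝ}

theorem ceil_add_value_step (hα : α ^ 2 = a * α + 1) (p : ℚ × ℚ) :
    (⌈p.1⌉ : ℝ) + value α (step a p) * α = value α p := by
  simp only [value, step]
  push_cast
  linear_combination (p.1 - ⌈p.1⌉ : ℝ) * hα

theorem sum_range_add_value_iterate (hα : α ^ 2 = a * α + 1) (x : ℚ × ℚ) (n : ℕ) :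
    ∑ k ∈ Finset.range n, (⌈((step a)^[k] x).1⌉ : ℝ) * α ^ k + value α ((step a)^[n] x) * α ^ n =
      value α x := by
  induction n with
  | zero => simp
  | succ n ih =>
    rw [Finset.sum_range_succ, iterate_succ_apply', ← ih,
      ← ceil_add_value_step hα ((step a)^[n] x)]
    ring

theorem abs_value_le (hα : |α| ≤ 1) {p : ℚ × ℚ} (hp : p ∈ box a) :
    |value α p| ≤ a + 2 := by
  obtain ⟨⟨hx₁, hx₂⟩, hy₁, hy₂⟩ := hp
  have hx : |(p.1 : ℝ)| ≤ a + 1 := abs_le.2 ⟨by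
    have : (-1 : ℝ) < p.1 := by exact_mod_cast hx₁
    linarith [a.cast_nonneg (α := ℝ)], by
    have : (p.1 : ℝ) ≤ a := by exact_mod_cast hx₂
    linarith⟩
  have hy : |(p.2 : ℝ)| ≤ 1 := abs_le.2 ⟨by exact_mod_cast hy₁.le, by
    have : (p.2 : ℝ) ≤ 0 := by exact_mod_cast hy₂
    linarith⟩
  calc |value α p| ≤ |(p.1 : ℝ)| + |(p.2 : ℝ)| * |α| := by
        rw [value, ← abs_mul]; exact abs_add_le _ _
    _ ≤ a + 1 + 1 * 1 := by gcongr
    _ = a + 2 := by ring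

theorem hasSum_ceil_iterate (hα : α ^ 2 = a * α + 1) (hα₁ : |α| < 1) {x : ℚ × ℚ}
    (hx : x ∈ box a) :
    HasSum (fun n => (⌈((step a)^[n] x).1⌉ : ℝ) * α ^ n) (value α x) := by
  have hmem : ∀ n, (step a)^[n] x ∈ box a := fun n => (step_mapsTo_box a).iterate n hx
  have hsummable : Summable fun n => (⌈((step a)^[n] x).1⌉ : ℝ) * α ^ n := by
    refine .of_norm_bounded ((summable_geometric_of_abs_lt_one hα₁).norm.mul_left (a : ℝ))
      fun n => ?_
    obtain ⟨h₀, h₁⟩ := ceil_mem_Icc_of_mem_box (hmem n)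
    rw [norm_mul, norm_pow, Real.norm_eq_abs, abs_of_nonneg (by exact_mod_cast h₀)]
    exact mul_le_mul_of_nonneg_right (by exact_mod_cast h₁) (by positivity)
  have htail : Tendsto (fun n => value α ((step a)^[n] x) * α ^ n) atTop (𝓝 0) :=
    bdd_le_mul_tendsto_zero' _ (.of_forall fun n => abs_value_le hα₁.le (hmem n))
      (tendsto_pow_atTop_nhds_zero_of_abs_lt_one hα₁)
  refine hsummable.hasSum_iff_tendsto_nat.2 ?_
  simpa using (tendsto_const_nhds (x := value α x)).sub htail |>.congr fun n => by
    rw [← sum_range_add_value_iterate hα x n, add_sub_cancel_right]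

end Value

end CeilExpansion

open CeilExpansion

/-- Let a ∈ ℤ_{>0}, β the positive root of x² - ax - 1, α = -β⁻¹,
and q ∈ ℚ ∩ (-1,1).  The digit sequence (s_i)_{i≥0}, s_i = s⁽ⁱ⁺¹⁾ᵢ, produced by
the ceiling-based algorithm (repeated application of
ψ(x₃,x₂,x₁) = (x₃-(⌈x₁⌉-x₁), x₂+a(⌈x₁⌉-x₁), ⌈x₁⌉)) takes integer values in
{0,…,a}, is eventually periodic, and satisfies Σ_{i≥0} s_i α^i = q. -/
theorem algorithm_output_eventually_periodic (a : ℕ) (ha : 0 < a) (β α : ℝ)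
    (hβroot : β ^ 2 = a * β + 1) (hβpos : 0 < β) (hα : α = -β⁻¹)
    (q : ℚ) (hq1 : -1 < q) (hq2 : q < 1)
    (s : ℕ → ℕ → ℚ)
    (h0 : s 0 = fun j => if j = 0 then q else 0)
    (hstep : ∀ i, s (i + 1) =
      Function.update (Function.update (Function.update (s i)
        i (⌈s i i⌉ : ℚ))
        (i + 1) (s i (i + 1) + a * ((⌈s i i⌉ : ℚ) - s i i)))
        (i + 2) (s i (i + 2) - ((⌈s i i⌉ : ℚ) - s i i))) :
    (∀ i : ℕ, ∃ d : ℤ, (d : ℚ) = s (i + 1) i ∧ 0 ≤ d ∧ d ≤ a) ∧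
    (∃ N p : ℕ, 0 < p ∧ ∀ i, N ≤ i → s (i + p + 1) (i + p) = s (i + 1) i) ∧
    HasSum (fun i : ℕ => ((s (i + 1) i : ℚ) : ℝ) * α ^ i) (q : ℝ) := by
  have hα₂ : α ^ 2 = a * α + 1 := hα ▸ neg_inv_sq_eq_of_sq_eq hβroot hβpos.ne'
  have hα₁ : |α| < 1 := by
    rw [hα, abs_neg, abs_inv, abs_of_pos hβpos]
    exact inv_lt_one_of_one_lt₀ (one_lt_of_sq_eq_mul_add_one (by exact_mod_cast ha) hβpos hβroot)
  have hdigit : ∀ i, s (i + 1) i = ⌈((step a)^[i] (q, 0)).1⌉ := fun i => by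
    rw [run_succ_self hstep, ← pending_eq_iterate h0 hstep]
    rfl
  have hbox : (q, 0) ∈ box a :=
    ⟨⟨hq1, hq2.le.trans (by exact_mod_cast ha)⟩, neg_one_lt_zero, le_rfl⟩
  have hlattice : (q, 0) ∈ lattice q.den := ⟨q.mem_zmultiples_inv_den, zero_mem _⟩
  refine ⟨fun i => ?_, ?_, ?_⟩
  · obtain ⟨h₀, h₁⟩ := ceil_mem_Icc_of_mem_box ((step_mapsTo_box a).iterate i hbox)
    exact ⟨_, (hdigit i).symm, h₀, h₁⟩
  · obtain ⟨N, p, hp, hper⟩ := exists_iterate_add_eq_of_mapsTo_finite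
      (finite_box_inter_lattice a q.den_ne_zero)
      ((step_mapsTo_box a).inter_inter (step_mapsTo_lattice a q.den_ne_zero)) ⟨hbox, hlattice⟩
    exact ⟨N, p, hp, fun i hi => by rw [hdigit, hdigit, hper i hi]⟩
  · simpa [value, hdigit] using hasSum_ceil_iterate hα₂ hα₁ hbox
end

section
/- Let a ∈ Z_{>0}, β the positive root of x² - ax - 1, α = -β^{-1}, and let q ∈ Q ∩ (-1,1) have denominator p. Then the output digit word of the ceiling-based α-adic algorithm applied to q contains at most K consecutive letters equal to a, where K is the smallest integer with a^{K-2} > p. In particular the output never ends in ^ω(a). -/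
/-- Let a ∈ ℤ_{>0}, β the positive root of x² - ax - 1, α = -β⁻¹,
and q ∈ ℚ ∩ (-1,1) with denominator p = q.den.  Let K be the smallest integer
with a^(K-2) > p.  Then the digit word output by the ceiling-based α-adic
algorithm on q contains at most K consecutive letters equal to a (every window
of K+1 consecutive digits contains a digit ≠ a); in particular the output does
not end in ^ω(a). -/
theorem bounded_runs_of_a (a : ℕ) (ha : 0 < a) (β α : ℝ)
    (hβroot : β ^ 2 = a * β + 1) (hβpos : 0 < β) (hα : α = -β⁻¹)
    (q : ℚ) (hq1 : -1 < q) (hq2 : q < 1)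
    (s : ℕ → ℕ → ℚ)
    (h0 : s 0 = fun j => if j = 0 then q else 0)
    (hstep : ∀ i, s (i + 1) =
      Function.update (Function.update (Function.update (s i)
        i (⌈s i i⌉ : ℚ))
        (i + 1) (s i (i + 1) + a * ((⌈s i i⌉ : ℚ) - s i i)))
        (i + 2) (s i (i + 2) - ((⌈s i i⌉ : ℚ) - s i i)))
    (K : ℕ) (hK : (q.den : ℤ) < (a : ℤ) ^ (K - 2))
    (hKmin : ∀ m, m < K → ¬ (q.den : ℤ) < (a : ℤ) ^ (m - 2)) :
    (∀ i : ℕ, ∃ j : ℕ, i ≤ j ∧ j ≤ i + K ∧ s (j + 1) j ≠ (a : ℚ)) ∧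
    ¬ ∃ N : ℕ, ∀ i, N ≤ i → s (i + 1) i = (a : ℚ) := by
  -- a ≥ 2 and K ≥ 3
  have hp1 : (1 : ℤ) ≤ (q.den : ℤ) := by exact_mod_cast q.pos
  have ha2 : 2 ≤ a := by
    rcases Nat.lt_or_ge a 2 with h | h
    · have h1 : a = 1 := by omega
      subst h1
      simp at hK
    · exact h
  have hK3 : 3 ≤ K := by
    by_contra h
    have h1 : K - 2 = 0 := by omega
    rw [h1, pow_zero] at hK
    omega
  -- zeros beyond i+2
  have hzero : ∀ i j, i + 2 ≤ j → s i j = 0 := by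
    intro i
    induction i with
    | zero =>
      intro j hj
      rw [h0]
      exact if_neg (by omega)
    | succ i ih =>
      intro j hj
      rw [hstep i, Function.update_of_ne (by omega : j ≠ i + 2),
          Function.update_of_ne (by omega : j ≠ i + 1),
          Function.update_of_ne (by omega : j ≠ i)]
      exact ih j (by omega)
  -- diagonal values
  have hdiag : ∀ i, s (i + 1) i = (⌈s i i⌉ : ℚ) := by
    intro i
    rw [hstep i, Function.update_of_ne (by omega : i ≠ i + 2),
        Function.update_of_ne (by omega : i ≠ i + 1), Function.update_self]
  have hx1 : ∀ i, s (i + 1) (i + 1) = s i (i + 1) + a * ((⌈s i i⌉ : ℚ) - s i i) := by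
    intro i
    rw [hstep i, Function.update_of_ne (by omega : i + 1 ≠ i + 2), Function.update_self]
  have hy1 : ∀ i, s (i + 1) (i + 2) = -((⌈s i i⌉ : ℚ) - s i i) := by
    intro i
    rw [hstep i, Function.update_self, hzero i (i + 2) le_rfl]
    ring
  -- the key recursion
  have hrec : ∀ i, s (i + 2) (i + 2) =
      -((⌈s i i⌉ : ℚ) - s i i) + a * ((⌈s (i + 1) (i + 1)⌉ : ℚ) - s (i + 1) (i + 1)) := by
    intro i
    have := hx1 (i + 1)
    rw [show i + 1 + 1 = i + 2 from rfl] at this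
    rw [this, hy1 i]
  -- denominators divide p
  have hden : ∀ i j, ∃ n : ℤ, s i j * (q.den : ℚ) = (n : ℚ) := by
    intro i
    induction i with
    | zero =>
      intro j
      rw [h0]
      by_cases h : j = 0
      · exact ⟨q.num, by simp [h, Rat.mul_den_eq_num]⟩
      · exact ⟨0, by simp [h]⟩
    | succ i ih =>
      intro j
      obtain ⟨n0, hn0⟩ := ih i
      rw [hstep i]
      rcases eq_or_ne j (i + 2) with h2 | h2
      · subst h2
        obtain ⟨n2, hn2⟩ := ih (i + 2)
        rw [Function.update_self]
        exact ⟨n2 - (⌈s i i⌉ * q.den - n0), by push_cast [sub_mul, ← hn2, ← hn0]; ring⟩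
      rcases eq_or_ne j (i + 1) with h1 | h1
      · subst h1
        obtain ⟨n1, hn1⟩ := ih (i + 1)
        rw [Function.update_of_ne h2, Function.update_self]
        exact ⟨n1 + a * (⌈s i i⌉ * q.den - n0), by push_cast [add_mul, mul_assoc, sub_mul, ← hn1, ← hn0]; ring⟩
      rcases eq_or_ne j i with h0' | h0'
      · subst h0'
        rw [Function.update_of_ne h2, Function.update_of_ne h1, Function.update_self]
        exact ⟨⌈s j j⌉ * (q.den : ℤ), by push_cast; ring⟩
      · rw [Function.update_of_ne h2, Function.update_of_ne h1, Function.update_of_ne h0']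
        exact ih j
  -- main claim
  have main : ∀ i : ℕ, ∃ j : ℕ, i ≤ j ∧ j ≤ i + K ∧ s (j + 1) j ≠ (a : ℚ) := by
    intro i
    by_contra hcon
    push_neg at hcon
    have hceil : ∀ j, i ≤ j → j ≤ i + K → ⌈s j j⌉ = (a : ℤ) := by
      intro j hj1 hj2
      have := hcon j hj1 hj2
      rw [hdiag j] at this
      exact_mod_cast this
    set g : ℕ → ℚ := fun j => s j j - ((a : ℚ) - 1) with hg
    have hg_pos : ∀ j, i ≤ j → j ≤ i + K → 0 < g j := by
      intro j hj1 hj2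
      have h1 : (⌈s j j⌉ : ℚ) < s j j + 1 := by
        exact_mod_cast Int.ceil_lt_add_one (s j j)
      rw [hceil j hj1 hj2] at h1
      simp only [hg]
      push_cast at h1 ⊢
      linarith
    have hg_le : ∀ j, i ≤ j → j ≤ i + K → g j ≤ 1 := by
      intro j hj1 hj2
      have h1 : s j j ≤ (⌈s j j⌉ : ℚ) := Int.le_ceil _
      rw [hceil j hj1 hj2] at h1
      simp only [hg]
      push_cast at h1 ⊢
      linarith
    have hg_rec : ∀ j, i ≤ j → j + 2 ≤ i + K → g (j + 2) = g j - a * g (j + 1) := by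
      intro j hj1 hj2
      have h1 := hrec j
      rw [hceil j hj1 (by omega), hceil (j + 1) (by omega) (by omega)] at h1
      push_cast at h1
      simp only [hg]
      rw [h1]
      ring
    have hg_step : ∀ j, i ≤ j → j + 2 ≤ i + K → (a : ℚ) * g (j + 1) < g j := by
      intro j hj1 hj2
      have := hg_pos (j + 2) (by omega) hj2
      rw [hg_rec j hj1 hj2] at this
      linarith
    have hchain : ∀ k, k ≤ K - 1 → g (i + k) * (a : ℚ) ^ k ≤ g i := by
      intro k hk
      induction k with
      | zero => simp
      | succ k ih =>
        have e : i + (k + 1) = i + k + 1 := rfl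
        rw [e]
        have h1 : (a : ℚ) * g (i + k + 1) < g (i + k) :=
          hg_step (i + k) (by omega) (by omega)
        have h2 : g (i + k) * (a : ℚ) ^ k ≤ g i := ih (by omega)
        have hpow : (0 : ℚ) ≤ (a : ℚ) ^ k := by positivity
        have h3 : g (i + k + 1) * (a : ℚ) ^ (k + 1) = ((a : ℚ) * g (i + k + 1)) * (a : ℚ) ^ k := by
          ring
        rw [h3]
        exact le_trans (mul_le_mul_of_nonneg_right h1.le hpow) h2
    -- g (i + (K-1)) ≥ 1/p
    obtain ⟨n, hn⟩ := hden (i + (K - 1)) (i + (K - 1))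
    have hgpos' : 0 < g (i + (K - 1)) := hg_pos _ (by omega) (by omega)
    have hpden : (0 : ℚ) < (q.den : ℚ) := by exact_mod_cast q.pos
    have hm : g (i + (K - 1)) * (q.den : ℚ) = ((n - (a - 1) * q.den : ℤ) : ℚ) := by
      simp only [hg]
      push_cast
      rw [sub_mul, hn]
    have hmpos : (0 : ℤ) < n - (a - 1) * q.den := by
      have hq' : (0 : ℚ) < ((n - (a - 1) * q.den : ℤ) : ℚ) := by
        rw [← hm]
        exact mul_pos hgpos' hpden
      exact_mod_cast hq'
    have hge : (1 : ℚ) ≤ g (i + (K - 1)) * (q.den : ℚ) := by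
      rw [hm]
      exact_mod_cast hmpos
    -- combine
    have hfin : (a : ℚ) ^ (K - 1) ≤ (q.den : ℚ) := by
      have h1 : g (i + (K - 1)) * (a : ℚ) ^ (K - 1) ≤ g i := hchain (K - 1) le_rfl
      have h2 : g i ≤ 1 := hg_le i le_rfl (by omega)
      have h3 : g (i + (K - 1)) * (a : ℚ) ^ (K - 1) ≤ 1 := le_trans h1 h2
      have h4 : (1 : ℚ) / (q.den : ℚ) ≤ g (i + (K - 1)) := by
        rw [div_le_iff₀ hpden]
        linarith [hge]
      have hpow : (0 : ℚ) < (a : ℚ) ^ (K - 1) := by positivity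
      have h5 : (1 / (q.den : ℚ)) * (a : ℚ) ^ (K - 1) ≤ 1 := by
        calc (1 / (q.den : ℚ)) * (a : ℚ) ^ (K - 1)
            ≤ g (i + (K - 1)) * (a : ℚ) ^ (K - 1) := mul_le_mul_of_nonneg_right h4 hpow.le
          _ ≤ 1 := h3
      rw [div_mul_eq_mul_div, one_mul, div_le_one hpden] at h5
      exact h5
    have hfinZ : (a : ℤ) ^ (K - 1) ≤ (q.den : ℤ) := by exact_mod_cast hfin
    have hmono : (a : ℤ) ^ (K - 2) ≤ (a : ℤ) ^ (K - 1) :=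
      pow_le_pow_right₀ (by exact_mod_cast ha) (by omega)
    linarith
  refine ⟨main, ?_⟩
  rintro ⟨N, hN⟩
  obtain ⟨j, hj1, hj2, hj3⟩ := main N
  exact hj3 (hN j hj1)
end

section
/- Let β be a quadratic Pisot unit, root of x² - ax - 1 with a ∈ Z_{>0}, and α = -β^{-1}. Every rational number q ∈ (-1, 1) has an eventually periodic weakly admissible α-adic expansion with no fractional part: there exist digits (x_i)_{i≥0} in {0,…,a}, eventually periodic to the left and weakly admissible, such that q = Σ_{i≥0} x_i α^i. -/
/-! The digits are produced by the α-adic shift `y ↦ -β (y - d y)` with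
`d y = max 0 ⌈y - β⁻¹⌉`, which keeps the orbit of `q` inside `[-1, β]`. The identity
`y = d y + α · shift y` telescopes to `q = ∑ dᵢ αⁱ`, and a nonzero digit pushes the next point
below `β - 1`, where the digit cannot be `a`.

For rational `q` the orbit stays in `(ℤ + ℤβ) / den q`. Its Galois conjugate (`β ↦ -β⁻¹`) follows
the contraction `w ↦ β⁻¹ (w - d)`, so it is bounded too; since `x ↦ (x, x')` embeds `ℤ + ℤβ` as a
lattice in `ℝ²`, the orbit is finite and therefore eventually periodic. -/

open Set Function

lemma abs_le_of_abs_succ_le {w : ℕ → ℝ} {r D : ℝ} (hr₀ : 0 ≤ r) (hr₁ : r < 1) (hD : 0 ≤ D)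
    (h : ∀ i, |w (i + 1)| ≤ r * |w i| + D) (i : ℕ) : |w i| ≤ |w 0| + D / (1 - r) := by
  have hK : r * (D / (1 - r)) + D = D / (1 - r) := by
    field_simp [(sub_pos.mpr hr₁).ne']
    ring
  induction i with
  | zero => linarith [div_nonneg hD (sub_pos.mpr hr₁).le]
  | succ i ih =>
    calc |w (i + 1)| ≤ r * (|w 0| + D / (1 - r)) + D := (h i).trans (by gcongr)
      _ ≤ |w 0| + D / (1 - r) := by nlinarith [abs_nonneg (w 0)]

lemma exists_iterate_add_eq_of_finite {α : Type*} {f : α → α} {s : Set α} (hs : s.Finite) {x : α}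
    (hx : ∀ n, f^[n] x ∈ s) : ∃ N p, 0 < p ∧ ∀ i, N ≤ i → f^[i + p] x = f^[i] x := by
  obtain ⟨m, k, hmk, he⟩ := hs.exists_lt_map_eq_of_forall_mem (f := fun n => f^[n] x) hx
  refine ⟨m, k - m, by omega, fun i hi => ?_⟩
  obtain ⟨j, rfl⟩ := Nat.exists_eq_add_of_le hi
  calc f^[m + j + (k - m)] x = f^[j] (f^[k] x) := by rw [← iterate_add_apply]; congr 1; omega
    _ = f^[m + j] x := by rw [← he, ← iterate_add_apply, add_comm]

lemma hasSum_mul_pow_of_eq_add_mul {𝕜 : Type*} [NormedField 𝕜] [CompleteSpace 𝕜] {α : 𝕜}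
    (hα : ‖α‖ < 1) {y d : ℕ → 𝕜} {C : ℝ} (hy : ∀ i, ‖y i‖ ≤ C)
    (h : ∀ i, y i = d i + α * y (i + 1)) : HasSum (fun i => d i * α ^ i) (y 0) := by
  set g : ℕ → 𝕜 := fun i => α ^ i * y i
  have hg : Summable g := by
    refine .of_norm_bounded ((summable_geometric_of_lt_one (norm_nonneg _) hα).mul_right C)
      fun i => ?_
    rw [norm_mul, norm_pow]
    exact mul_le_mul_of_nonneg_left (hy i) (by positivity)
  have hdg : (fun i => d i * α ^ i) = fun i => g i - g (i + 1) := by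
    ext i
    simp only [g, h i]
    ring
  rw [hdg, (hg.sub ((summable_nat_add_iff 1).mpr hg)).hasSum_iff_tendsto_nat]
  simp_rw [Finset.sum_range_sub']
  simpa [g] using tendsto_const_nhds.sub hg.tendsto_atTop_zero

noncomputable def alphaDigit (β y : ℝ) : ℤ := max 0 ⌈y - β⁻¹⌉

noncomputable def alphaShift (β y : ℝ) : ℝ := -β * (y - alphaDigit β y)

section AlphaShift

variable {β y : ℝ}

lemma sub_inv_eq_of_sq_eq_mul_add_one {a : ℝ} (hβ : β ^ 2 = a * β + 1) : β - β⁻¹ = a := by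
  have hβ₀ : β ≠ 0 := by rintro rfl; norm_num at hβ
  field_simp
  linarith

lemma alphaDigit_nonneg : 0 ≤ alphaDigit β y := le_max_left _ _

lemma alphaDigit_le {a : ℕ} (hβa : β - β⁻¹ = a) (hy : y ≤ β) : alphaDigit β y ≤ a :=
  max_le (Nat.cast_nonneg a) (Int.ceil_le.mpr (by push_cast; linarith))

lemma alphaDigit_lt {a : ℕ} (ha : 0 < a) (hβa : β - β⁻¹ = a) (hy : y < β - 1) :
    alphaDigit β y < a := by
  have hceil : ⌈y - β⁻¹⌉ ≤ (a : ℤ) - 1 := Int.ceil_le.mpr (by push_cast; linarith)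
  exact max_lt (by exact_mod_cast ha) (by omega)

lemma sub_alphaDigit_le : y - alphaDigit β y ≤ β⁻¹ := by
  have := (Int.le_ceil (y - β⁻¹)).trans (Int.cast_le.mpr (le_max_right 0 ⌈y - β⁻¹⌉))
  unfold alphaDigit
  linarith

lemma lt_sub_alphaDigit (h : alphaDigit β y ≠ 0) : β⁻¹ - 1 < y - alphaDigit β y := by
  have hd : alphaDigit β y = ⌈y - β⁻¹⌉ := (max_choice 0 _).resolve_left h
  rw [hd]
  linarith [Int.ceil_lt_add_one (y - β⁻¹)]

lemma neg_one_le_sub_alphaDigit (hβ : 0 < β) (hy : -1 ≤ y) : -1 ≤ y - alphaDigit β y := by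
  by_cases h : alphaDigit β y = 0
  · simpa [h] using hy
  · linarith [lt_sub_alphaDigit h, inv_pos.mpr hβ]

lemma mapsTo_alphaShift (hβ : 0 < β) : MapsTo (alphaShift β) (Icc (-1) β) (Icc (-1) β) := by
  intro y hy
  have h₁ := neg_one_le_sub_alphaDigit hβ hy.1
  have h₂ : β * (y - alphaDigit β y) ≤ 1 := by
    simpa [hβ.ne'] using mul_le_mul_of_nonneg_left (sub_alphaDigit_le (β := β) (y := y)) hβ.le
  constructor <;> simp only [alphaShift] <;> nlinarith

lemma alphaShift_lt_of_alphaDigit_ne_zero (hβ : 0 < β) (h : alphaDigit β y ≠ 0) :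
    alphaShift β y < β - 1 := by
  have := mul_lt_mul_of_pos_left (lt_sub_alphaDigit h) hβ
  rw [mul_sub, mul_inv_cancel₀ hβ.ne'] at this
  simp only [alphaShift]
  linarith

lemma eq_alphaDigit_add_mul_alphaShift (hβ : β ≠ 0) (y : ℝ) :
    y = alphaDigit β y + -β⁻¹ * alphaShift β y := by
  simp only [alphaShift]
  field_simp
  ring

end AlphaShift

noncomputable def pairEmbed (γ : ℝ) (n : ℕ) (p : ℤ × ℤ) : ℝ := (p.1 + p.2 * γ) / n

/-- Multiplication by `-γ` after subtracting `d`, in the coordinates of `pairEmbed γ n`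
for any root `γ` of `X² - aX - 1`. -/
def pairStep (a n : ℕ) (d : ℤ) (p : ℤ × ℤ) : ℤ × ℤ := (-p.2, n * d - p.1 - a * p.2)

lemma pairEmbed_pairStep {a n : ℕ} {γ : ℝ} (hγ : γ ^ 2 = a * γ + 1) (hn : n ≠ 0) (d : ℤ)
    (p : ℤ × ℤ) : pairEmbed γ n (pairStep a n d p) = -γ * (pairEmbed γ n p - d) := by
  simp only [pairEmbed, pairStep]
  push_cast
  field_simp
  linear_combination (p.2 : ℝ) * hγ

lemma finite_setOf_abs_pairEmbed_le {β γ : ℝ} (hβγ : β ≠ γ) {n : ℕ} (hn : n ≠ 0) (R : ℝ) :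
    {p : ℤ × ℤ | |pairEmbed β n p| ≤ R ∧ |pairEmbed γ n p| ≤ R}.Finite := by
  set V := n * (2 * R) / |β - γ|
  refine (isCompact_closedBall (0 : ℤ × ℤ) (max (n * R + V * |β|) V)).finite_of_discrete.subset ?_
  rintro p ⟨hpβ, hpγ⟩
  have hn' : (n : ℝ) ≠ 0 := Nat.cast_ne_zero.mpr hn
  have hv : (p.2 : ℝ) * (β - γ) = n * (pairEmbed β n p - pairEmbed γ n p) := by
    simp only [pairEmbed]; field_simp; ring
  have hu : (p.1 : ℝ) = n * pairEmbed β n p - p.2 * β := by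
    simp only [pairEmbed]; field_simp; ring
  have hvV : |(p.2 : ℝ)| ≤ V := by
    rw [le_div_iff₀ (abs_pos.mpr (sub_ne_zero.mpr hβγ)), ← abs_mul, hv, abs_mul, Nat.abs_cast]
    gcongr
    exact (abs_sub _ _).trans (by linarith)
  have huU : |(p.1 : ℝ)| ≤ n * R + V * |β| := by
    rw [hu]
    refine (abs_sub _ _).trans ?_
    rw [abs_mul, abs_mul, Nat.abs_cast]
    gcongr
  rw [mem_closedBall_zero_iff, Prod.norm_def, Int.norm_eq_abs, Int.norm_eq_abs]
  exact max_le_max huU hvV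

noncomputable def pairMap (β : ℝ) (a n : ℕ) (p : ℤ × ℤ) : ℤ × ℤ :=
  pairStep a n (alphaDigit β (pairEmbed β n p)) p

section PairMap

variable {a n : ℕ} {β : ℝ} {p₀ : ℤ × ℤ}

lemma semiconj_pairEmbed_pairMap (hβ : β ^ 2 = a * β + 1) (hn : n ≠ 0) :
    Semiconj (pairEmbed β n) (pairMap β a n) (alphaShift β) :=
  fun p => pairEmbed_pairStep hβ hn _ p

lemma pairEmbed_pairMap_iterate_mem_Icc (hβ : β ^ 2 = a * β + 1) (hβ₀ : 0 < β) (hn : n ≠ 0)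
    (hp₀ : pairEmbed β n p₀ ∈ Icc (-1) β) (i : ℕ) :
    pairEmbed β n ((pairMap β a n)^[i] p₀) ∈ Icc (-1) β := by
  rw [((semiconj_pairEmbed_pairMap hβ hn).iterate_right i).eq]
  exact (mapsTo_alphaShift hβ₀).iterate i hp₀

/-- `-β⁻¹` is the Galois conjugate of `β`, and the conjugate of the α-adic shift is the
contraction `w ↦ β⁻¹ (w - d)`. -/
lemma exists_abs_pairEmbed_conj_pairMap_iterate_le (hβ : β ^ 2 = a * β + 1) (hβ₁ : 1 < β)
    (hn : n ≠ 0) (hp₀ : pairEmbed β n p₀ ∈ Icc (-1) β) :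
    ∃ C, ∀ i, |pairEmbed (-β⁻¹) n ((pairMap β a n)^[i] p₀)| ≤ C := by
  have hβ₀ : 0 < β := by linarith
  have hβa := sub_inv_eq_of_sq_eq_mul_add_one hβ
  have hconj : (-β⁻¹) ^ 2 = a * -β⁻¹ + 1 := by field_simp; linarith
  set w : ℕ → ℝ := fun i => pairEmbed (-β⁻¹) n ((pairMap β a n)^[i] p₀)
  have hw : ∀ i, |w (i + 1)| ≤ β⁻¹ * |w i| + β⁻¹ * a := fun i => by
    set d := alphaDigit β (pairEmbed β n ((pairMap β a n)^[i] p₀))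
    have hd : |(d : ℝ)| ≤ a := by
      rw [abs_of_nonneg (by exact_mod_cast alphaDigit_nonneg)]
      exact_mod_cast alphaDigit_le hβa (pairEmbed_pairMap_iterate_mem_Icc hβ hβ₀ hn hp₀ i).2
    have hstep : w (i + 1) = β⁻¹ * (w i - d) := by
      simp only [w]
      rw [iterate_succ_apply']
      exact (pairEmbed_pairStep hconj hn _ _).trans (by rw [neg_neg])
    rw [hstep, abs_mul, abs_of_pos (inv_pos.mpr hβ₀), ← mul_add]
    gcongr
    exact (abs_sub _ _).trans (by linarith)
  exact ⟨_, abs_le_of_abs_succ_le (inv_pos.mpr hβ₀).le (inv_lt_one_of_one_lt₀ hβ₁)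
    (by positivity) hw⟩

lemma exists_pairMap_iterate_add_eq (hβ : β ^ 2 = a * β + 1) (hβ₁ : 1 < β) (hn : n ≠ 0)
    (hp₀ : pairEmbed β n p₀ ∈ Icc (-1) β) :
    ∃ N p, 0 < p ∧ ∀ i, N ≤ i → (pairMap β a n)^[i + p] p₀ = (pairMap β a n)^[i] p₀ := by
  obtain ⟨C, hC⟩ := exists_abs_pairEmbed_conj_pairMap_iterate_le hβ hβ₁ hn hp₀
  have hβconj : β ≠ -β⁻¹ := by linarith [inv_pos.mpr (zero_lt_one.trans hβ₁)]
  refine exists_iterate_add_eq_of_finite (finite_setOf_abs_pairEmbed_le hβconj hn (max β C))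
    fun i => ⟨abs_le.mpr ?_, (hC i).trans (le_max_right _ _)⟩
  have hi := pairEmbed_pairMap_iterate_mem_Icc hβ (zero_lt_one.trans hβ₁) hn hp₀ i
  exact ⟨by linarith [hi.1, le_max_left β C], hi.2.trans (le_max_left _ _)⟩

end PairMap

lemma exists_alphaShift_iterate_add_eq {a : ℕ} {β : ℝ} (hβ : β ^ 2 = a * β + 1) (hβ₁ : 1 < β)
    (q : ℚ) (hq : (q : ℝ) ∈ Icc (-1) β) :
    ∃ N p, 0 < p ∧ ∀ i, N ≤ i → (alphaShift β)^[i + p] q = (alphaShift β)^[i] q := by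
  have hq₀ : pairEmbed β q.den (q.num, 0) = q := by simp [pairEmbed, Rat.cast_def]
  have horbit (i : ℕ) :
      (alphaShift β)^[i] q = pairEmbed β q.den ((pairMap β a q.den)^[i] (q.num, 0)) := by
    rw [((semiconj_pairEmbed_pairMap hβ q.den_nz).iterate_right i).eq, hq₀]
  obtain ⟨N, p, hp, hper⟩ := exists_pairMap_iterate_add_eq hβ hβ₁ q.den_nz (hq₀ ▸ hq)
  exact ⟨N, p, hp, fun i hi => by rw [horbit, horbit, hper i hi]⟩

/-- Let β be a quadratic Pisot unit (positive root of x² - ax - 1,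
a ∈ ℤ_{>0}) and α = -β⁻¹.  Every rational q ∈ (-1,1) has an eventually periodic
weakly admissible α-adic expansion with no fractional part: there are digits
(x_i)_{i≥0} in {0,…,a}, weakly admissible (a digit a is always followed on the
right by 0), eventually periodic to the left, with q = Σ_{i≥0} x_i α^i. -/
theorem rational_has_eventually_periodic_expansion (a : ℕ) (ha : 0 < a) (β α : ℝ)
    (hβroot : β ^ 2 = a * β + 1) (hβpos : 0 < β) (hα : α = -β⁻¹)
    (q : ℚ) (hq1 : -1 < q) (hq2 : q < 1) :
    ∃ x : ℕ → ℤ,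
      (∀ i, 0 ≤ x i ∧ x i ≤ a) ∧
      (∀ i, x (i + 1) = a → x i = 0) ∧
      (∃ N p : ℕ, 0 < p ∧ ∀ i, N ≤ i → x (i + p) = x i) ∧
      HasSum (fun i : ℕ => (x i : ℝ) * α ^ i) (q : ℝ) := by
  have hβ₁ : 1 < β := by
    have : (1 : ℝ) ≤ a := by exact_mod_cast ha
    nlinarith
  have hβa := sub_inv_eq_of_sq_eq_mul_add_one hβroot
  have hq : (q : ℝ) ∈ Icc (-1) β := by
    have : (q : ℝ) < 1 := by exact_mod_cast hq2
    exact ⟨by exact_mod_cast hq1.le, by linarith⟩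
  set y : ℕ → ℝ := fun i => (alphaShift β)^[i] q
  have hy : ∀ i, y i ∈ Icc (-1) β := fun i => (mapsTo_alphaShift hβpos).iterate i hq
  refine ⟨fun i => alphaDigit β (y i), fun i => ⟨alphaDigit_nonneg, alphaDigit_le hβa (hy i).2⟩,
    fun i hi => ?_, ?_, ?_⟩
  · by_contra h
    refine (alphaDigit_lt ha hβa (alphaShift_lt_of_alphaDigit_ne_zero hβpos h)).ne ?_
    simpa only [y, iterate_succ_apply'] using hi
  · obtain ⟨N, p, hp, hper⟩ := exists_alphaShift_iterate_add_eq hβroot hβ₁ q hq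
    exact ⟨N, p, hp, fun i hi => congrArg (alphaDigit β) (hper i hi)⟩
  · have hαlt : ‖α‖ < 1 := by
      rw [hα, norm_neg, norm_inv, Real.norm_of_nonneg hβpos.le]
      exact inv_lt_one_of_one_lt₀ hβ₁
    refine hasSum_mul_pow_of_eq_add_mul (y := y) (d := fun i => (alphaDigit β (y i) : ℝ)) (C := β)
      hαlt (fun i => abs_le.mpr ⟨by linarith [(hy i).1], (hy i).2⟩) fun i => ?_
    simpa only [y, iterate_succ_apply', hα] using eq_alphaDigit_add_mul_alphaShift hβpos.ne' (y i)
end
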